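/- arXiv:1412.6138 — 10 statements merged into one kernel-verified Lean document; each statement's English description precedes it below -/
import Mathlib

section
/- Let p, q ≥ 1 be integers. Viewing the scattering polynomial φ^(p,q) as a smooth function of (x,y) ∈ ℝ² via ζ = x + iy, it satisfies the eigenvalue equation of the hybrid laplacian: for every ζ = x + iy ∈ ℂ, ((1 − x² − y²)/4)·(∂²φ^(p,q)/∂x² + ∂²φ^(p,q)/∂y²)(ζ) + p·q·φ^(p,q)(ζ) = 0. -/
open scoped BigOperators

noncomputable def scatPoly (p q : ℤ) (ζ : ℂ) : ℂ :=
  if 1 ≤ p ∧ 1 ≤ q then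
    ((-1 : ℂ) ^ ((q + min p q).toNat) / (q : ℂ)) * (1 - ζ * (starRingEnd ℂ) ζ) *
      ζ ^ ((max p q - p).toNat) * ((starRingEnd ℂ) ζ) ^ ((max p q - q).toNat) *
      ∑ j ∈ Finset.range (min p q).toNat,
        (-1 : ℂ) ^ j * ((j + (min p q).toNat + (p - q).natAbs).factorial : ℂ) /
            ((j.factorial : ℂ) * ((j + (p - q).natAbs).factorial : ℂ) *
              (((min p q).toNat - j - 1).factorial : ℂ)) *
          (ζ * (starRingEnd ℂ) ζ) ^ j
  else if 0 ≤ p ∧ q = 0 then ((starRingEnd ℂ) ζ) ^ p.toNat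
  else 0

/- ## Auxiliary definitions -/

noncomputable def coefC (n m j : ℕ) : ℂ :=
  (-1 : ℂ) ^ j * ((j + n + m).factorial : ℂ) /
    ((j.factorial : ℂ) * ((j + m).factorial : ℂ) * ((n - j - 1).factorial : ℂ))

noncomputable def mono (A B : ℕ) (x y : ℝ) : ℂ :=
  ((x : ℂ) + (y : ℂ) * Complex.I) ^ A * ((x : ℂ) - (y : ℂ) * Complex.I) ^ B

noncomputable def dxmono (A B : ℕ) (x y : ℝ) : ℂ :=
  (A : ℂ) * mono (A - 1) B x y + (B : ℂ) * mono A (B - 1) x y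

noncomputable def dymono (A B : ℕ) (x y : ℝ) : ℂ :=
  (A : ℂ) * Complex.I * mono (A - 1) B x y - (B : ℂ) * Complex.I * mono A (B - 1) x y

noncomputable def dxxmono (A B : ℕ) (x y : ℝ) : ℂ :=
  (A : ℂ) * dxmono (A - 1) B x y + (B : ℂ) * dxmono A (B - 1) x y

noncomputable def dyymono (A B : ℕ) (x y : ℝ) : ℂ :=
  (A : ℂ) * Complex.I * dymono (A - 1) B x y - (B : ℂ) * Complex.I * dymono A (B - 1) x y

noncomputable def psi (a b n m : ℕ) (x y : ℝ) : ℂ :=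
  ∑ j ∈ Finset.range n, coefC n m j *
    (mono (a + j) (b + j) x y - mono (a + j + 1) (b + j + 1) x y)

noncomputable def psiX (a b n m : ℕ) (x y : ℝ) : ℂ :=
  ∑ j ∈ Finset.range n, coefC n m j *
    (dxmono (a + j) (b + j) x y - dxmono (a + j + 1) (b + j + 1) x y)

noncomputable def psiY (a b n m : ℕ) (x y : ℝ) : ℂ :=
  ∑ j ∈ Finset.range n, coefC n m j *
    (dymono (a + j) (b + j) x y - dymono (a + j + 1) (b + j + 1) x y)

noncomputable def psiXX (a b n m : ℕ) (x y : ℝ) : ℂ :=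
  ∑ j ∈ Finset.range n, coefC n m j *
    (dxxmono (a + j) (b + j) x y - dxxmono (a + j + 1) (b + j + 1) x y)

noncomputable def psiYY (a b n m : ℕ) (x y : ℝ) : ℂ :=
  ∑ j ∈ Finset.range n, coefC n m j *
    (dyymono (a + j) (b + j) x y - dyymono (a + j + 1) (b + j + 1) x y)

/- ## Derivatives -/

lemma hasDerivAt_mono_x (A B : ℕ) (y x : ℝ) :
    HasDerivAt (fun t : ℝ => mono A B t y) (dxmono A B x y) x := by
  have hz : HasDerivAt (fun z : ℂ => z + (y : ℂ) * Complex.I) 1 (x : ℂ) :=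
    (hasDerivAt_id _).add_const _
  have hw : HasDerivAt (fun z : ℂ => z - (y : ℂ) * Complex.I) 1 (x : ℂ) :=
    (hasDerivAt_id _).sub_const _
  have h := ((hz.pow A).mul (hw.pow B)).comp_ofReal
  have he : dxmono A B x y =
      (A : ℂ) * ((x : ℂ) + (y : ℂ) * Complex.I) ^ (A - 1) * 1 *
          ((x : ℂ) - (y : ℂ) * Complex.I) ^ B +
        ((x : ℂ) + (y : ℂ) * Complex.I) ^ A *
          ((B : ℂ) * ((x : ℂ) - (y : ℂ) * Complex.I) ^ (B - 1) * 1) := by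
    simp only [dxmono, mono]; ring
  rw [he]
  exact h

lemma hasDerivAt_mono_y (A B : ℕ) (x t : ℝ) :
    HasDerivAt (fun s : ℝ => mono A B x s) (dymono A B x t) t := by
  have hz : HasDerivAt (fun z : ℂ => (x : ℂ) + z * Complex.I) Complex.I (t : ℂ) := by
    simpa using ((hasDerivAt_id (t : ℂ)).mul_const Complex.I).const_add (x : ℂ)
  have hw : HasDerivAt (fun z : ℂ => (x : ℂ) - z * Complex.I) (-Complex.I) (t : ℂ) := by
    simpa using ((hasDerivAt_id (t : ℂ)).mul_const Complex.I).const_sub (x : ℂ)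
  have h := ((hz.pow A).mul (hw.pow B)).comp_ofReal
  have he : dymono A B x t =
      (A : ℂ) * ((x : ℂ) + (t : ℂ) * Complex.I) ^ (A - 1) * Complex.I *
          ((x : ℂ) - (t : ℂ) * Complex.I) ^ B +
        ((x : ℂ) + (t : ℂ) * Complex.I) ^ A *
          ((B : ℂ) * ((x : ℂ) - (t : ℂ) * Complex.I) ^ (B - 1) * -Complex.I) := by
    simp only [dymono, mono]; ring
  rw [he]
  exact h

lemma hasDerivAt_dxmono_x (A B : ℕ) (y x : ℝ) :
    HasDerivAt (fun t : ℝ => dxmono A B t y) (dxxmono A B x y) x := by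
  simp only [dxmono, dxxmono]
  exact ((hasDerivAt_mono_x (A - 1) B y x).const_mul _).add
    ((hasDerivAt_mono_x A (B - 1) y x).const_mul _)

lemma hasDerivAt_dymono_y (A B : ℕ) (x t : ℝ) :
    HasDerivAt (fun s : ℝ => dymono A B x s) (dyymono A B x t) t := by
  simp only [dymono, dyymono]
  exact ((hasDerivAt_mono_y (A - 1) B x t).const_mul _).sub
    ((hasDerivAt_mono_y A (B - 1) x t).const_mul _)

lemma hasDerivAt_psi_x (a b n m : ℕ) (y x : ℝ) :
    HasDerivAt (fun t : ℝ => psi a b n m t y) (psiX a b n m x y) x := by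
  simp only [psi, psiX]
  exact HasDerivAt.fun_sum fun j _ =>
    ((hasDerivAt_mono_x (a + j) (b + j) y x).sub
      (hasDerivAt_mono_x (a + j + 1) (b + j + 1) y x)).const_mul _

lemma hasDerivAt_psiX_x (a b n m : ℕ) (y x : ℝ) :
    HasDerivAt (fun t : ℝ => psiX a b n m t y) (psiXX a b n m x y) x := by
  simp only [psiX, psiXX]
  exact HasDerivAt.fun_sum fun j _ =>
    ((hasDerivAt_dxmono_x (a + j) (b + j) y x).sub
      (hasDerivAt_dxmono_x (a + j + 1) (b + j + 1) y x)).const_mul _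

lemma hasDerivAt_psi_y (a b n m : ℕ) (x t : ℝ) :
    HasDerivAt (fun s : ℝ => psi a b n m x s) (psiY a b n m x t) t := by
  simp only [psi, psiY]
  exact HasDerivAt.fun_sum fun j _ =>
    ((hasDerivAt_mono_y (a + j) (b + j) x t).sub
      (hasDerivAt_mono_y (a + j + 1) (b + j + 1) x t)).const_mul _

lemma hasDerivAt_psiY_y (a b n m : ℕ) (x t : ℝ) :
    HasDerivAt (fun s : ℝ => psiY a b n m x s) (psiYY a b n m x t) t := by
  simp only [psiY, psiYY]
  exact HasDerivAt.fun_sum fun j _ =>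
    ((hasDerivAt_dymono_y (a + j) (b + j) x t).sub
      (hasDerivAt_dymono_y (a + j + 1) (b + j + 1) x t)).const_mul _

/- ## Algebra -/

lemma mono_succ (A B : ℕ) (x y : ℝ) :
    mono (A + 1) (B + 1) x y = mono A B x y * ((x : ℂ) ^ 2 + (y : ℂ) ^ 2) := by
  simp only [mono, pow_succ]
  linear_combination (-(y : ℂ) ^ 2 * ((x : ℂ) + (y : ℂ) * Complex.I) ^ A *
    ((x : ℂ) - (y : ℂ) * Complex.I) ^ B) * Complex.I_sq

lemma lap_mono (A B : ℕ) (x y : ℝ) :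
    dxxmono A B x y + dyymono A B x y = 4 * (A : ℂ) * (B : ℂ) * mono (A - 1) (B - 1) x y := by
  simp only [dxxmono, dyymono, dxmono, dymono]
  linear_combination ((A : ℂ) * ((A - 1 : ℕ) : ℂ) * mono (A - 1 - 1) B x y +
    (B : ℂ) * ((B - 1 : ℕ) : ℂ) * mono A (B - 1 - 1) x y -
    2 * (A : ℂ) * (B : ℂ) * mono (A - 1) (B - 1) x y) * Complex.I_sq

lemma coef_rec (N m i : ℕ) (hi : i < N) :
    coefC (N + 1) m (i + 1) * (((i : ℂ) + 1) * ((m : ℂ) + (i : ℂ) + 1)) =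
      coefC (N + 1) m i *
        ((((i : ℂ) + 1) * ((m : ℂ) + (i : ℂ) + 1)) - ((N : ℂ) + 1) * ((N : ℂ) + 1 + (m : ℂ))) := by
  obtain ⟨k, rfl⟩ : ∃ k, N = i + k + 1 := ⟨N - i - 1, by omega⟩
  simp only [coefC]
  rw [show i + k + 1 + 1 - (i + 1) - 1 = k by omega,
      show i + k + 1 + 1 - i - 1 = k + 1 by omega,
      show i + 1 + (i + k + 1 + 1) + m = (i + (i + k + 1 + 1) + m) + 1 by omega,
      show i + 1 + m = (i + m) + 1 by omega]
  rw [Nat.factorial_succ (i + (i + k + 1 + 1) + m), Nat.factorial_succ (i + m),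
      Nat.factorial_succ i, Nat.factorial_succ k, pow_succ]
  have f1 : ((i.factorial : ℂ)) ≠ 0 := Nat.cast_ne_zero.2 i.factorial_ne_zero
  have f2 : (((i + m).factorial : ℂ)) ≠ 0 := Nat.cast_ne_zero.2 (i + m).factorial_ne_zero
  have f3 : ((k.factorial : ℂ)) ≠ 0 := Nat.cast_ne_zero.2 k.factorial_ne_zero
  have f4 : ((i : ℂ) + 1) ≠ 0 := by norm_cast
  have f5 : ((i : ℂ) + (m : ℂ) + 1) ≠ 0 := by norm_cast
  have f6 : ((k : ℂ) + 1) ≠ 0 := by norm_cast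
  push_cast
  field_simp
  ring

lemma keySum (n m : ℕ) (hn : 1 ≤ n) (u : ℂ) :
    ∑ j ∈ Finset.range n, coefC n m j *
      ((j : ℂ) * ((m : ℂ) + (j : ℂ)) * u ^ (j - 1) +
        (((n : ℂ) * ((n : ℂ) + (m : ℂ))) - ((j : ℂ) + 1) * ((m : ℂ) + (j : ℂ) + 1)) * u ^ j) = 0 := by
  obtain ⟨N, rfl⟩ : ∃ N, n = N + 1 := ⟨n - 1, by omega⟩
  have split : ∑ j ∈ Finset.range (N + 1), coefC (N + 1) m j *
        ((j : ℂ) * ((m : ℂ) + (j : ℂ)) * u ^ (j - 1) +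
          ((((N + 1 : ℕ) : ℂ) * (((N + 1 : ℕ) : ℂ) + (m : ℂ))) - ((j : ℂ) + 1) * ((m : ℂ) + (j : ℂ) + 1)) * u ^ j)
      = (∑ j ∈ Finset.range (N + 1), coefC (N + 1) m j *
          ((j : ℂ) * ((m : ℂ) + (j : ℂ)) * u ^ (j - 1)))
        + ∑ j ∈ Finset.range (N + 1), coefC (N + 1) m j *
          ((((N + 1 : ℕ) : ℂ) * (((N + 1 : ℕ) : ℂ) + (m : ℂ)) - ((j : ℂ) + 1) * ((m : ℂ) + (j : ℂ) + 1)) * u ^ j) := by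
    rw [← Finset.sum_add_distrib]
    exact Finset.sum_congr rfl fun j _ => by ring
  rw [split]
  have hS1 : ∑ j ∈ Finset.range (N + 1), coefC (N + 1) m j *
        ((j : ℂ) * ((m : ℂ) + (j : ℂ)) * u ^ (j - 1))
      = ∑ i ∈ Finset.range N, coefC (N + 1) m (i + 1) *
          ((((i : ℂ) + 1) * ((m : ℂ) + (i : ℂ) + 1)) * u ^ i) := by
    rw [Finset.sum_range_succ']
    simp only [Nat.cast_zero, zero_mul, mul_zero, add_zero]
    apply Finset.sum_congr rfl
    intro i _
    rw [show i + 1 - 1 = i from rfl]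
    push_cast
    ring
  have hS2 : ∑ j ∈ Finset.range (N + 1), coefC (N + 1) m j *
        ((((N + 1 : ℕ) : ℂ) * (((N + 1 : ℕ) : ℂ) + (m : ℂ)) - ((j : ℂ) + 1) * ((m : ℂ) + (j : ℂ) + 1)) * u ^ j)
      = ∑ i ∈ Finset.range N, coefC (N + 1) m i *
          ((((N + 1 : ℕ) : ℂ) * (((N + 1 : ℕ) : ℂ) + (m : ℂ)) - ((i : ℂ) + 1) * ((m : ℂ) + (i : ℂ) + 1)) * u ^ i) := by
    rw [Finset.sum_range_succ]
    have h0 : (((N + 1 : ℕ) : ℂ) * (((N + 1 : ℕ) : ℂ) + (m : ℂ)) - ((N : ℂ) + 1) * ((m : ℂ) + (N : ℂ) + 1)) = 0 := by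
      push_cast
      ring
    rw [h0, zero_mul, mul_zero, add_zero]
  rw [hS1, hS2, ← Finset.sum_add_distrib]
  apply Finset.sum_eq_zero
  intro i hi
  have hrec := coef_rec N m i (Finset.mem_range.1 hi)
  push_cast
  linear_combination u ^ i * hrec

lemma final (a b n m : ℕ) (hn : 1 ≤ n) (hab : a + b = m) (hab0 : a * b = 0) (x y : ℝ) :
    ((1 - (x : ℂ) ^ 2 - (y : ℂ) ^ 2) / 4) * (psiXX a b n m x y + psiYY a b n m x y) +
      (n : ℂ) * ((n : ℂ) + (m : ℂ)) * psi a b n m x y = 0 := by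
  have hA : (a : ℂ) * (b : ℂ) = 0 := by exact_mod_cast congrArg (Nat.cast : ℕ → ℂ) hab0
  have hB : (a : ℂ) + (b : ℂ) = (m : ℂ) := by exact_mod_cast congrArg (Nat.cast : ℕ → ℂ) hab
  have hmono : ∀ k : ℕ, mono (a + k) (b + k) x y =
      mono a b x y * ((x : ℂ) ^ 2 + (y : ℂ) ^ 2) ^ k := by
    intro k
    induction k with
    | zero => simp
    | succ k ih =>
      rw [show a + (k + 1) = (a + k) + 1 from rfl, show b + (k + 1) = (b + k) + 1 from rfl,
        mono_succ, ih]
      ring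
  -- laplacian of the j-th monomial block, low part
  have hS1 : ∀ j : ℕ, dxxmono (a + j) (b + j) x y + dyymono (a + j) (b + j) x y =
      mono a b x y * (4 * (j : ℂ) * ((m : ℂ) + (j : ℂ)) * ((x : ℂ) ^ 2 + (y : ℂ) ^ 2) ^ (j - 1)) := by
    intro j
    rw [lap_mono]
    cases j with
    | zero =>
      simp only [Nat.add_zero, Nat.cast_zero]
      linear_combination 4 * mono (a - 1) (b - 1) x y * hA
    | succ k =>
      rw [show a + (k + 1) - 1 = a + k by omega, show b + (k + 1) - 1 = b + k by omega,
        show k + 1 - 1 = k from rfl, hmono k]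
      push_cast
      linear_combination (4 * mono a b x y * ((x : ℂ) ^ 2 + (y : ℂ) ^ 2) ^ k) * hA +
        (4 * mono a b x y * ((x : ℂ) ^ 2 + (y : ℂ) ^ 2) ^ k * ((k : ℂ) + 1)) * hB
  have hS2 : ∀ j : ℕ, dxxmono (a + j + 1) (b + j + 1) x y + dyymono (a + j + 1) (b + j + 1) x y =
      mono a b x y * (4 * ((j : ℂ) + 1) * ((m : ℂ) + (j : ℂ) + 1) * ((x : ℂ) ^ 2 + (y : ℂ) ^ 2) ^ j) := by
    intro j
    rw [lap_mono, show a + j + 1 - 1 = a + j from rfl, show b + j + 1 - 1 = b + j from rfl, hmono j]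
    push_cast
    linear_combination (4 * mono a b x y * ((x : ℂ) ^ 2 + (y : ℂ) ^ 2) ^ j) * hA +
      (4 * mono a b x y * ((x : ℂ) ^ 2 + (y : ℂ) ^ 2) ^ j * ((j : ℂ) + 1)) * hB
  have key := keySum n m hn ((x : ℂ) ^ 2 + (y : ℂ) ^ 2)
  calc ((1 - (x : ℂ) ^ 2 - (y : ℂ) ^ 2) / 4) * (psiXX a b n m x y + psiYY a b n m x y) +
      (n : ℂ) * ((n : ℂ) + (m : ℂ)) * psi a b n m x y
      = (mono a b x y * (1 - ((x : ℂ) ^ 2 + (y : ℂ) ^ 2))) *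
          ∑ j ∈ Finset.range n, coefC n m j *
            ((j : ℂ) * ((m : ℂ) + (j : ℂ)) * ((x : ℂ) ^ 2 + (y : ℂ) ^ 2) ^ (j - 1) +
              (((n : ℂ) * ((n : ℂ) + (m : ℂ))) - ((j : ℂ) + 1) * ((m : ℂ) + (j : ℂ) + 1)) *
                ((x : ℂ) ^ 2 + (y : ℂ) ^ 2) ^ j) := by
        simp only [psiXX, psiYY, psi, Finset.mul_sum, ← Finset.sum_add_distrib]
        apply Finset.sum_congr rfl
        intro j _
        have e1 := hS1 j
        have e2 := hS2 j
        have e3 := hmono j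
        have e4 := hmono (j + 1)
        rw [show a + (j + 1) = a + j + 1 from rfl, show b + (j + 1) = b + j + 1 from rfl] at e4
        linear_combination ((1 - (x : ℂ) ^ 2 - (y : ℂ) ^ 2) / 4) * coefC n m j * (e1 - e2) +
          (n : ℂ) * ((n : ℂ) + (m : ℂ)) * coefC n m j * (e3 - e4) +
          (mono a b x y * (1 - ((x : ℂ) ^ 2 + (y : ℂ) ^ 2))) * coefC n m j *
            (((n : ℂ) * ((n : ℂ) + (m : ℂ)) - ((j : ℂ) + 1) * ((m : ℂ) + (j : ℂ) + 1)) *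
              (((x : ℂ) ^ 2 + (y : ℂ) ^ 2) ^ j - ((x : ℂ) ^ 2 + (y : ℂ) ^ 2) ^ j)) +
          0
    _ = 0 := by rw [key, mul_zero]

lemma scatPoly_eq (p q : ℤ) (hp : 1 ≤ p) (hq : 1 ≤ q) (x y : ℝ) :
    scatPoly p q ((x : ℂ) + (y : ℂ) * Complex.I) =
      ((-1 : ℂ) ^ ((q + min p q).toNat) / (q : ℂ)) *
        psi ((max p q - p).toNat) ((max p q - q).toNat) ((min p q).toNat) ((p - q).natAbs) x y := by
  have hconj : (starRingEnd ℂ) ((x : ℂ) + (y : ℂ) * Complex.I) = (x : ℂ) - (y : ℂ) * Complex.I := by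
    rw [map_add, map_mul, Complex.conj_ofReal, Complex.conj_ofReal, Complex.conj_I]
    ring
  rw [scatPoly, if_pos ⟨hp, hq⟩, hconj, psi, Finset.mul_sum, Finset.mul_sum]
  apply Finset.sum_congr rfl
  intro j hj
  simp only [coefC, mono, pow_add, pow_succ, mul_pow]
  ring

/-- For integers `p, q ≥ 1`, the scattering polynomial `φ^(p,q)`, viewed as a smooth
function of `(x,y) ∈ ℝ²` via `ζ = x + iy`, is an eigenfunction of the hybrid laplacian
`((1-x²-y²)/4)Δ` with eigenvalue `-pq`:
`((1-x²-y²)/4)(∂²φ/∂x² + ∂²φ/∂y²) + pq·φ = 0`. -/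
theorem scatPoly_hybrid_laplacian_eigenfunction (p q : ℤ) (hp : 1 ≤ p) (hq : 1 ≤ q)
    (x y : ℝ) :
    ((1 - (x : ℂ) ^ 2 - (y : ℂ) ^ 2) / 4) *
        (deriv (fun s : ℝ => deriv (fun t : ℝ => scatPoly p q ((t : ℂ) + (y : ℂ) * Complex.I)) s) x
          + deriv (fun s : ℝ => deriv (fun t : ℝ => scatPoly p q ((x : ℂ) + (t : ℂ) * Complex.I)) s) y)
      + (p : ℂ) * (q : ℂ) * scatPoly p q ((x : ℂ) + (y : ℂ) * Complex.I) = 0 := by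
  obtain ⟨n, m, a, b, C, hn, hab, hab0, hpq, hscat⟩ :
      ∃ n m a b : ℕ, ∃ C : ℂ, 1 ≤ n ∧ a + b = m ∧ a * b = 0 ∧
        (p : ℂ) * (q : ℂ) = (n : ℂ) * ((n : ℂ) + (m : ℂ)) ∧
        ∀ x y : ℝ, scatPoly p q ((x : ℂ) + (y : ℂ) * Complex.I) = C * psi a b n m x y := by
    refine ⟨(min p q).toNat, (p - q).natAbs, (max p q - p).toNat, (max p q - q).toNat,
      (-1 : ℂ) ^ ((q + min p q).toNat) / (q : ℂ), ?_, ?_, ?_, ?_, fun x y => scatPoly_eq p q hp hq x y⟩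
    · have := le_min hp hq; omega
    · rcases le_total p q with h | h
      · rw [max_eq_right h]; omega
      · rw [max_eq_left h]; omega
    · rcases le_total p q with h | h
      · rw [max_eq_right h, sub_self]; simp
      · rw [max_eq_left h, sub_self]; simp
    · have hZ : p * q = (((min p q).toNat : ℤ)) * (((min p q).toNat : ℤ) + ((p - q).natAbs : ℤ)) := by
        rcases le_total p q with h | h
        · rw [min_eq_left h]
          have h1 : ((p.toNat : ℤ)) = p := Int.toNat_of_nonneg (by omega)
          have h2 : (((p - q).natAbs : ℤ)) = q - p := by omega
          rw [h1, h2]; ring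
        · rw [min_eq_right h]
          have h1 : ((q.toNat : ℤ)) = q := Int.toNat_of_nonneg (by omega)
          have h2 : (((p - q).natAbs : ℤ)) = p - q := by omega
          rw [h1, h2]; ring
      have hC := congrArg (Int.cast : ℤ → ℂ) hZ
      simp only [Int.cast_mul, Int.cast_add, Int.cast_natCast] at hC
      exact hC
  have hx : (fun s : ℝ => deriv (fun t : ℝ => scatPoly p q ((t : ℂ) + (y : ℂ) * Complex.I)) s) =
      fun s : ℝ => C * psiX a b n m s y := by
    funext s
    have h1 : (fun t : ℝ => scatPoly p q ((t : ℂ) + (y : ℂ) * Complex.I)) =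
        fun t : ℝ => C * psi a b n m t y := funext fun t => hscat t y
    rw [h1]
    exact ((hasDerivAt_psi_x a b n m y s).const_mul C).deriv
  have hy : (fun s : ℝ => deriv (fun t : ℝ => scatPoly p q ((x : ℂ) + (t : ℂ) * Complex.I)) s) =
      fun s : ℝ => C * psiY a b n m x s := by
    funext s
    have h1 : (fun t : ℝ => scatPoly p q ((x : ℂ) + (t : ℂ) * Complex.I)) =
        fun t : ℝ => C * psi a b n m x t := funext fun t => hscat x t
    rw [h1]
    exact ((hasDerivAt_psi_y a b n m x s).const_mul C).deriv
  have hxx : deriv (fun s : ℝ => deriv (fun t : ℝ => scatPoly p q ((t : ℂ) + (y : ℂ) * Complex.I)) s) x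
      = C * psiXX a b n m x y := by
    rw [hx]
    exact ((hasDerivAt_psiX_x a b n m y x).const_mul C).deriv
  have hyy : deriv (fun s : ℝ => deriv (fun t : ℝ => scatPoly p q ((x : ℂ) + (t : ℂ) * Complex.I)) s) y
      = C * psiYY a b n m x y := by
    rw [hy]
    exact ((hasDerivAt_psiY_y a b n m x y).const_mul C).deriv
  rw [hxx, hyy, hscat x y]
  have hfin := final a b n m hn hab hab0 x y
  linear_combination C * hfin + (C * psi a b n m x y) * hpq
end

section
/- Every scattering polynomial maps the closed unit disk into itself: for every pair of integers (p,q) ∈ ℤ² and every ζ ∈ ℂ with |ζ| ≤ 1, one has |φ^(p,q)(ζ)| ≤ 1. -/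
open scoped BigOperators

namespace ScatAux

lemma factA_core {P Q : ℕ} (hP : 1 ≤ P) (hPQ : P ≤ Q) (j : ℕ) (hj : j ≤ P) :
    Q * (P.choose (P - j)) * ((Q + j - 1).choose (P - 1)) *
      (j.factorial * (j + (Q - P)).factorial * (P - j).factorial)
      = P * Q * (Q + j - 1).factorial := by
  have h1 : P.choose (P - j) * (P - j).factorial * j.factorial = P.factorial := by
    have := Nat.choose_mul_factorial_mul_factorial (Nat.sub_le P j)
    rwa [Nat.sub_sub_self hj] at this
  have h2 : (Q + j - 1).choose (P - 1) * (P - 1).factorial * (j + (Q - P)).factorial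
      = (Q + j - 1).factorial := by
    have hle : P - 1 ≤ Q + j - 1 := by omega
    have := Nat.choose_mul_factorial_mul_factorial hle
    have heq : Q + j - 1 - (P - 1) = j + (Q - P) := by omega
    rwa [heq] at this
  apply Nat.eq_of_mul_eq_mul_right (Nat.factorial_pos (P - 1))
  calc Q * (P.choose (P - j)) * ((Q + j - 1).choose (P - 1)) *
      (j.factorial * (j + (Q - P)).factorial * (P - j).factorial) * (P - 1).factorial
      = Q * (P.choose (P - j) * (P - j).factorial * j.factorial) *
        ((Q + j - 1).choose (P - 1) * (P - 1).factorial * (j + (Q - P)).factorial) := by ring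
    _ = Q * P.factorial * (Q + j - 1).factorial := by rw [h1, h2]
    _ = Q * (P * (P - 1).factorial) * (Q + j - 1).factorial := by
        rw [Nat.mul_factorial_pred (by omega)]
    _ = P * Q * (Q + j - 1).factorial * (P - 1).factorial := by ring

/-- core Vandermonde-type factorial identity, case `Q ≤ P`. -/
lemma factA_core' {P Q : ℕ} (hP : 1 ≤ P) (hPQ : Q ≤ P) (j : ℕ) (hj : j ≤ Q) :
    Q * (P.choose (Q - j)) * ((P + j - 1).choose (P - 1)) *
      (j.factorial * (j + (P - Q)).factorial * (Q - j).factorial)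
      = Q * P * (P + j - 1).factorial := by
  have h1 : P.choose (Q - j) * (Q - j).factorial * (j + (P - Q)).factorial = P.factorial := by
    have hle : Q - j ≤ P := by omega
    have := Nat.choose_mul_factorial_mul_factorial hle
    have heq : P - (Q - j) = j + (P - Q) := by omega
    rwa [heq] at this
  have h2 : (P + j - 1).choose (P - 1) * (P - 1).factorial * j.factorial
      = (P + j - 1).factorial := by
    have hle : P - 1 ≤ P + j - 1 := by omega
    have := Nat.choose_mul_factorial_mul_factorial hle
    have heq : P + j - 1 - (P - 1) = j := by omega
    rwa [heq] at this
  apply Nat.eq_of_mul_eq_mul_right (Nat.factorial_pos (P - 1))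
  calc Q * (P.choose (Q - j)) * ((P + j - 1).choose (P - 1)) *
      (j.factorial * (j + (P - Q)).factorial * (Q - j).factorial) * (P - 1).factorial
      = Q * (P.choose (Q - j) * (Q - j).factorial * (j + (P - Q)).factorial) *
        ((P + j - 1).choose (P - 1) * (P - 1).factorial * j.factorial) := by ring
    _ = Q * P.factorial * (P + j - 1).factorial := by rw [h1, h2]
    _ = Q * (P * (P - 1).factorial) * (P + j - 1).factorial := by
        rw [Nat.mul_factorial_pred (by omega)]
    _ = Q * P * (P + j - 1).factorial * (P - 1).factorial := by ring

/-- unified version. -/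
lemma factA {P Q : ℕ} (hP : 1 ≤ P) (hQ : 1 ≤ Q) (j : ℕ) (hj : j ≤ min P Q) :
    Q * (P.choose (min P Q - j)) * ((max P Q + j - 1).choose (P - 1)) *
      (j.factorial * (j + (max P Q - min P Q)).factorial * (min P Q - j).factorial)
      = min P Q * (max P Q * (j + max P Q - 1).factorial) := by
  rcases le_total P Q with h | h
  · rw [min_eq_left h, max_eq_right h]
    rw [show j + Q - 1 = Q + j - 1 by omega]
    rw [min_eq_left h] at hj
    have := factA_core hP h j hj
    rw [this]; ring
  · rw [min_eq_right h, max_eq_left h]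
    rw [show j + P - 1 = P + j - 1 by omega]
    rw [min_eq_right h] at hj
    have := factA_core' hP h j hj
    rw [this]; ring

/-- factorial recurrence. -/
lemma factC (ν mx j : ℕ) (hj : j ≤ ν) (hν : 1 ≤ ν) (h : ν ≤ mx) :
    (j + mx).factorial * (ν - j) + (j + mx - 1).factorial * (j * (j + (mx - ν)))
      = ν * (mx * (j + mx - 1).factorial) := by
  obtain ⟨d, rfl⟩ : ∃ d, ν = j + d := ⟨ν - j, by omega⟩
  obtain ⟨e, rfl⟩ : ∃ e, mx = j + d + e := ⟨mx - (j + d), by omega⟩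
  have h1 : j + (j + d + e) - 1 + 1 = j + (j + d + e) := by omega
  have h2 : (j + (j + d + e)).factorial = (j + (j + d + e) - 1 + 1).factorial := by rw [h1]
  rw [h2, Nat.factorial_succ, h1]
  have h3 : j + d - j = d := by omega
  have h4 : j + (j + d + e - (j + d)) = j + e := by omega
  rw [h3, h4]
  generalize (j + (j + d + e) - 1).factorial = F
  ring

lemma termeq (P Q j : ℕ) (hP : 1 ≤ P) (hQ : 1 ≤ Q) (hj : j ≤ min P Q) :
    (Q : ℂ) * ((P.choose (min P Q - j)) : ℂ) * (((max P Q + j - 1).choose (P - 1)) : ℂ)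
      = (if j < min P Q then
           (((j + max P Q).factorial : ℕ) : ℂ) /
             ((j.factorial : ℂ) * (((j + (max P Q - min P Q)).factorial : ℕ) : ℂ) *
               (((min P Q - j - 1).factorial : ℕ) : ℂ))
         else 0)
        + (if j = 0 then 0 else
           (((j - 1 + max P Q).factorial : ℕ) : ℂ) /
             ((((j - 1).factorial : ℕ) : ℂ) * (((j - 1 + (max P Q - min P Q)).factorial : ℕ) : ℂ) *
               (((min P Q - (j - 1) - 1).factorial : ℕ) : ℂ))) := by
  have hν1 : 1 ≤ min P Q := le_min hP hQ
  have hνmx : min P Q ≤ max P Q := min_le_max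
  set ν := min P Q with hνdef
  set mx := max P Q with hmxdef
  set m := mx - ν with hmdef
  have hfne : ∀ n : ℕ, ((n.factorial : ℕ) : ℂ) ≠ 0 := fun n =>
    Nat.cast_ne_zero.mpr (Nat.factorial_ne_zero n)
  have hDne : ((j.factorial : ℂ) * (((j + m).factorial : ℕ) : ℂ) * (((ν - j).factorial : ℕ) : ℂ)) ≠ 0 :=
    mul_ne_zero (mul_ne_zero (hfne j) (hfne _)) (hfne _)
  have hA : (if j < ν then
           (((j + mx).factorial : ℕ) : ℂ) /
             ((j.factorial : ℂ) * (((j + m).factorial : ℕ) : ℂ) *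
               (((ν - j - 1).factorial : ℕ) : ℂ))
         else 0)
      = ((((j + mx).factorial * (ν - j) : ℕ)) : ℂ) /
          ((j.factorial : ℂ) * (((j + m).factorial : ℕ) : ℂ) * (((ν - j).factorial : ℕ) : ℂ)) := by
    by_cases hjv : j < ν
    · rw [if_pos hjv]
      have h1 : (ν - j) * ((ν - j) - 1).factorial = (ν - j).factorial :=
        Nat.mul_factorial_pred (by omega)
      rw [div_eq_div_iff (mul_ne_zero (mul_ne_zero (hfne j) (hfne _)) (hfne _)) hDne]
      push_cast [← h1]
      ring
    · rw [if_neg hjv]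
      have : ν - j = 0 := by omega
      rw [this]
      simp
  have hB : (if j = 0 then 0 else
           (((j - 1 + mx).factorial : ℕ) : ℂ) /
             ((((j - 1).factorial : ℕ) : ℂ) * (((j - 1 + m).factorial : ℕ) : ℂ) *
               (((ν - (j - 1) - 1).factorial : ℕ) : ℂ)))
      = ((((j + mx - 1).factorial * (j * (j + m)) : ℕ)) : ℂ) /
          ((j.factorial : ℂ) * (((j + m).factorial : ℕ) : ℂ) * (((ν - j).factorial : ℕ) : ℂ)) := by
    by_cases hj0 : j = 0
    · rw [if_pos hj0, hj0]
      simp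
    · rw [if_neg hj0]
      have h1 : j * (j - 1).factorial = j.factorial := Nat.mul_factorial_pred (by omega)
      have h2 : (j + m) * ((j + m) - 1).factorial = (j + m).factorial :=
        Nat.mul_factorial_pred (by omega)
      have e1 : ν - (j - 1) - 1 = ν - j := by omega
      have e2 : j - 1 + mx = j + mx - 1 := by omega
      have e3 : j - 1 + m = j + m - 1 := by omega
      rw [e1, e2, e3]
      rw [div_eq_div_iff (mul_ne_zero (mul_ne_zero (hfne _) (hfne _)) (hfne _)) hDne]
      push_cast [← h1, ← h2]
      ring
  rw [hA, hB, ← add_div, eq_div_iff hDne]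
  have hfa := factA hP hQ j hj
  have hfc := factC ν mx j hj hν1 hνmx
  have : (j + mx).factorial * (ν - j) + (j + mx - 1).factorial * (j * (j + m))
      = Q * (P.choose (ν - j)) * ((mx + j - 1).choose (P - 1)) *
        (j.factorial * (j + m).factorial * (ν - j).factorial) := by
    rw [hfa, hfc]
  rw [← Nat.cast_add]
  rw [this]
  push_cast
  ring

lemma core_sum (P Q : ℕ) (hP : 1 ≤ P) (hQ : 1 ≤ Q) (u : ℂ) :
    (1 - u) * ∑ j ∈ Finset.range (min P Q),
        (-1 : ℂ) ^ j * (((j + max P Q).factorial : ℕ) : ℂ) /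
            ((j.factorial : ℂ) * (((j + (max P Q - min P Q)).factorial : ℕ) : ℂ) *
              (((min P Q - j - 1).factorial : ℕ) : ℂ)) * u ^ j
      = (Q : ℂ) * ∑ j ∈ Finset.range (min P Q + 1),
          (-1 : ℂ) ^ j * ((P.choose (min P Q - j)) : ℂ) *
            (((max P Q + j - 1).choose (P - 1)) : ℂ) * u ^ j := by
  have hν1 : 1 ≤ min P Q := le_min hP hQ
  set ν := min P Q with hνdef
  set mx := max P Q with hmxdef
  set m := mx - ν with hmdef
  -- abbreviation for c
  set c : ℕ → ℂ := fun j =>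
    (((j + mx).factorial : ℕ) : ℂ) /
      ((j.factorial : ℂ) * (((j + m).factorial : ℕ) : ℂ) * (((ν - j - 1).factorial : ℕ) : ℂ))
    with hcdef
  have hS : ∑ j ∈ Finset.range ν,
        (-1 : ℂ) ^ j * (((j + mx).factorial : ℕ) : ℂ) /
            ((j.factorial : ℂ) * (((j + m).factorial : ℕ) : ℂ) *
              (((ν - j - 1).factorial : ℕ) : ℂ)) * u ^ j
      = ∑ j ∈ Finset.range ν, (-1 : ℂ) ^ j * c j * u ^ j := by
    refine Finset.sum_congr rfl fun j hj => ?_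
    rw [hcdef]
    ring
  rw [hS]
  -- RHS rewrite via termeq
  have hT : (Q : ℂ) * ∑ j ∈ Finset.range (ν + 1),
          (-1 : ℂ) ^ j * ((P.choose (ν - j)) : ℂ) * (((mx + j - 1).choose (P - 1)) : ℂ) * u ^ j
      = ∑ j ∈ Finset.range (ν + 1),
          (-1 : ℂ) ^ j * ((if j < ν then c j else 0) + (if j = 0 then 0 else c (j - 1))) * u ^ j := by
    rw [Finset.mul_sum]
    refine Finset.sum_congr rfl fun j hj => ?_
    have hjle : j ≤ ν := by
      have := Finset.mem_range.mp hj; omega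
    have := termeq P Q j hP hQ hjle
    rw [hcdef]
    simp only []
    rw [← hνdef, ← hmxdef, ← hmdef] at this
    calc (Q : ℂ) * ((-1 : ℂ) ^ j * ((P.choose (ν - j)) : ℂ) *
            (((mx + j - 1).choose (P - 1)) : ℂ) * u ^ j)
        = ((Q : ℂ) * ((P.choose (ν - j)) : ℂ) * (((mx + j - 1).choose (P - 1)) : ℂ)) *
            ((-1 : ℂ) ^ j * u ^ j) := by ring
      _ = _ := by rw [this]; ring
  rw [hT]
  -- split the RHS sum
  have hsplit : ∑ j ∈ Finset.range (ν + 1),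
        (-1 : ℂ) ^ j * ((if j < ν then c j else 0) + (if j = 0 then 0 else c (j - 1))) * u ^ j
      = (∑ j ∈ Finset.range (ν + 1), (-1 : ℂ) ^ j * (if j < ν then c j else 0) * u ^ j)
        + ∑ j ∈ Finset.range (ν + 1), (-1 : ℂ) ^ j * (if j = 0 then 0 else c (j - 1)) * u ^ j := by
    rw [← Finset.sum_add_distrib]
    refine Finset.sum_congr rfl fun j hj => by ring
  rw [hsplit]
  have h1 : ∑ j ∈ Finset.range (ν + 1), (-1 : ℂ) ^ j * (if j < ν then c j else 0) * u ^ j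
      = ∑ j ∈ Finset.range ν, (-1 : ℂ) ^ j * c j * u ^ j := by
    rw [← Finset.sum_subset (Finset.range_subset_range.mpr (Nat.le_succ ν))]
    · refine Finset.sum_congr rfl fun j hj => ?_
      rw [if_pos (Finset.mem_range.mp hj)]
    · intro j hj hj2
      have hne : ¬ j < ν := fun h => hj2 (Finset.mem_range.mpr h)
      rw [if_neg hne]
      ring
  have h2 : ∑ j ∈ Finset.range (ν + 1), (-1 : ℂ) ^ j * (if j = 0 then 0 else c (j - 1)) * u ^ j
      = -(u * ∑ j ∈ Finset.range ν, (-1 : ℂ) ^ j * c j * u ^ j) := by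
    rw [Finset.sum_range_succ']
    simp only [if_pos rfl]
    rw [Finset.mul_sum, ← Finset.sum_neg_distrib]
    have : ∀ j, (-1 : ℂ) ^ (j + 1) * (if j + 1 = 0 then 0 else c (j + 1 - 1)) * u ^ (j + 1)
        = -(u * ((-1 : ℂ) ^ j * c j * u ^ j)) := by
      intro j
      rw [if_neg (Nat.succ_ne_zero j)]
      simp only [Nat.add_sub_cancel]
      rw [pow_succ, pow_succ]
      ring
    rw [Finset.sum_congr rfl fun j _ => this j]
    simp
  rw [h1, h2]
  ring

noncomputable def acoef (P : ℕ) (ζ : ℂ) (n : ℕ) : ℂ :=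
  ∑ k ∈ Finset.range (P + 1),
    (if k ≤ n then (P.choose k : ℂ) * ((starRingEnd ℂ) ζ) ^ (P - k) *
      (((n - k + (P - 1)).choose (P - 1)) : ℂ) * (-ζ) ^ (n - k) else 0)


lemma key_identity (P Q : ℕ) (hP : 1 ≤ P) (hQ : 1 ≤ Q) (ζ : ℂ) :
    ((-1 : ℂ) ^ (Q + min P Q) / (Q : ℂ)) * (1 - ζ * (starRingEnd ℂ) ζ) *
      ζ ^ (max P Q - P) * ((starRingEnd ℂ) ζ) ^ (max P Q - Q) *
      ∑ j ∈ Finset.range (min P Q),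
        (-1 : ℂ) ^ j * ((j + min P Q + (max P Q - min P Q)).factorial : ℂ) /
            ((j.factorial : ℂ) * ((j + (max P Q - min P Q)).factorial : ℂ) *
              ((min P Q - j - 1).factorial : ℂ)) *
          (ζ * (starRingEnd ℂ) ζ) ^ j
    = acoef P ζ Q := by
  rw [acoef]
  have hν1 : 1 ≤ min P Q := le_min hP hQ
  have hνmx : min P Q ≤ max P Q := min_le_max
  set ν := min P Q with hνdef
  set mx := max P Q with hmxdef
  set z' := (starRingEnd ℂ) ζ with hz'def
  set u := ζ * z' with hudef
  have hQne : (Q : ℂ) ≠ 0 := Nat.cast_ne_zero.mpr (by omega)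
  -- rewrite the factorial index inside the LHS sum
  have hLsum : ∑ j ∈ Finset.range ν,
        (-1 : ℂ) ^ j * ((j + ν + (mx - ν)).factorial : ℂ) /
            ((j.factorial : ℂ) * ((j + (mx - ν)).factorial : ℂ) *
              ((ν - j - 1).factorial : ℂ)) * u ^ j
      = ∑ j ∈ Finset.range ν,
        (-1 : ℂ) ^ j * (((j + mx).factorial : ℕ) : ℂ) /
            ((j.factorial : ℂ) * (((j + (mx - ν)).factorial : ℕ) : ℂ) *
              (((ν - j - 1).factorial : ℕ) : ℂ)) * u ^ j := by
    refine Finset.sum_congr rfl fun j hj => ?_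
    rw [show j + ν + (mx - ν) = j + mx by omega]
  -- rewrite the RHS
  have hsub : Finset.range (ν + 1) ⊆ Finset.range (P + 1) := Finset.range_subset_range.mpr (by omega)
  have hRHS1 : ∑ k ∈ Finset.range (P + 1),
        (if k ≤ Q then (P.choose k : ℂ) * z' ^ (P - k) *
          (((Q - k + (P - 1)).choose (P - 1)) : ℂ) * (-ζ) ^ (Q - k) else 0)
      = ∑ k ∈ Finset.range (ν + 1),
          (P.choose k : ℂ) * z' ^ (P - k) *
            (((Q - k + (P - 1)).choose (P - 1)) : ℂ) * (-ζ) ^ (Q - k) := by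
    rw [← Finset.sum_subset hsub]
    · refine Finset.sum_congr rfl fun k hk => ?_
      have hk' := Finset.mem_range.mp hk
      rw [if_pos (by omega)]
    · intro k hk hk2
      have hk' := Finset.mem_range.mp hk
      have hk2' : ¬ k < ν + 1 := fun h => hk2 (Finset.mem_range.mpr h)
      rw [if_neg (by omega)]
  have hRHS2 : ∑ k ∈ Finset.range (ν + 1),
          (P.choose k : ℂ) * z' ^ (P - k) *
            (((Q - k + (P - 1)).choose (P - 1)) : ℂ) * (-ζ) ^ (Q - k)
      = ∑ j ∈ Finset.range (ν + 1),
          (P.choose (ν - j) : ℂ) * z' ^ (P - (ν - j)) *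
            (((Q - (ν - j) + (P - 1)).choose (P - 1)) : ℂ) * (-ζ) ^ (Q - (ν - j)) := by
    rw [← Finset.sum_range_reflect]
    refine Finset.sum_congr rfl fun j hj => ?_
    rw [show ν + 1 - 1 - j = ν - j by omega]
  have hterm : ∀ j ∈ Finset.range (ν + 1),
      (P.choose (ν - j) : ℂ) * z' ^ (P - (ν - j)) *
          (((Q - (ν - j) + (P - 1)).choose (P - 1)) : ℂ) * (-ζ) ^ (Q - (ν - j))
        = (z' ^ (P - ν) * ((-1 : ℂ) ^ (Q - ν) * ζ ^ (Q - ν))) *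
            ((-1 : ℂ) ^ j * (P.choose (ν - j) : ℂ) * (((mx + j - 1).choose (P - 1)) : ℂ) * u ^ j) := by
    intro j hj
    have hjle : j ≤ ν := by have := Finset.mem_range.mp hj; omega
    rw [show P - (ν - j) = (P - ν) + j by omega,
        show Q - (ν - j) = (Q - ν) + j by omega,
        show Q - ν + j + (P - 1) = mx + j - 1 by omega]
    rw [pow_add, pow_add, neg_pow ζ (Q - ν), neg_pow ζ j, hudef, mul_pow]
    ring
  have hRHS3 : ∑ j ∈ Finset.range (ν + 1),
          (P.choose (ν - j) : ℂ) * z' ^ (P - (ν - j)) *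
            (((Q - (ν - j) + (P - 1)).choose (P - 1)) : ℂ) * (-ζ) ^ (Q - (ν - j))
      = (z' ^ (P - ν) * ((-1 : ℂ) ^ (Q - ν) * ζ ^ (Q - ν))) *
          ∑ j ∈ Finset.range (ν + 1),
            (-1 : ℂ) ^ j * (P.choose (ν - j) : ℂ) * (((mx + j - 1).choose (P - 1)) : ℂ) * u ^ j := by
    rw [Finset.mul_sum]
    exact Finset.sum_congr rfl hterm
  -- sign
  have hsign : (-1 : ℂ) ^ (Q + ν) = (-1 : ℂ) ^ (Q - ν) := by
    rw [show Q + ν = (Q - ν) + 2 * ν by omega, pow_add, pow_mul]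
    norm_num
  -- exponents
  have he1 : mx - P = Q - ν := by omega
  have he2 : mx - Q = P - ν := by omega
  rw [hLsum, hRHS1, hRHS2, hRHS3, hsign, he1, he2]
  have hcore := core_sum P Q hP hQ u
  rw [← hνdef, ← hmxdef] at hcore
  set S := ∑ j ∈ Finset.range ν,
      (-1 : ℂ) ^ j * (((j + mx).factorial : ℕ) : ℂ) /
          ((j.factorial : ℂ) * (((j + (mx - ν)).factorial : ℕ) : ℂ) *
            (((ν - j - 1).factorial : ℕ) : ℂ)) * u ^ j with hSdef
  set T := ∑ j ∈ Finset.range (ν + 1),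
      (-1 : ℂ) ^ j * (P.choose (ν - j) : ℂ) * (((mx + j - 1).choose (P - 1)) : ℂ) * u ^ j
    with hTdef
  rw [show T = (1 - u) * S / Q from by rw [eq_div_iff hQne]; linear_combination -hcore]
  ring

lemma hasSum_acoef (P : ℕ) (hP : 1 ≤ P) (ζ w : ℂ) (hw : ‖ζ * w‖ < 1) :
    HasSum (fun n => acoef P ζ n * w ^ n)
      (((starRingEnd ℂ) ζ + w) ^ P * ((1 + ζ * w)⁻¹) ^ P) := by
  have hgeo : HasSum (fun n : ℕ => (((n + (P - 1)).choose (P - 1) : ℕ) : ℂ) * (-(ζ * w)) ^ n)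
      (1 / (1 - -(ζ * w)) ^ ((P - 1) + 1)) :=
    hasSum_choose_mul_geometric_of_norm_lt_one (P - 1) (by simpa using hw)
  rw [show (1 : ℂ) - -(ζ * w) = 1 + ζ * w by ring, show P - 1 + 1 = P by omega] at hgeo
  have hk : ∀ k ∈ Finset.range (P + 1),
      HasSum (fun n : ℕ =>
          (if k ≤ n then (P.choose k : ℂ) * ((starRingEnd ℂ) ζ) ^ (P - k) *
            (((n - k + (P - 1)).choose (P - 1)) : ℂ) * (-ζ) ^ (n - k) else 0) * w ^ n)
        ((P.choose k : ℂ) * ((starRingEnd ℂ) ζ) ^ (P - k) * w ^ k * (1 / (1 + ζ * w) ^ P)) := by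
    intro k _
    have h1 : HasSum (fun n : ℕ =>
        (P.choose k : ℂ) * ((starRingEnd ℂ) ζ) ^ (P - k) * w ^ k *
          ((((n + (P - 1)).choose (P - 1) : ℕ) : ℂ) * (-(ζ * w)) ^ n))
        ((P.choose k : ℂ) * ((starRingEnd ℂ) ζ) ^ (P - k) * w ^ k * (1 / (1 + ζ * w) ^ P)) :=
      hgeo.mul_left _
    have hinj : Function.Injective (fun n : ℕ => n + k) := fun a b h => Nat.add_right_cancel h
    refine (Function.Injective.hasSum_iff hinj ?_).mp ?_
    · intro m hm
      have hmk : ¬ k ≤ m := fun h => hm ⟨m - k, show m - k + k = m by omega⟩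
      rw [if_neg hmk, zero_mul]
    · have hfe : ((fun m : ℕ =>
          (if k ≤ m then (P.choose k : ℂ) * ((starRingEnd ℂ) ζ) ^ (P - k) *
            (((m - k + (P - 1)).choose (P - 1)) : ℂ) * (-ζ) ^ (m - k) else 0) * w ^ m)
          ∘ (fun n : ℕ => n + k))
          = fun n : ℕ =>
          (P.choose k : ℂ) * ((starRingEnd ℂ) ζ) ^ (P - k) * w ^ k *
            ((((n + (P - 1)).choose (P - 1) : ℕ) : ℂ) * (-(ζ * w)) ^ n) := by
        funext n
        simp only [Function.comp_apply]
        rw [if_pos (Nat.le_add_left k n), Nat.add_sub_cancel]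
        rw [show (-(ζ * w)) = (-ζ) * w by ring, mul_pow, pow_add]
        ring
      rw [hfe]
      exact h1
  have htot := hasSum_sum hk
  have hfun : (fun n : ℕ => ∑ k ∈ Finset.range (P + 1),
      (if k ≤ n then (P.choose k : ℂ) * ((starRingEnd ℂ) ζ) ^ (P - k) *
        (((n - k + (P - 1)).choose (P - 1)) : ℂ) * (-ζ) ^ (n - k) else 0) * w ^ n)
      = fun n => acoef P ζ n * w ^ n := by
    funext n
    rw [acoef, Finset.sum_mul]
  have hval : ∑ k ∈ Finset.range (P + 1),
      (P.choose k : ℂ) * ((starRingEnd ℂ) ζ) ^ (P - k) * w ^ k * (1 / (1 + ζ * w) ^ P)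
      = ((starRingEnd ℂ) ζ + w) ^ P * ((1 + ζ * w)⁻¹) ^ P := by
    rw [← Finset.sum_mul]
    congr 1
    · rw [add_comm ((starRingEnd ℂ) ζ) w, add_pow]
      exact Finset.sum_congr rfl fun k _ => by ring
    · rw [one_div, inv_pow]
  rw [hfun, hval] at htot
  exact htot

lemma acoef_norm_le (P : ℕ) (hP : 1 ≤ P) (ζ : ℂ) (hζ : ‖ζ‖ < 1) (Q : ℕ) :
    ‖acoef P ζ Q‖ ≤ 1 := by
  set g : ℂ → ℂ := fun w => ((starRingEnd ℂ) ζ + w) ^ P * ((1 + ζ * w)⁻¹) ^ P with hg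
  set pa : FormalMultilinearSeries ℂ ℂ ℂ :=
    fun n => ContinuousMultilinearMap.mkPiRing ℂ (Fin n) (acoef P ζ n) with hpa
  have hcoeff : ∀ n, pa.coeff n = acoef P ζ n := by
    intro n
    simp [hpa, FormalMultilinearSeries.coeff, ContinuousMultilinearMap.mkPiRing_apply]
  have hA : HasFPowerSeriesAt g pa 0 := by
    rw [hasFPowerSeriesAt_iff]
    have hε : (0 : ℝ) < (‖ζ‖ + 1)⁻¹ := by positivity
    filter_upwards [Metric.ball_mem_nhds 0 hε] with z hz
    have hzn : ‖ζ * z‖ < 1 := by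
      rw [norm_mul]
      have h1 : ‖z‖ < (‖ζ‖ + 1)⁻¹ := by simpa [Metric.mem_ball] using hz
      have h2 : ‖ζ‖ * ‖z‖ ≤ ‖ζ‖ * (‖ζ‖ + 1)⁻¹ := by
        apply mul_le_mul_of_nonneg_left h1.le (norm_nonneg _)
      have h3 : ‖ζ‖ * (‖ζ‖ + 1)⁻¹ < 1 := by
        rw [mul_inv_lt_iff₀ (by positivity), one_mul]
        linarith
      linarith
    have hs := hasSum_acoef P hP ζ z hzn
    have : (fun n => z ^ n • pa.coeff n) = fun n => acoef P ζ n * z ^ n := by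
      funext n
      rw [hcoeff, smul_eq_mul, mul_comm]
    rw [zero_add, this]
    exact hs
  have hD : DifferentiableOn ℂ g (Metric.closedBall 0 1) := by
    apply DifferentiableOn.mul
    · exact (((differentiable_const _).add differentiable_id).pow P).differentiableOn
    · apply DifferentiableOn.pow
      apply DifferentiableOn.inv
      · exact ((differentiable_const (1 : ℂ)).add
          ((differentiable_const ζ).mul differentiable_id)).differentiableOn
      · intro x hx
        have hx1 : ‖x‖ ≤ 1 := by
          simpa [Metric.mem_closedBall, dist_eq_norm] using hx
        intro h0
        have h1 : ζ * x = -1 := by linear_combination h0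
        have h2 : ‖ζ * x‖ = 1 := by rw [h1]; simp
        have h3 : ‖ζ * x‖ ≤ ‖ζ‖ := by
          rw [norm_mul]
          calc ‖ζ‖ * ‖x‖ ≤ ‖ζ‖ * 1 := mul_le_mul_of_nonneg_left hx1 (norm_nonneg _)
            _ = ‖ζ‖ := mul_one _
        linarith
  have hD' : DifferentiableOn ℂ g (Metric.closedBall 0 ((1 : NNReal) : ℝ)) := by
    simpa using hD
  have hC : HasFPowerSeriesOnBall g (cauchyPowerSeries g 0 ((1 : NNReal) : ℝ)) 0 (1 : NNReal) :=
    hD'.hasFPowerSeriesOnBall one_pos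
  have heq : cauchyPowerSeries g 0 ((1 : NNReal) : ℝ) = pa :=
    hC.hasFPowerSeriesAt.eq_formalMultilinearSeries hA
  -- circle bound
  have hcirc : ∀ θ : ℝ, ‖g (circleMap 0 1 θ)‖ = 1 := by
    intro θ
    set w := circleMap 0 1 θ with hw
    have hwn : ‖w‖ = 1 := by
      have := norm_circleMap_zero 1 θ
      simpa [hw] using this
    have hww : w * (starRingEnd ℂ) w = 1 := by
      rw [Complex.mul_conj]
      rw [Complex.normSq_eq_norm_sq]
      rw [hwn]
      norm_num
    have hkey : (starRingEnd ℂ) ζ + w = (starRingEnd ℂ) (1 + ζ * w) * w := by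
      rw [map_add, map_mul, map_one]
      linear_combination (-((starRingEnd ℂ) ζ)) * hww
    have hnz : ‖(1 : ℂ) + ζ * w‖ ≠ 0 := by
      intro h
      have h0 : (1 : ℂ) + ζ * w = 0 := norm_eq_zero.mp h
      have h1 : ζ * w = -1 := by linear_combination h0
      have h2 : ‖ζ * w‖ = 1 := by rw [h1]; simp
      rw [norm_mul, hwn, mul_one] at h2
      linarith
    have hnorm : ‖(starRingEnd ℂ) ζ + w‖ = ‖(1 : ℂ) + ζ * w‖ := by
      rw [hkey, norm_mul, hwn, mul_one]
      exact RCLike.norm_conj _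
    show ‖((starRingEnd ℂ) ζ + w) ^ P * ((1 + ζ * w)⁻¹) ^ P‖ = 1
    rw [norm_mul, norm_pow, norm_pow, norm_inv, hnorm, ← mul_pow,
      mul_inv_cancel₀ hnz, one_pow]
  have hint : (∫ θ : ℝ in (0 : ℝ)..2 * Real.pi, ‖g (circleMap 0 ((1 : NNReal) : ℝ) θ)‖)
      = 2 * Real.pi := by
    rw [intervalIntegral.integral_congr (g := fun _ => (1 : ℝ))
      (fun θ _ => by simpa using hcirc θ)]
    simp
  have hb := norm_cauchyPowerSeries_le g 0 ((1 : NNReal) : ℝ) Q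
  rw [hint] at hb
  have hb2 : ‖cauchyPowerSeries g 0 ((1 : NNReal) : ℝ) Q‖ ≤ 1 := by
    have h2π : (2 * Real.pi)⁻¹ * (2 * Real.pi) = 1 :=
      inv_mul_cancel₀ (by positivity)
    calc ‖cauchyPowerSeries g 0 ((1 : NNReal) : ℝ) Q‖
        ≤ (2 * Real.pi)⁻¹ * (2 * Real.pi) * |((1 : NNReal) : ℝ)|⁻¹ ^ Q := hb
      _ = 1 := by rw [h2π]; simp
  calc ‖acoef P ζ Q‖ = ‖pa.coeff Q‖ := by rw [hcoeff]
    _ = ‖pa Q‖ := (FormalMultilinearSeries.norm_apply_eq_norm_coef).symm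
    _ = ‖cauchyPowerSeries g 0 ((1 : NNReal) : ℝ) Q‖ := by rw [heq]
    _ ≤ 1 := hb2

end ScatAux

open ScatAux in
/-- Every scattering polynomial maps the closed unit disk into itself. -/
theorem scatPoly_maps_closedDisk_to_closedDisk (p q : ℤ) (ζ : ℂ)
    (hζ : ‖ζ‖ ≤ 1) : ‖scatPoly p q ζ‖ ≤ 1 := by
  by_cases h : 1 ≤ p ∧ 1 ≤ q
  · rw [scatPoly, if_pos h]
    by_cases habs : ‖ζ‖ = 1
    · have hcc : ζ * (starRingEnd ℂ) ζ = 1 := by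
        rw [Complex.mul_conj, Complex.normSq_eq_norm_sq, habs]
        norm_num
      rw [hcc]
      simp
    · have hlt : ‖ζ‖ < 1 := by
        exact lt_of_le_of_ne hζ habs
      obtain ⟨hp, hq⟩ := h
      set P := p.toNat with hPdef
      set Q := q.toNat with hQdef
      have hP : 1 ≤ P := by omega
      have hQ : 1 ≤ Q := by omega
      have e1 : (q + min p q).toNat = Q + min P Q := by omega
      have e2 : (min p q).toNat = min P Q := by omega
      have e3 : (max p q - p).toNat = max P Q - P := by omega
      have e4 : (max p q - q).toNat = max P Q - Q := by omega
      have e5 : (p - q).natAbs = max P Q - min P Q := by omega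
      have e6 : ((q : ℤ) : ℂ) = ((Q : ℕ) : ℂ) := by
        rw [show (q : ℤ) = ((Q : ℕ) : ℤ) by omega]
        push_cast
        rfl
      rw [e1, e2, e3, e4, e5, e6, key_identity P Q hP hQ ζ]
      have := acoef_norm_le P hP ζ hlt Q
      exact this
  · rw [scatPoly, if_neg h]
    by_cases h2 : 0 ≤ p ∧ q = 0
    · rw [if_pos h2, norm_pow, Complex.norm_conj]
      exact pow_le_one₀ (norm_nonneg ζ) hζ
    · rw [if_neg h2]
      simp
end

section
/- Let p, q, p′, q′ ≥ 1 be integers with q − p ≠ q′ − p′. Then the scattering polynomials φ^(p,q) and φ^(p′,q′) are orthogonal on the open unit disk 𝔻 = {ζ ∈ ℂ : |ζ| < 1}, both with respect to Lebesgue measure and with respect to the weighted measure 4/(1−x²−y²) dx dy: that is, ∫_𝔻 φ^(p,q)(ζ)·conj(φ^(p′,q′)(ζ)) dx dy = 0 and ∫_𝔻 φ^(p,q)(ζ)·conj(φ^(p′,q′)(ζ))·(4/(1−x²−y²)) dx dy = 0, where ζ = x + iy. -/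
open scoped BigOperators

open MeasureTheory Complex

/-- Behaviour of a scattering polynomial under rotation by a unit complex number. -/
lemma scatPoly_rot (p q : ℤ) (hp : 1 ≤ p) (hq : 1 ≤ q) (c ζ : ℂ)
    (hc : c * (starRingEnd ℂ) c = 1) :
    scatPoly p q (c * ζ) =
      c ^ ((max p q - p).toNat) * ((starRingEnd ℂ) c) ^ ((max p q - q).toNat) *
        scatPoly p q ζ := by
  have key : c * ζ * ((starRingEnd ℂ) c * (starRingEnd ℂ) ζ) = ζ * (starRingEnd ℂ) ζ := by
    calc c * ζ * ((starRingEnd ℂ) c * (starRingEnd ℂ) ζ)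
        = (c * (starRingEnd ℂ) c) * (ζ * (starRingEnd ℂ) ζ) := by ring
      _ = ζ * (starRingEnd ℂ) ζ := by rw [hc, one_mul]
  rw [scatPoly, scatPoly, if_pos ⟨hp, hq⟩, if_pos ⟨hp, hq⟩, map_mul, key, mul_pow, mul_pow]
  ring

/-- If `g` picks up a factor `-1` under some rotation, its disk integral vanishes. -/
lemma integral_disk_eq_zero (g : ℂ → ℂ) (c : Circle)
    (hg : ∀ ζ : ℂ, g ((c : ℂ) * ζ) = -g ζ) :
    ∫ ζ in {ζ : ℂ | ‖ζ‖ < 1}, g ζ = 0 := by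
  have hmp := (rotation c).measurePreserving
  have hemb : MeasurableEmbedding (rotation c) :=
    (rotation c).toHomeomorph.measurableEmbedding
  have hpre : (rotation c) ⁻¹' {ζ : ℂ | ‖ζ‖ < 1} = {ζ : ℂ | ‖ζ‖ < 1} := by
    ext ζ
    simp [Set.mem_preimage, rotation_apply, map_mul, Circle.norm_coe]
  have h := hmp.setIntegral_preimage_emb hemb g {ζ : ℂ | ‖ζ‖ < 1}
  rw [hpre] at h
  simp only [rotation_apply, hg, integral_neg] at h
  linear_combination (-(1 : ℂ)/2) * h

lemma exp_pow_mul_pow (θ : ℝ) (n m : ℕ) :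
    (Complex.exp (θ * Complex.I)) ^ n * (Complex.exp (-(θ * Complex.I))) ^ m =
      Complex.exp (((n : ℂ) - m) * (θ * Complex.I)) := by
  rw [← Complex.exp_nat_mul, ← Complex.exp_nat_mul, ← Complex.exp_add]
  congr 1
  ring

/-- Scattering polynomials `φ^(p,q)` and `φ^(p′,q′)` with `q - p ≠ q′ - p′` are
orthogonal on the unit disk, both in `L²(𝔻, dx dy)` and in
`L²(𝔻, 4/(1-x²-y²) dx dy)`. -/
theorem scatPoly_orthogonal (p q p' q' : ℤ) (hp : 1 ≤ p) (hq : 1 ≤ q)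
    (hp' : 1 ≤ p') (hq' : 1 ≤ q') (hpq : q - p ≠ q' - p') :
    (∫ ζ in {ζ : ℂ | ‖ζ‖ < 1},
        scatPoly p q ζ * (starRingEnd ℂ) (scatPoly p' q' ζ)) = 0 ∧
    (∫ ζ in {ζ : ℂ | ‖ζ‖ < 1},
        scatPoly p q ζ * (starRingEnd ℂ) (scatPoly p' q' ζ) *
          ((4 : ℂ) / (1 - (ζ.re : ℂ) ^ 2 - (ζ.im : ℂ) ^ 2))) = 0 := by
  set k : ℤ := (q - p) - (q' - p') with hk
  have hk0 : k ≠ 0 := by omega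
  set θ : ℝ := Real.pi / k with hθ
  set a : Circle := Circle.exp θ with ha
  set c : ℂ := (a : ℂ) with hcdef
  have hc_exp : c = Complex.exp (θ * Complex.I) := Circle.coe_exp θ
  have hcconj : (starRingEnd ℂ) c = Complex.exp (-(θ * Complex.I)) := by
    rw [hc_exp, ← Complex.exp_conj]
    congr 1
    simp [Complex.conj_ofReal]
  have hc1 : c * (starRingEnd ℂ) c = 1 := by
    rw [hcconj, hc_exp, ← Complex.exp_add, add_neg_cancel, Complex.exp_zero]
  -- abbreviations for the exponents
  set A : ℕ := (max p q - p).toNat with hA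
  set B : ℕ := (max p q - q).toNat with hB
  set A' : ℕ := (max p' q' - p').toNat with hA'
  set B' : ℕ := (max p' q' - q').toNat with hB'
  have hAz : (A : ℤ) = max p q - p := Int.toNat_of_nonneg (by simp [sub_nonneg, le_max_left])
  have hBz : (B : ℤ) = max p q - q := Int.toNat_of_nonneg (by simp [sub_nonneg, le_max_right])
  have hA'z : (A' : ℤ) = max p' q' - p' := Int.toNat_of_nonneg (by simp [sub_nonneg, le_max_left])
  have hB'z : (B' : ℤ) = max p' q' - q' := Int.toNat_of_nonneg (by simp [sub_nonneg, le_max_right])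
  have hnm : ((A + B' : ℕ) : ℤ) - ((B + A' : ℕ) : ℤ) = k := by
    push_cast [hAz, hBz, hA'z, hB'z]
    rw [hk]
    ring
  -- the rotation factor is `-1`
  have hw : c ^ A * ((starRingEnd ℂ) c) ^ B * (((starRingEnd ℂ) c) ^ A' * c ^ B') = -1 := by
    have h1 : c ^ A * ((starRingEnd ℂ) c) ^ B * (((starRingEnd ℂ) c) ^ A' * c ^ B')
        = c ^ (A + B') * ((starRingEnd ℂ) c) ^ (B + A') := by ring
    rw [h1, hcconj, hc_exp, exp_pow_mul_pow]
    have h2 : (((A + B' : ℕ) : ℂ) - ((B + A' : ℕ) : ℂ)) = (k : ℂ) := by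
      exact_mod_cast congrArg (fun n : ℤ => (n : ℂ)) hnm
    rw [h2]
    have h3 : (k : ℂ) * ((θ : ℂ) * Complex.I) = (Real.pi : ℂ) * Complex.I := by
      have hkC : (k : ℂ) ≠ 0 := Int.cast_ne_zero.mpr hk0
      rw [hθ]
      push_cast
      field_simp
    rw [h3, Complex.exp_pi_mul_I]
  -- the unweighted integrand changes sign under rotation by `c`
  have hrot : ∀ ζ : ℂ,
      scatPoly p q (c * ζ) * (starRingEnd ℂ) (scatPoly p' q' (c * ζ)) =
        -(scatPoly p q ζ * (starRingEnd ℂ) (scatPoly p' q' ζ)) := by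
    intro ζ
    rw [scatPoly_rot p q hp hq c ζ hc1, scatPoly_rot p' q' hp' hq' c ζ hc1]
    simp only [map_mul, map_pow, Complex.conj_conj]
    calc c ^ A * (starRingEnd ℂ) c ^ B * scatPoly p q ζ *
          ((starRingEnd ℂ) c ^ A' * c ^ B' * (starRingEnd ℂ) (scatPoly p' q' ζ))
        = (c ^ A * ((starRingEnd ℂ) c) ^ B * (((starRingEnd ℂ) c) ^ A' * c ^ B')) *
            (scatPoly p q ζ * (starRingEnd ℂ) (scatPoly p' q' ζ)) := by ring
      _ = -(scatPoly p q ζ * (starRingEnd ℂ) (scatPoly p' q' ζ)) := by rw [hw]; ring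
  -- the weight is rotation-invariant
  have hweight : ∀ ζ : ℂ,
      (1 : ℂ) - ((c * ζ).re : ℂ) ^ 2 - ((c * ζ).im : ℂ) ^ 2 =
        1 - (ζ.re : ℂ) ^ 2 - (ζ.im : ℂ) ^ 2 := by
    intro ζ
    have habs : ‖c‖ = 1 := a.norm_coe
    have hns : Complex.normSq (c * ζ) = Complex.normSq ζ := by
      rw [Complex.normSq_mul, ← Complex.sq_norm c, habs]
      ring
    have h1 : ((c * ζ).re : ℂ) ^ 2 + ((c * ζ).im : ℂ) ^ 2 = (ζ.re : ℂ) ^ 2 + (ζ.im : ℂ) ^ 2 := by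
      have := congrArg (fun r : ℝ => (r : ℂ)) hns
      simp only [Complex.normSq_apply] at this
      push_cast at this
      calc ((c * ζ).re : ℂ) ^ 2 + ((c * ζ).im : ℂ) ^ 2
          = ((c * ζ).re : ℂ) * (c * ζ).re + ((c * ζ).im : ℂ) * (c * ζ).im := by ring
        _ = (ζ.re : ℂ) * ζ.re + (ζ.im : ℂ) * ζ.im := this
        _ = (ζ.re : ℂ) ^ 2 + (ζ.im : ℂ) ^ 2 := by ring
    linear_combination -h1
  constructor
  · exact integral_disk_eq_zero _ a hrot
  · refine integral_disk_eq_zero _ a (fun ζ => ?_)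
    rw [hrot ζ, hweight ζ]
    ring
end

section
/- Let n ∈ ℤ, m = |n|, and let k ∈ ℂ with k ≠ 0. Suppose b : ℕ → ℂ satisfies n²·b_0 = 0, (1−n²)·b_1 = 0, and ((j+2)² − n²)·b_{j+2} = (j² − 4k − n²)·b_j for every j ≥ 0, and suppose b is not identically zero. Then: (1) b_j = 0 for every j < m; (2) b_m ≠ 0; (3) b_{m+2j+1} = 0 for every j ≥ 0; and (4) for every j ≥ 1, b_{m+2j} = (−k/(j(m+j))) · (Π_{s=1}^{j−1} (1 − k/(s(m+s)))) · b_m, where the empty product (for j = 1) equals 1. -/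
open scoped BigOperators

private lemma sq_sub_sq_ne_zero' {a c : ℕ} (h : a ≠ c) : ((a:ℂ))^2 - ((c:ℂ))^2 ≠ 0 := by
  have h1 : (a:ℂ) - c ≠ 0 := sub_ne_zero.2 (by exact_mod_cast h)
  have h2 : (a:ℂ) + c ≠ 0 := by
    have : ((a + c : ℕ) : ℂ) ≠ 0 := Nat.cast_ne_zero.2 (by omega)
    simpa using this
  have hm := mul_ne_zero h1 h2
  intro hz; apply hm; linear_combination hz

/-- Structure of a nontrivial solution of the three-term recurrence
`n²b₀ = 0`, `(1-n²)b₁ = 0`, `((j+2)²-n²)b_{j+2} = (j²-4k-n²)b_j` arising from the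
separated hybrid-laplacian eigenvalue ODE: with `m = |n|`, the coefficients vanish
below index `m`, `b_m ≠ 0`, the coefficients `b_{m+2j+1}` vanish, and the even ones
are given by the explicit product formula. -/
theorem recurrence_solution_structure (n : ℤ) (k : ℂ) (hk : k ≠ 0) (b : ℕ → ℂ)
    (h0 : (n : ℂ) ^ 2 * b 0 = 0)
    (h1 : (1 - (n : ℂ) ^ 2) * b 1 = 0)
    (hrec : ∀ j : ℕ, (((j : ℂ) + 2) ^ 2 - (n : ℂ) ^ 2) * b (j + 2)
      = ((j : ℂ) ^ 2 - 4 * k - (n : ℂ) ^ 2) * b j)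
    (hne : ∃ j : ℕ, b j ≠ 0) :
    (∀ j : ℕ, j < n.natAbs → b j = 0) ∧
    b n.natAbs ≠ 0 ∧
    (∀ j : ℕ, b (n.natAbs + 2 * j + 1) = 0) ∧
    (∀ j : ℕ, 1 ≤ j →
      b (n.natAbs + 2 * j)
        = (-k / ((j : ℂ) * ((n.natAbs : ℂ) + (j : ℂ)))) *
            (∏ s ∈ Finset.Icc 1 (j - 1),
              (1 - k / ((s : ℂ) * ((n.natAbs : ℂ) + (s : ℂ))))) * b n.natAbs) := by
  set m : ℕ := n.natAbs with hm
  have hn2 : (n : ℂ) ^ 2 = (m : ℂ) ^ 2 := by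
    have h1 : ((m : ℕ) : ℤ) ^ 2 = n ^ 2 := Int.natAbs_sq n
    exact_mod_cast (congrArg (fun x : ℤ => (x : ℂ)) h1).symm
  rw [hn2] at h0 h1
  have hrec' : ∀ j : ℕ, (((j : ℂ) + 2) ^ 2 - (m : ℂ) ^ 2) * b (j + 2)
      = ((j : ℂ) ^ 2 - 4 * k - (m : ℂ) ^ 2) * b j := by
    intro j; rw [← hn2]; exact hrec j
  -- coefficients vanish below m
  have hlow : ∀ j : ℕ, j < m → b j = 0 := by
    intro j
    induction j using Nat.strong_induction_on with
    | _ j ih =>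
      intro hj
      match j, ih, hj with
      | 0, ih, hj =>
        have hmne : ((m : ℂ)) ^ 2 ≠ 0 := pow_ne_zero _ (Nat.cast_ne_zero.2 (by omega))
        exact (mul_eq_zero.1 h0).resolve_left hmne
      | 1, ih, hj =>
        have hne1 : (1 : ℂ) - (m : ℂ) ^ 2 ≠ 0 := by
          have := sq_sub_sq_ne_zero' (a := 1) (c := m) (by omega)
          simpa using this
        exact (mul_eq_zero.1 h1).resolve_left hne1
      | (j+2), ih, hj =>
        have hco : (((j:ℂ)) + 2) ^ 2 - (m:ℂ) ^ 2 ≠ 0 := by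
          have := sq_sub_sq_ne_zero' (a := j + 2) (c := m) (by omega)
          push_cast at this; convert this using 2
        have hbj : b j = 0 := ih j (by omega) (by omega)
        have h := hrec' j
        rw [hbj, mul_zero] at h
        exact (mul_eq_zero.1 h).resolve_left hco
  -- coefficients of the opposite parity all vanish
  have hpar : ∀ j : ℕ, j % 2 ≠ m % 2 → b j = 0 := by
    intro j
    induction j using Nat.strong_induction_on with
    | _ j ih =>
      intro hj
      match j, ih, hj with
      | 0, ih, hj =>
        have hmne : ((m : ℂ)) ^ 2 ≠ 0 := pow_ne_zero _ (Nat.cast_ne_zero.2 (by omega))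
        exact (mul_eq_zero.1 h0).resolve_left hmne
      | 1, ih, hj =>
        have hne1 : (1 : ℂ) - (m : ℂ) ^ 2 ≠ 0 := by
          have := sq_sub_sq_ne_zero' (a := 1) (c := m) (by omega)
          simpa using this
        exact (mul_eq_zero.1 h1).resolve_left hne1
      | (j+2), ih, hj =>
        have hco : (((j:ℂ)) + 2) ^ 2 - (m:ℂ) ^ 2 ≠ 0 := by
          have := sq_sub_sq_ne_zero' (a := j + 2) (c := m) (by omega)
          push_cast at this; convert this using 2
        have hbj : b j = 0 := ih j (by omega) (by omega)
        have h := hrec' j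
        rw [hbj, mul_zero] at h
        exact (mul_eq_zero.1 h).resolve_left hco
  -- the basic two-step recursion above m, in cleared form
  have hstep : ∀ t : ℕ, (4 * (((t:ℂ) + 1) * ((m:ℂ) + (t:ℂ) + 1))) * b (m + 2*(t+1))
      = (4 * ((t:ℂ) * ((m:ℂ) + (t:ℂ)) - k)) * b (m + 2*t) := by
    intro t
    have h := hrec' (m + 2*t)
    have e1 : m + 2*t + 2 = m + 2*(t+1) := by ring
    rw [e1] at h
    push_cast at h ⊢
    linear_combination h
  have hmt1 : ∀ t : ℕ, ((t:ℂ) + 1) * ((m:ℂ) + (t:ℂ) + 1) ≠ 0 := by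
    intro t
    have h1 : ((t:ℂ)) + 1 ≠ 0 := by
      have : ((t + 1 : ℕ) : ℂ) ≠ 0 := Nat.cast_ne_zero.2 (by omega)
      push_cast at this; exact this
    have h2 : ((m:ℂ)) + (t:ℂ) + 1 ≠ 0 := by
      have : ((m + t + 1 : ℕ) : ℂ) ≠ 0 := Nat.cast_ne_zero.2 (by omega)
      push_cast at this; exact this
    exact mul_ne_zero h1 h2
  -- explicit formula
  have hmain : ∀ t : ℕ, b (m + 2*(t+1))
      = (-k / (((t:ℂ) + 1) * ((m:ℂ) + ((t:ℂ) + 1)))) *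
          (∏ s ∈ Finset.Icc 1 t, (1 - k / ((s:ℂ) * ((m:ℂ) + (s:ℂ))))) * b m := by
    intro t
    induction t with
    | zero =>
      rw [show Finset.Icc 1 0 = (∅ : Finset ℕ) by decide]
      rw [Finset.prod_empty, mul_one]
      have hA : (((0:ℕ):ℂ) + 1) * ((m:ℂ) + (((0:ℕ):ℂ) + 1)) ≠ 0 := by
        push_cast
        have : ((m + 1 : ℕ) : ℂ) ≠ 0 := Nat.cast_ne_zero.2 (by omega)
        push_cast at this
        simpa using mul_ne_zero (one_ne_zero (α := ℂ)) this
      rw [div_mul_eq_mul_div, eq_div_iff hA]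
      have h := hstep 0
      push_cast at h ⊢
      simp only [Nat.add_zero] at h
      linear_combination h / 4
    | succ t ih =>
      have hC : ((t:ℂ) + 1) * ((m:ℂ) + ((t:ℂ) + 1)) ≠ 0 := by
        have := hmt1 t
        intro hz; apply this; linear_combination hz
      have hA : (((t+1:ℕ):ℂ) + 1) * ((m:ℂ) + (((t+1:ℕ):ℂ) + 1)) ≠ 0 := by
        have h1 : ((t + 2 : ℕ) : ℂ) ≠ 0 := Nat.cast_ne_zero.2 (by omega)
        have h2 : ((m + t + 2 : ℕ) : ℂ) ≠ 0 := Nat.cast_ne_zero.2 (by omega)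
        push_cast at h1 h2 ⊢
        exact mul_ne_zero (fun hz => h1 (by linear_combination hz)) (fun hz => h2 (by linear_combination hz))
      have h := hstep (t + 1)
      rw [ih] at h
      rw [Finset.prod_Icc_succ_top (by omega : 1 ≤ t + 1)]
      rw [div_mul_eq_mul_div, div_mul_eq_mul_div, eq_div_iff hA]
      push_cast at h ⊢
      have hz1 : (t:ℂ) + 1 ≠ 0 := by exact_mod_cast (Nat.succ_ne_zero t)
      have hz2 : (m:ℂ) + ((t:ℂ) + 1) ≠ 0 := by exact_mod_cast (Nat.succ_ne_zero (m + t))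
      have hz3 : (t:ℂ) + 1 + 1 ≠ 0 := by exact_mod_cast (Nat.succ_ne_zero (t + 1))
      have hz4 : (m:ℂ) + ((t:ℂ) + 1 + 1) ≠ 0 := by exact_mod_cast (Nat.succ_ne_zero (m + t + 1))
      field_simp at h ⊢
      linear_combination h
  -- b m ≠ 0
  have hbm : b m ≠ 0 := by
    intro hbm0
    have heven0 : ∀ t : ℕ, b (m + 2*t) = 0 := by
      intro t
      induction t with
      | zero => simpa using hbm0
      | succ t ih =>
        have h := hstep t
        rw [ih, mul_zero] at h
        have h4 : (4 : ℂ) * (((t:ℂ) + 1) * ((m:ℂ) + (t:ℂ) + 1)) ≠ 0 :=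
          mul_ne_zero (by norm_num) (hmt1 t)
        exact (mul_eq_zero.1 h).resolve_left h4
    obtain ⟨j, hj⟩ := hne
    apply hj
    rcases lt_or_ge j m with hlt | hge
    · exact hlow j hlt
    · by_cases hp : j % 2 = m % 2
      · obtain ⟨t, rfl⟩ : ∃ t, j = m + 2*t := ⟨(j - m)/2, by omega⟩
        exact heven0 t
      · exact hpar j hp
  refine ⟨hlow, hbm, ?_, ?_⟩
  · intro j
    exact hpar (m + 2*j + 1) (by omega)
  · intro j hj
    obtain ⟨t, rfl⟩ : ∃ t, j = t + 1 := ⟨j - 1, by omega⟩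
    have h := hmain t
    rw [show t + 1 - 1 = t from rfl]
    push_cast
    push_cast at h
    convert h using 2
end

section
/- Let n ∈ ℤ, m = |n|, let ν₀ ≥ 1 be an integer, and set k = ν₀(m+ν₀). Suppose b : ℕ → ℂ satisfies n²·b_0 = 0, (1−n²)·b_1 = 0, and ((j+2)² − n²)·b_{j+2} = (j² − 4k − n²)·b_j for every j ≥ 0, and suppose b_m ≠ 0. Then b_{m+2j} = 0 for every j > ν₀, and b_{m+2j} ≠ 0 for every 0 ≤ j ≤ ν₀. Consequently any analytic solution f(r) = Σ_{j≥0} b_j r^j of the associated differential equation is a polynomial of exact degree m + 2ν₀ with a zero of order m at r = 0. -/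
open scoped BigOperators

/-- When `k = ν₀(m+ν₀)` for a positive integer `ν₀` (with `m = |n|`), any solution of
the recurrence with `b_m ≠ 0` has `b_{m+2j} = 0` exactly for `j > ν₀` and
`b_{m+2j} ≠ 0` for `0 ≤ j ≤ ν₀`; consequently the associated power series is (the
evaluation of) a polynomial of exact degree `m + 2ν₀` with a zero of order `m`
at the origin. -/
theorem recurrence_polynomial_truncation (n : ℤ) (ν₀ : ℕ) (hν₀ : 1 ≤ ν₀) (k : ℂ)
    (hk : k = (ν₀ : ℂ) * ((n.natAbs : ℂ) + (ν₀ : ℂ))) (b : ℕ → ℂ)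
    (h0 : (n : ℂ) ^ 2 * b 0 = 0)
    (h1 : (1 - (n : ℂ) ^ 2) * b 1 = 0)
    (hrec : ∀ j : ℕ, (((j : ℂ) + 2) ^ 2 - (n : ℂ) ^ 2) * b (j + 2)
      = ((j : ℂ) ^ 2 - 4 * k - (n : ℂ) ^ 2) * b j)
    (hbm : b n.natAbs ≠ 0) :
    (∀ j : ℕ, ν₀ < j → b (n.natAbs + 2 * j) = 0) ∧
    (∀ j : ℕ, j ≤ ν₀ → b (n.natAbs + 2 * j) ≠ 0) ∧
    (∃ P : Polynomial ℂ, (∀ j : ℕ, P.coeff j = b j) ∧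
      P.natDegree = n.natAbs + 2 * ν₀ ∧ P.rootMultiplicity 0 = n.natAbs) := by
  set m := n.natAbs with hm
  have hn2 : (n : ℂ) ^ 2 = (m : ℂ) ^ 2 := by
    have h := Int.natAbs_sq n
    exact_mod_cast (congrArg (fun z : ℤ => (z : ℂ)) h).symm
  have sqne : ∀ a c : ℕ, a ≠ c → ((a : ℂ)) ^ 2 ≠ ((c : ℂ)) ^ 2 := by
    intro a c h
    have h2 : a ^ 2 ≠ c ^ 2 := fun hh => h (Nat.pow_left_injective (by norm_num) hh)
    have h3 : ((a ^ 2 : ℕ) : ℂ) ≠ ((c ^ 2 : ℕ) : ℂ) := by exact_mod_cast h2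
    push_cast at h3; exact h3
  have hrec' : ∀ j : ℕ, (((j : ℂ) + 2) ^ 2 - (m : ℂ) ^ 2) * b (j + 2)
      = ((j : ℂ) ^ 2 - 4 * k - (m : ℂ) ^ 2) * b j := by
    intro j; rw [← hn2]; exact hrec j
  have denom_ne : ∀ i : ℕ, (((m + 2 * i : ℕ) : ℂ) + 2) ^ 2 - (m : ℂ) ^ 2 ≠ 0 := by
    intro i
    have he : (((m + 2 * i : ℕ) : ℂ) + 2) ^ 2 - (m : ℂ) ^ 2
        = ((4 * (i + 1) * (m + i + 1) : ℕ) : ℂ) := by push_cast; ring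
    rw [he]
    have : (4 * (i + 1) * (m + i + 1) : ℕ) ≠ 0 := by positivity
    exact_mod_cast this
  have numer : ∀ i : ℕ, ((m + 2 * i : ℕ) : ℂ) ^ 2 - 4 * k - (m : ℂ) ^ 2
      = 4 * (((i * (m + i) : ℕ) : ℂ) - ((ν₀ * (m + ν₀) : ℕ) : ℂ)) := by
    intro i; rw [hk]; push_cast; ring
  have step : ∀ i : ℕ, b (m + 2 * (i + 1))
      = (4 * (((i * (m + i) : ℕ) : ℂ) - ((ν₀ * (m + ν₀) : ℕ) : ℂ)) * b (m + 2 * i))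
        / ((((m + 2 * i : ℕ) : ℂ) + 2) ^ 2 - (m : ℂ) ^ 2) := by
    intro i
    have h := hrec' (m + 2 * i)
    rw [numer i] at h
    have hidx : m + 2 * (i + 1) = m + 2 * i + 2 := by ring
    rw [hidx, eq_div_iff (denom_ne i)]
    linear_combination h
  have ztail : ∀ i : ℕ, b (m + 2 * (ν₀ + 1 + i)) = 0 := by
    intro i
    induction i with
    | zero =>
      have h := step ν₀
      simpa [sub_self] using h
    | succ i ih =>
      have h := step (ν₀ + 1 + i)
      have e : ν₀ + 1 + (i + 1) = ν₀ + 1 + i + 1 := by ring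
      rw [e, h, ih, mul_zero, zero_div]
  have hzero : ∀ j : ℕ, ν₀ < j → b (m + 2 * j) = 0 := by
    intro j hj
    obtain ⟨i, hji⟩ : ∃ i, j = ν₀ + 1 + i := ⟨j - (ν₀ + 1), by omega⟩
    rw [hji]; exact ztail i
  have hnz : ∀ j : ℕ, j ≤ ν₀ → b (m + 2 * j) ≠ 0 := by
    intro j
    induction j with
    | zero => intro _; simpa using hbm
    | succ j ih =>
      intro hj
      have hj' : j < ν₀ := by omega
      have hlt : j * (m + j) < ν₀ * (m + ν₀) := by
        have ha : j * (m + j) ≤ j * (m + ν₀) := Nat.mul_le_mul_left _ (by omega)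
        have hb : j * (m + ν₀) < ν₀ * (m + ν₀) :=
          mul_lt_mul_of_pos_right hj' (by omega)
        omega
      have hne : ((j * (m + j) : ℕ) : ℂ) - ((ν₀ * (m + ν₀) : ℕ) : ℂ) ≠ 0 := by
        rw [sub_ne_zero]
        exact_mod_cast hlt.ne
      rw [step j]
      exact div_ne_zero
        (mul_ne_zero (mul_ne_zero (by norm_num) hne) (ih (by omega))) (denom_ne j)
  have zlow : ∀ j : ℕ, j < m → b j = 0 := by
    intro j
    induction j using Nat.strong_induction_on with
    | _ j IH =>
      match j with
      | 0 =>
        intro hj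
        have hmne : (m : ℂ) ^ 2 ≠ 0 :=
          pow_ne_zero 2 (Nat.cast_ne_zero.mpr (by omega))
        have h := h0; rw [hn2] at h
        exact (mul_eq_zero.mp h).resolve_left hmne
      | 1 =>
        intro hj
        have hmne : (1 : ℂ) - (m : ℂ) ^ 2 ≠ 0 := by
          rw [sub_ne_zero]
          have := sqne 1 m (by omega)
          simpa using this
        have h := h1; rw [hn2] at h
        exact (mul_eq_zero.mp h).resolve_left hmne
      | (j + 2) =>
        intro hj
        have hbj : b j = 0 := IH j (by omega) (by omega)
        have h := hrec' j
        rw [hbj, mul_zero] at h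
        have hdne : ((j : ℂ) + 2) ^ 2 - (m : ℂ) ^ 2 ≠ 0 := by
          rw [sub_ne_zero]
          have := sqne (j + 2) m (by omega)
          push_cast at this; exact this
        exact (mul_eq_zero.mp h).resolve_left hdne
  have zpar : ∀ j : ℕ, j % 2 ≠ m % 2 → b j = 0 := by
    have base : b ((m + 1) % 2) = 0 := by
      rcases Nat.even_or_odd m with hme | hmo
      · rw [Nat.even_iff] at hme
        have e : (m + 1) % 2 = 1 := by omega
        rw [e]
        have hmne : (1 : ℂ) - (m : ℂ) ^ 2 ≠ 0 := by
          rw [sub_ne_zero]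
          have := sqne 1 m (by omega)
          simpa using this
        have h := h1; rw [hn2] at h
        exact (mul_eq_zero.mp h).resolve_left hmne
      · rw [Nat.odd_iff] at hmo
        have e : (m + 1) % 2 = 0 := by omega
        rw [e]
        have hmne : (m : ℂ) ^ 2 ≠ 0 :=
          pow_ne_zero 2 (Nat.cast_ne_zero.mpr (by omega))
        have h := h0; rw [hn2] at h
        exact (mul_eq_zero.mp h).resolve_left hmne
    have chain : ∀ i : ℕ, b ((m + 1) % 2 + 2 * i) = 0 := by
      intro i
      induction i with
      | zero => simpa using base
      | succ i ih =>
        have h := hrec' ((m + 1) % 2 + 2 * i)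
        rw [ih, mul_zero] at h
        have hdne : ((((m + 1) % 2 + 2 * i : ℕ) : ℂ) + 2) ^ 2 - (m : ℂ) ^ 2 ≠ 0 := by
          have := sqne ((m + 1) % 2 + 2 * i + 2) m (by omega)
          push_cast at this
          rw [sub_ne_zero]
          convert this using 2
          push_cast; ring
        have e : (m + 1) % 2 + 2 * (i + 1) = (m + 1) % 2 + 2 * i + 2 := by ring
        rw [e]
        exact (mul_eq_zero.mp h).resolve_left hdne
    intro j hj
    obtain ⟨i, hji⟩ : ∃ i, j = (m + 1) % 2 + 2 * i := ⟨j / 2, by omega⟩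
    rw [hji]; exact chain i
  -- b vanishes above m + 2ν₀
  have zhigh : ∀ j : ℕ, m + 2 * ν₀ < j → b j = 0 := by
    intro j hj
    by_cases hp : j % 2 = m % 2
    · obtain ⟨i, hji⟩ : ∃ i, j = m + 2 * i := ⟨(j - m) / 2, by omega⟩
      rw [hji]
      exact hzero i (by omega)
    · exact zpar j hp
  refine ⟨hzero, hnz, ?_⟩
  set N := m + 2 * ν₀ + 1 with hN
  have hcoeff : ∀ t : ℕ,
      (∑ j ∈ Finset.range N, Polynomial.monomial j (b j)).coeff t = b t := by
    intro t
    rw [Polynomial.finset_sum_coeff]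
    simp only [Polynomial.coeff_monomial]
    rw [Finset.sum_ite_eq' (Finset.range N) t b]
    by_cases ht : t < N
    · simp [Finset.mem_range, ht]
    · rw [if_neg (by simpa using ht)]
      exact (zhigh t (by omega)).symm
  refine ⟨∑ j ∈ Finset.range N, Polynomial.monomial j (b j), hcoeff, ?_, ?_⟩
  · refine le_antisymm ?_ ?_
    · exact Polynomial.natDegree_le_iff_coeff_eq_zero.mpr fun t ht => by
        rw [hcoeff]; exact zhigh t ht
    · exact Polynomial.le_natDegree_of_ne_zero (by rw [hcoeff]; exact hnz ν₀ le_rfl)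
  · rw [Polynomial.rootMultiplicity_eq_natTrailingDegree']
    refine le_antisymm ?_ ?_
    · exact Polynomial.natTrailingDegree_le_of_ne_zero (by rw [hcoeff]; exact hbm)
    · refine Polynomial.le_natTrailingDegree ?_ ?_
      · intro hP; apply hbm; rw [← hcoeff m, hP]; simp
      · intro t ht; rw [hcoeff]; exact zlow t ht
end

section
/- Let m ≥ 0 be an integer and let k ∈ ℂ. Then the series Σ_{j=2}^∞ (1/(j(m+j))) · Π_{ν=1}^{j−1} (1 − k/(ν(m+ν))) converges absolutely, the sequence of partial products Π_{ν=1}^{N} (1 − k/(ν(m+ν))) converges as N → ∞, and the identity 1 − k·( 1/(m+1) + Σ_{j=2}^∞ (1/(j(m+j))) · Π_{ν=1}^{j−1} (1 − k/(ν(m+ν))) ) = Π_{ν=1}^∞ (1 − k/(ν(m+ν))) holds. -/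
open scoped BigOperators

open Filter

/-- The partial products `Π_{ν=1}^{N} (1 - k/(ν(m+ν)))`. -/
noncomputable def partialProd (m : ℕ) (k : ℂ) (N : ℕ) : ℂ :=
  ∏ ν ∈ Finset.Icc 1 N, (1 - k / ((ν : ℂ) * ((m : ℂ) + (ν : ℂ))))

lemma partialProd_zero (m : ℕ) (k : ℂ) : partialProd m k 0 = 1 := by
  simp [partialProd]

lemma partialProd_succ (m : ℕ) (k : ℂ) (n : ℕ) :
    partialProd m k (n + 1) =
      partialProd m k n * (1 - k / (((n : ℂ) + 1) * ((m : ℂ) + (n : ℂ) + 1))) := by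
  unfold partialProd
  rw [Finset.prod_Icc_succ_top (Nat.le_add_left 1 n)]
  push_cast
  ring

/-- auxiliary term of the series -/
noncomputable def auxTerm (m : ℕ) (k : ℂ) (j : ℕ) : ℂ :=
  (1 / (((j : ℂ) + 2) * ((m : ℂ) + (j : ℂ) + 2))) * partialProd m k (j + 1)

lemma pp_formula (m : ℕ) (k : ℂ) (n : ℕ) :
    partialProd m k (n + 2) =
      1 - k * (1 / ((m : ℂ) + 1) + ∑ j ∈ Finset.range (n + 1), auxTerm m k j) := by
  induction n with
  | zero =>
      rw [show (0:ℕ) + 2 = 1 + 1 from rfl, partialProd_succ, Finset.sum_range_one]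
      have h1 : partialProd m k 1 = 1 - k / (((m : ℂ) + 1)) := by
        rw [show (1:ℕ) = 0 + 1 from rfl, partialProd_succ, partialProd_zero]
        push_cast
        ring
      unfold auxTerm
      rw [h1]
      push_cast
      ring
  | succ n ih =>
      rw [show n + 1 + 2 = (n + 2) + 1 from rfl, partialProd_succ, Finset.sum_range_succ]
      have : auxTerm m k (n + 1) =
          (1 / (((n : ℂ) + 3) * ((m : ℂ) + (n : ℂ) + 3))) * partialProd m k (n + 2) := by
        unfold auxTerm
        push_cast
        ring_nf
      rw [this, ih]
      push_cast
      ring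

lemma base_summable : Summable (fun j : ℕ => 1 / ((j : ℝ) + 1) ^ 2) := by
  have := (summable_nat_add_iff 1).mpr (Real.summable_one_div_nat_pow.mpr one_lt_two)
  push_cast at this
  exact this

lemma b_summable (m : ℕ) (k : ℂ) :
    Summable (fun j : ℕ => ‖k‖ / (((j : ℝ) + 1) * ((m : ℝ) + (j : ℝ) + 1))) := by
  apply Summable.of_nonneg_of_le (fun j => by positivity)
    (f := fun j : ℕ => ‖k‖ * (1 / ((j : ℝ) + 1) ^ 2))
  · intro j
    rw [mul_one_div]
    apply div_le_div_of_nonneg_left (norm_nonneg k) (by positivity)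
    have h1 : (0:ℝ) ≤ (j:ℝ) + 1 := by positivity
    nlinarith [Nat.cast_nonneg (α := ℝ) m]
  · exact base_summable.mul_left _

set_option maxHeartbeats 1000000 in
lemma pp_norm_le (m : ℕ) (k : ℂ) (n : ℕ) :
    ‖partialProd m k n‖ ≤
      Real.exp (∑' j : ℕ, ‖k‖ / (((j : ℝ) + 1) * ((m : ℝ) + (j : ℝ) + 1))) := by
  have hnorm : ∀ ν : ℕ, 1 ≤ ν →
      ‖1 - k / ((ν : ℂ) * ((m : ℂ) + (ν : ℂ)))‖ ≤
        Real.exp (‖k‖ / ((ν : ℝ) * ((m : ℝ) + (ν : ℝ)))) := by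
    intro ν hν
    have hcast : ((ν : ℂ) * ((m : ℂ) + (ν : ℂ))) = (((ν * (m + ν) : ℕ)) : ℂ) := by
      push_cast; ring
    have hval : ‖k / ((ν : ℂ) * ((m : ℂ) + (ν : ℂ)))‖ =
        ‖k‖ / ((ν : ℝ) * ((m : ℝ) + (ν : ℝ))) := by
      rw [norm_div, hcast, Complex.norm_natCast]
      push_cast; ring
    calc ‖1 - k / ((ν : ℂ) * ((m : ℂ) + (ν : ℂ)))‖
        ≤ ‖(1 : ℂ)‖ + ‖k / ((ν : ℂ) * ((m : ℂ) + (ν : ℂ)))‖ := norm_sub_le _ _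
      _ = 1 + ‖k‖ / ((ν : ℝ) * ((m : ℝ) + (ν : ℝ))) := by rw [norm_one, hval]
      _ ≤ Real.exp (‖k‖ / ((ν : ℝ) * ((m : ℝ) + (ν : ℝ)))) := by
          rw [add_comm]; exact Real.add_one_le_exp _
  calc ‖partialProd m k n‖
      ≤ ∏ ν ∈ Finset.Icc 1 n, ‖1 - k / ((ν : ℂ) * ((m : ℂ) + (ν : ℂ)))‖ :=
        Finset.norm_prod_le _ _
    _ ≤ ∏ ν ∈ Finset.Icc 1 n, Real.exp (‖k‖ / ((ν : ℝ) * ((m : ℝ) + (ν : ℝ)))) := by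
        apply Finset.prod_le_prod (fun ν _ => norm_nonneg _)
        intro ν hν
        exact hnorm ν (Finset.mem_Icc.mp hν).1
    _ = Real.exp (∑ ν ∈ Finset.Icc 1 n, ‖k‖ / ((ν : ℝ) * ((m : ℝ) + (ν : ℝ)))) :=
        (Real.exp_sum _ _).symm
    _ ≤ Real.exp (∑' j : ℕ, ‖k‖ / (((j : ℝ) + 1) * ((m : ℝ) + (j : ℝ) + 1))) := by
        apply Real.exp_le_exp.mpr
        have hre : ∑ ν ∈ Finset.Icc 1 n, ‖k‖ / ((ν : ℝ) * ((m : ℝ) + (ν : ℝ)))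
            = ∑ j ∈ Finset.range n, ‖k‖ / (((j : ℝ) + 1) * ((m : ℝ) + (j : ℝ) + 1)) := by
          rw [← Finset.Ico_add_one_right_eq_Icc, Finset.sum_Ico_eq_sum_range]
          norm_num
          apply Finset.sum_congr rfl
          intro j _
          push_cast
          ring_nf
        rw [hre]
        exact Summable.sum_le_tsum _ (fun j _ => by positivity) (b_summable m k)

/-- The series `Σ_{j≥2} (1/(j(m+j))) Π_{ν=1}^{j-1}(1 - k/(ν(m+ν)))` converges
absolutely, the partial products `Π_{ν=1}^{N}(1 - k/(ν(m+ν)))` converge, and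
`1 - k(1/(m+1) + Σ_{j≥2} ⋯) = Π_{ν=1}^{∞}(1 - k/(ν(m+ν)))`. -/
theorem series_product_identity (m : ℕ) (k : ℂ) :
    Summable (fun j : ℕ =>
      ‖(1 / (((j : ℂ) + 2) * ((m : ℂ) + (j : ℂ) + 2))) * partialProd m k (j + 1)‖) ∧
    ∃ L : ℂ, Tendsto (partialProd m k) atTop (nhds L) ∧
      1 - k * (1 / ((m : ℂ) + 1) +
        ∑' j : ℕ, (1 / (((j : ℂ) + 2) * ((m : ℂ) + (j : ℂ) + 2))) * partialProd m k (j + 1))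
      = L := by
  set C : ℝ := Real.exp (∑' j : ℕ, ‖k‖ / (((j : ℝ) + 1) * ((m : ℝ) + (j : ℝ) + 1))) with hC
  have hC0 : 0 ≤ C := Real.exp_nonneg _
  have hnormterm : ∀ j : ℕ, ‖auxTerm m k j‖ ≤ C * (1 / ((j : ℝ) + 1) ^ 2) := by
    intro j
    have hcast : (((j : ℂ) + 2) * ((m : ℂ) + (j : ℂ) + 2)) = (((j + 2) * (m + j + 2) : ℕ) : ℂ) := by
      push_cast; ring
    have hval : ‖(1 : ℂ) / (((j : ℂ) + 2) * ((m : ℂ) + (j : ℂ) + 2))‖ =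
        1 / (((j : ℝ) + 2) * ((m : ℝ) + (j : ℝ) + 2)) := by
      rw [norm_div, norm_one, hcast, Complex.norm_natCast]
      push_cast; ring
    unfold auxTerm
    rw [norm_mul, hval]
    have h1 : ‖partialProd m k (j + 1)‖ ≤ C := pp_norm_le m k (j + 1)
    have h2 : (1 : ℝ) / (((j : ℝ) + 2) * ((m : ℝ) + (j : ℝ) + 2)) ≤ 1 / ((j : ℝ) + 1) ^ 2 := by
      apply div_le_div_of_nonneg_left one_pos.le (by positivity)
      nlinarith [Nat.cast_nonneg (α := ℝ) m, Nat.cast_nonneg (α := ℝ) j]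
    calc (1 / (((j : ℝ) + 2) * ((m : ℝ) + (j : ℝ) + 2))) * ‖partialProd m k (j + 1)‖
        ≤ (1 / ((j : ℝ) + 1) ^ 2) * C := by
          apply mul_le_mul h2 h1 (norm_nonneg _) (by positivity)
      _ = C * (1 / ((j : ℝ) + 1) ^ 2) := by ring
  have hsummableNorm : Summable (fun j : ℕ => ‖auxTerm m k j‖) :=
    Summable.of_nonneg_of_le (fun j => norm_nonneg _) hnormterm (base_summable.mul_left C)
  have hsa : Summable (auxTerm m k) := hsummableNorm.of_norm
  refine ⟨hsummableNorm, ?_⟩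
  set L : ℂ := 1 - k * (1 / ((m : ℂ) + 1) + ∑' j : ℕ, auxTerm m k j) with hL
  have hps : Tendsto (fun n => ∑ j ∈ Finset.range n, auxTerm m k j) atTop
      (nhds (∑' j : ℕ, auxTerm m k j)) := hsa.hasSum.tendsto_sum_nat
  have hshift : Tendsto (fun n => ∑ j ∈ Finset.range (n + 1), auxTerm m k j) atTop
      (nhds (∑' j : ℕ, auxTerm m k j)) := hps.comp (tendsto_add_atTop_nat 1)
  have htend2 : Tendsto (fun n => partialProd m k (n + 2)) atTop (nhds L) := by
    have heq : (fun n => partialProd m k (n + 2)) =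
        fun n => 1 - k * (1 / ((m : ℂ) + 1) + ∑ j ∈ Finset.range (n + 1), auxTerm m k j) :=
      funext (pp_formula m k)
    rw [heq, hL]
    exact ((hshift.const_add _).const_mul k).const_sub 1
  have htend : Tendsto (partialProd m k) atTop (nhds L) :=
    (tendsto_add_atTop_iff_nat 2).mp htend2
  exact ⟨L, htend, rfl⟩
end

section
/- Let p, q ≥ 1 be integers, and set m = |p−q| and ν = min{p,q}. Then for every integer j with 0 ≤ j ≤ ν−1, the natural number q · j! · (j+m)! · (ν−1−j)! divides (j+ν+m)!. Consequently the scattering polynomial φ^(p,q), as a polynomial in ζ and ζ̄, has integer coefficients. -/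
open scoped BigOperators

lemma key_dvd (x y z : ℕ) :
    (x + y + 1) * x.factorial * y.factorial * z.factorial ∣ (x + y + 1 + z).factorial := by
  have h1 : (x + y + 1) * (x.factorial * y.factorial) ∣ (x + y + 1).factorial := by
    rw [Nat.factorial_succ]
    exact Nat.mul_dvd_mul_left _ (Nat.factorial_mul_factorial_dvd_factorial_add x y)
  have h2 : (x + y + 1).factorial * z.factorial ∣ (x + y + 1 + z).factorial :=
    Nat.factorial_mul_factorial_dvd_factorial_add _ z
  calc (x + y + 1) * x.factorial * y.factorial * z.factorial
      = ((x + y + 1) * (x.factorial * y.factorial)) * z.factorial := by ring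
    _ ∣ (x + y + 1).factorial * z.factorial := Nat.mul_dvd_mul_right h1 _
    _ ∣ _ := h2

lemma keyNat (qn ν m j : ℕ) (hν : 1 ≤ ν) (hj : j ≤ ν - 1)
    (hq : qn = ν ∨ qn = ν + m) :
    qn * j.factorial * (j + m).factorial * (ν - 1 - j).factorial ∣ (j + ν + m).factorial := by
  rcases hq with hq | hq
  · have h := key_dvd j (ν - 1 - j) (j + m)
    have hd : qn * j.factorial * (j + m).factorial * (ν - 1 - j).factorial
        = (j + (ν - 1 - j) + 1) * j.factorial * (ν - 1 - j).factorial * (j + m).factorial := by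
      have : qn = j + (ν - 1 - j) + 1 := by omega
      rw [this]; ring
    have he : j + ν + m = j + (ν - 1 - j) + 1 + (j + m) := by omega
    rw [hd, he]; exact h
  · have h := key_dvd (j + m) (ν - 1 - j) j
    have hd : qn * j.factorial * (j + m).factorial * (ν - 1 - j).factorial
        = ((j + m) + (ν - 1 - j) + 1) * (j + m).factorial * (ν - 1 - j).factorial * j.factorial := by
      have : qn = (j + m) + (ν - 1 - j) + 1 := by omega
      rw [this]; ring
    have he : j + ν + m = (j + m) + (ν - 1 - j) + 1 + j := by omega
    rw [hd, he]; exact h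


/-- For `p, q ≥ 1`, `m = |p-q|`, `ν = min{p,q}`, each `q·j!·(j+m)!·(ν-1-j)!`
divides `(j+ν+m)!` for `0 ≤ j ≤ ν-1`; consequently the scattering polynomial
`φ^(p,q)` has integer coefficients as a polynomial in `ζ` and `ζ̄`. -/
theorem scatPoly_integer_coefficients (p q : ℤ) (hp : 1 ≤ p) (hq : 1 ≤ q) :
    (∀ j : ℕ, j ≤ (min p q).toNat - 1 →
      q.toNat * j.factorial * ((j + (p - q).natAbs).factorial) *
          (((min p q).toNat - 1 - j).factorial)
        ∣ (j + (min p q).toNat + (p - q).natAbs).factorial) ∧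
    ∃ P : MvPolynomial (Fin 2) ℤ, ∀ ζ : ℂ,
      scatPoly p q ζ = MvPolynomial.aeval ![ζ, (starRingEnd ℂ) ζ] P := by
  have hν1 : 1 ≤ (min p q).toNat := by omega
  have hqn : q.toNat = (min p q).toNat ∨ q.toNat = (min p q).toNat + (p - q).natAbs := by omega
  have hdvd : ∀ j : ℕ, j ≤ (min p q).toNat - 1 →
      q.toNat * j.factorial * ((j + (p - q).natAbs).factorial) *
          (((min p q).toNat - 1 - j).factorial)
        ∣ (j + (min p q).toNat + (p - q).natAbs).factorial := by
    intro j hj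
    exact keyNat q.toNat (min p q).toNat (p - q).natAbs j hν1 hj hqn
  refine ⟨hdvd, ?_⟩
  set ν := (min p q).toNat with hνdef
  set m := (p - q).natAbs with hmdef
  set c : ℕ → ℕ := fun j =>
    (j + ν + m).factorial / (q.toNat * j.factorial * (j + m).factorial * (ν - 1 - j).factorial)
    with hc
  refine ⟨(MvPolynomial.C ((-1 : ℤ) ^ ((q + min p q).toNat))) *
      (1 - MvPolynomial.X 0 * MvPolynomial.X 1) *
      (MvPolynomial.X 0) ^ ((max p q - p).toNat) * (MvPolynomial.X 1) ^ ((max p q - q).toNat) *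
      ∑ j ∈ Finset.range ν,
        MvPolynomial.C ((-1 : ℤ) ^ j * (c j : ℤ)) * (MvPolynomial.X 0 * MvPolynomial.X 1) ^ j,
    fun ζ => ?_⟩
  have hqC : (q : ℂ) ≠ 0 := by
    exact_mod_cast (by omega : q ≠ 0)
  simp only [scatPoly, hp, hq, and_self, if_true, map_mul, map_sub, map_one, map_pow, map_sum,
    MvPolynomial.aeval_X, MvPolynomial.aeval_C, Matrix.cons_val_zero, Matrix.cons_val_one,
    Matrix.head_cons, Int.cast_mul, Int.cast_pow, Int.cast_neg, Int.cast_one, Int.cast_natCast, algebraMap_int_eq, Int.coe_castRingHom]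
  have hsum : (∑ j ∈ Finset.range ν,
      (-1 : ℂ) ^ j * ((j + ν + m).factorial : ℂ) /
        ((j.factorial : ℂ) * ((j + m).factorial : ℂ) * ((ν - j - 1).factorial : ℂ)) *
        (ζ * (starRingEnd ℂ) ζ) ^ j)
      = (q : ℂ) * ∑ j ∈ Finset.range ν,
        (-1 : ℂ) ^ j * (c j : ℂ) * (ζ * (starRingEnd ℂ) ζ) ^ j := by
    rw [Finset.mul_sum]
    refine Finset.sum_congr rfl fun j hj => ?_
    have hjν : j ≤ ν - 1 := by
      simp only [Finset.mem_range] at hj; omega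
    have hd := hdvd j hjν
    have hcc : (c j : ℕ) * (q.toNat * j.factorial * (j + m).factorial * (ν - 1 - j).factorial)
        = (j + ν + m).factorial := Nat.div_mul_cancel hd
    have hqt : ((q.toNat : ℂ)) = (q : ℂ) := by
      norm_cast; omega
    have hF : ((j + ν + m).factorial : ℂ)
        = (q : ℂ) * (c j : ℂ) * ((j.factorial : ℂ) * ((j + m).factorial : ℂ)
            * ((ν - 1 - j).factorial : ℂ)) := by
      rw [← hqt]
      push_cast [← hcc]
      ring
    have hsub : ν - j - 1 = ν - 1 - j := by omega
    rw [hsub, hF]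
    have h1 : (j.factorial : ℂ) ≠ 0 := Nat.cast_ne_zero.mpr (Nat.factorial_ne_zero _)
    have h2 : ((j + m).factorial : ℂ) ≠ 0 := Nat.cast_ne_zero.mpr (Nat.factorial_ne_zero _)
    have h3 : (((ν - 1 - j)).factorial : ℂ) ≠ 0 := Nat.cast_ne_zero.mpr (Nat.factorial_ne_zero _)
    field_simp
  rw [hsum]
  field_simp
end

section
/- Let n ≥ 1 be an integer and let ℂ₊ = {z ∈ ℂ : Re z > 0} and 𝔻 = {z ∈ ℂ : |z| < 1}. Define Φ : ℂ₊ⁿ → ℂⁿ componentwise by Φ_j(ζ) = (ζ_j − ζ_{j+1})/(ζ_j + conj(ζ_{j+1})) for 1 ≤ j ≤ n−1 and Φ_n(ζ) = (ζ_n − 1)/(ζ_n + 1). Then all the denominators appearing are nonzero on ℂ₊ⁿ, Φ takes values in the open polydisk 𝔻ⁿ, and Φ : ℂ₊ⁿ → 𝔻ⁿ is a bijection. -/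
/-- The transformation `Φ` from (complexified) impedance to reflectivity. -/
noncomputable def impedanceToReflectivity (n : ℕ) (ζ : Fin n → ℂ) : Fin n → ℂ :=
  fun j =>
    if h : (j : ℕ) + 1 < n then
      (ζ j - ζ ⟨(j : ℕ) + 1, h⟩) / (ζ j + (starRingEnd ℂ) (ζ ⟨(j : ℕ) + 1, h⟩))
    else (ζ j - 1) / (ζ j + 1)

private lemma denomA {z a : ℂ} (hz : 0 < z.re) (ha : 0 < a.re) :
    z + (starRingEnd ℂ) a ≠ 0 := by
  intro h
  have := congrArg Complex.re h
  simp [Complex.add_re, Complex.conj_re] at this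
  linarith

private lemma absB {z a : ℂ} (hz : 0 < z.re) (ha : 0 < a.re) :
    ‖(z - a) / (z + (starRingEnd ℂ) a)‖ < 1 := by
  rw [norm_div, div_lt_one (norm_pos_iff.2 (denomA hz ha))]
  rw [Complex.norm_def, Complex.norm_def]
  apply Real.sqrt_lt_sqrt (Complex.normSq_nonneg _)
  simp [Complex.normSq_apply, Complex.sub_re, Complex.sub_im, Complex.add_re, Complex.add_im]
  nlinarith

private lemma one_subC {w : ℂ} (hw : ‖w‖ < 1) : (1 : ℂ) - w ≠ 0 := by
  intro h
  have : w = 1 := by linear_combination -h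
  simp [this] at hw

private lemma sumA {a : ℂ} (ha : 0 < a.re) : a + (starRingEnd ℂ) a ≠ 0 := by
  intro h
  have := congrArg Complex.re h
  simp [Complex.add_re, Complex.conj_re] at this
  linarith

private lemma fwd_back {z a : ℂ} (hz : 0 < z.re) (ha : 0 < a.re) :
    (a + ((z - a) / (z + (starRingEnd ℂ) a)) * (starRingEnd ℂ) a) /
      (1 - (z - a) / (z + (starRingEnd ℂ) a)) = z := by
  have hd : z + (starRingEnd ℂ) a ≠ 0 := denomA hz ha
  have hsum := sumA ha
  have e1 : (1:ℂ) - (z - a) / (z + (starRingEnd ℂ) a)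
      = (a + (starRingEnd ℂ) a) / (z + (starRingEnd ℂ) a) := by
    field_simp; ring
  have e2 : a + ((z - a) / (z + (starRingEnd ℂ) a)) * (starRingEnd ℂ) a
      = z * (a + (starRingEnd ℂ) a) / (z + (starRingEnd ℂ) a) := by
    field_simp; ring
  rw [e1, e2, div_div_div_eq, mul_comm (z + (starRingEnd ℂ) a),
    mul_div_mul_right _ _ hd, mul_div_assoc, div_self hsum, mul_one]

private lemma back_re {w a : ℂ} (hw : ‖w‖ < 1) (ha : 0 < a.re) :
    0 < ((a + w * (starRingEnd ℂ) a) / (1 - w)).re := by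
  have h1 : (1:ℂ) - w ≠ 0 := one_subC hw
  have h2 : 0 < Complex.normSq (1 - w) := Complex.normSq_pos.2 h1
  have h3 : Complex.normSq w < 1 := by
    rw [← Complex.sq_norm]; nlinarith [norm_nonneg w]
  rw [Complex.div_re, ← add_div]
  apply div_pos _ h2
  simp only [Complex.add_re, Complex.add_im, Complex.mul_re, Complex.mul_im,
    Complex.conj_re, Complex.conj_im, Complex.sub_re, Complex.sub_im, Complex.one_re,
    Complex.one_im, Complex.normSq_apply] at *
  nlinarith

private lemma back_fwd {w a : ℂ} (hw : ‖w‖ < 1) (ha : 0 < a.re) :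
    ((a + w * (starRingEnd ℂ) a) / (1 - w) - a) /
      ((a + w * (starRingEnd ℂ) a) / (1 - w) + (starRingEnd ℂ) a) = w := by
  have h1 : (1:ℂ) - w ≠ 0 := one_subC hw
  have hsum : a + (starRingEnd ℂ) a ≠ 0 := sumA ha
  have e1 : (a + w * (starRingEnd ℂ) a) / (1 - w) - a
      = w * (a + (starRingEnd ℂ) a) / (1 - w) := by field_simp; ring
  have e2 : (a + w * (starRingEnd ℂ) a) / (1 - w) + (starRingEnd ℂ) a
      = (a + (starRingEnd ℂ) a) / (1 - w) := by field_simp; ring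
  rw [e1, e2]
  field_simp

/-- The inverse transformation, defined by downward recursion. -/
private noncomputable def invZ (n : ℕ) (W : ℕ → ℂ) (j : ℕ) : ℂ :=
  if j + 1 < n then
    (invZ n W (j+1) + W j * (starRingEnd ℂ) (invZ n W (j+1))) / (1 - W j)
  else (1 + W j) / (1 - W j)
termination_by n - j
decreasing_by omega

private theorem invZ_re (n : ℕ) (W : ℕ → ℂ) (hW : ∀ j, ‖W j‖ < 1)
    (j : ℕ) : 0 < (invZ n W j).re := by
  rw [invZ]
  split
  · exact back_re (hW j) (invZ_re n W hW (j+1))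
  · simpa using back_re (hW j) (a := 1) (by simp)
termination_by n - j
decreasing_by omega

private def Wext (n : ℕ) (w : Fin n → ℂ) : ℕ → ℂ :=
  fun i => if h : i < n then w ⟨i, h⟩ else 0

private lemma Wext_lt {n : ℕ} {w : Fin n → ℂ} (hw : ∀ j, ‖w j‖ < 1)
    (i : ℕ) : ‖Wext n w i‖ < 1 := by
  unfold Wext
  split
  · exact hw _
  · simp

private theorem invZ_left (n : ℕ) (ζ : Fin n → ℂ) (hζ : ∀ j, 0 < (ζ j).re)
    (j : ℕ) (hj : j < n) :
    invZ n (Wext n (impedanceToReflectivity n ζ)) j = ζ ⟨j, hj⟩ := by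
  rw [invZ]
  split
  case isTrue h =>
    rw [invZ_left n ζ hζ (j+1) h]
    have eW : Wext n (impedanceToReflectivity n ζ) j
        = (ζ ⟨j, hj⟩ - ζ ⟨j+1, h⟩) / (ζ ⟨j, hj⟩ + (starRingEnd ℂ) (ζ ⟨j+1, h⟩)) := by
      rw [Wext]
      simp only [dif_pos hj, impedanceToReflectivity]
      rw [dif_pos h]
    rw [eW]
    exact fwd_back (hζ ⟨j, hj⟩) (hζ ⟨j+1, h⟩)
  case isFalse h =>
    have eW : Wext n (impedanceToReflectivity n ζ) j
        = (ζ ⟨j, hj⟩ - 1) / (ζ ⟨j, hj⟩ + 1) := by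
      rw [Wext]
      simp only [dif_pos hj, impedanceToReflectivity]
      rw [dif_neg h]
    rw [eW]
    simpa using fwd_back (hζ ⟨j, hj⟩) (a := 1) (by simp)
termination_by n - j
decreasing_by omega

private theorem invZ_right (n : ℕ) (w : Fin n → ℂ) (hw : ∀ j, ‖w j‖ < 1)
    (j : Fin n) :
    impedanceToReflectivity n (fun i => invZ n (Wext n w) (i : ℕ)) j = w j := by
  have hW := Wext_lt hw
  have eW : Wext n w (j : ℕ) = w j := by
    rw [Wext]
    simp [dif_pos j.isLt]
  rw [impedanceToReflectivity]
  simp only []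
  split
  case isTrue h =>
    have e : invZ n (Wext n w) (j : ℕ)
        = (invZ n (Wext n w) ((j:ℕ)+1)
            + Wext n w (j:ℕ) * (starRingEnd ℂ) (invZ n (Wext n w) ((j:ℕ)+1)))
          / (1 - Wext n w (j:ℕ)) := by
      rw [invZ]; rw [if_pos h]
    show (invZ n (Wext n w) (j:ℕ) - invZ n (Wext n w) ((j:ℕ)+1))
        / (invZ n (Wext n w) (j:ℕ) + (starRingEnd ℂ) (invZ n (Wext n w) ((j:ℕ)+1))) = w j
    rw [e, ← eW]
    exact back_fwd (hW (j:ℕ)) (invZ_re n (Wext n w) hW ((j:ℕ)+1))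
  case isFalse h =>
    have e : invZ n (Wext n w) (j : ℕ)
        = (1 + Wext n w (j:ℕ)) / (1 - Wext n w (j:ℕ)) := by
      rw [invZ]; rw [if_neg h]
    show (invZ n (Wext n w) (j:ℕ) - 1) / (invZ n (Wext n w) (j:ℕ) + 1) = w j
    rw [e, ← eW]
    simpa using back_fwd (hW (j:ℕ)) (a := 1) (by simp)

/-- On the polydisk of impedances with positive real part, all the denominators in
the definition of `Φ` are nonzero, and `Φ` is a bijection from `ℂ₊ⁿ` onto `𝔻ⁿ`. -/
theorem impedanceToReflectivity_bijOn (n : ℕ) (hn : 1 ≤ n) :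
    (∀ ζ : Fin n → ℂ, (∀ j, 0 < (ζ j).re) → ∀ j : Fin n,
      (if h : (j : ℕ) + 1 < n then ζ j + (starRingEnd ℂ) (ζ ⟨(j : ℕ) + 1, h⟩)
        else ζ j + 1) ≠ 0) ∧
    Set.BijOn (impedanceToReflectivity n)
      {ζ : Fin n → ℂ | ∀ j, 0 < (ζ j).re}
      {w : Fin n → ℂ | ∀ j, ‖w j‖ < 1} := by
  constructor
  · intro ζ hζ j
    split
    · exact denomA (hζ j) (hζ _)
    · intro h
      have := congrArg Complex.re h
      simp [Complex.add_re] at this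
      have := hζ j
      linarith
  · refine ⟨?_, ?_, ?_⟩
    · intro ζ hζ
      simp only [Set.mem_setOf_eq] at *
      intro j
      rw [impedanceToReflectivity]
      split
      · exact absB (hζ j) (hζ _)
      · simpa using absB (hζ j) (a := 1) (by simp)
    · intro ζ hζ ζ' hζ' heq
      simp only [Set.mem_setOf_eq] at hζ hζ'
      funext j
      have h1 := invZ_left n ζ hζ (j : ℕ) j.isLt
      have h2 := invZ_left n ζ' hζ' (j : ℕ) j.isLt
      rw [heq] at h1
      rw [h1] at h2
      simpa [Fin.eta] using h2
    · intro w hw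
      simp only [Set.mem_setOf_eq] at hw
      refine ⟨fun i => invZ n (Wext n w) (i : ℕ), ?_, ?_⟩
      · intro j
        exact invZ_re n (Wext n w) (Wext_lt hw) (j : ℕ)
      · funext j
        exact invZ_right n w hw j
end

section
/- Let n ≥ 2 be an integer and let l = (l_1,…,l_n) ∈ ℤⁿ. Suppose there exists r = (r_1,…,r_n) ∈ [0,1)ⁿ such that the Fourier coefficient g_l(r) = (2π)^{−n} ∫_{[0,2π]ⁿ} ℰ(r_1 e^{iθ_1}, …, r_n e^{iθ_n}) · e^{−i(l_1θ_1 + ⋯ + l_nθ_n)} dθ_1 ⋯ dθ_n is nonzero. Then: (1) for each 1 ≤ j ≤ n, l_1 + ⋯ + l_j ≥ −1; (2) l_1 + ⋯ + l_n = −1; and (3) for each 1 ≤ j ≤ n−1, if l_1 + ⋯ + l_j = −1 then l_1 + ⋯ + l_{j+1} = −1. Equivalently, there is a unique lattice point k ∈ ℤⁿ with k_1 = 1, all k_j ≥ 0, and such that k_j = 0 implies k_{j+1} = 0 for 2 ≤ j ≤ n−1, satisfying l_j = k_{j+1} − k_j for 1 ≤ j ≤ n−1 and l_n = −k_n. -/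
open scoped BigOperators Real

open MeasureTheory

/-- Layer collapse recurrence: `layerCollapse [w₁,…,wₙ] = Ψ_1^{w₁} ∘ ⋯ ∘ Ψ_1^{wₙ}(0)`,
where `Ψ_1^w(v) = (v + w̄)/(1 + wv)`. -/
noncomputable def layerCollapse : List ℂ → ℂ
  | [] => 0
  | w :: rest => (layerCollapse rest + (starRingEnd ℂ) w) / (1 + w * layerCollapse rest)

namespace LCAux

open Complex Finset

lemma integral_exp_int (t : ℤ) :
    (∫ x in Set.Icc (0:ℝ) (2*π), Complex.exp ((t:ℂ) * Complex.I * x)) =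
      if t = 0 then ((2*π:ℝ):ℂ) else 0 := by
  rw [MeasureTheory.integral_Icc_eq_integral_Ioc (μ := volume),
    ← intervalIntegral.integral_of_le (by positivity : (0:ℝ) ≤ 2*π)]
  by_cases ht : t = 0
  · simp [ht]
  · rw [integral_exp_mul_complex (by simp [Complex.ext_iff, ht] : (t:ℂ)*Complex.I ≠ 0)]
    have : (t:ℂ) * Complex.I * (2*π:ℝ) = t * (2 * π * Complex.I) := by push_cast; ring
    rw [this, Complex.exp_int_mul_two_pi_mul_I]
    simp [ht]

lemma summable_ite_int (t : ℤ) (h : ℕ → ℂ) :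
    Summable (fun k : ℕ => if (k:ℤ) = t then h k else 0) := by
  by_cases ht : 0 ≤ t
  · apply summable_of_ne_finset_zero (s := {t.toNat})
    intro k hk
    simp only [Finset.mem_singleton] at hk
    rw [if_neg (by omega)]
  · apply summable_of_ne_finset_zero (s := ∅)
    intro k _
    rw [if_neg (by omega)]

lemma tsum_ite_int (t : ℤ) (h : ℕ → ℂ) :
    (∑' k : ℕ, if (k:ℤ) = t then h k else 0) = if 0 ≤ t then h t.toNat else 0 := by
  by_cases ht : 0 ≤ t
  · rw [if_pos ht, tsum_eq_single t.toNat]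
    · rw [if_pos (by omega)]
    · intro k hk
      rw [if_neg (by omega)]
  · rw [if_neg ht]
    convert tsum_zero with k
    rw [if_neg (by omega)]

lemma expProd (k m : ℕ) (l : ℤ) (x : ℝ) :
    Complex.exp (Complex.I*x)^k * Complex.exp (-(Complex.I*x))^m
      * Complex.exp (-(Complex.I*((l:ℂ)*x)))
    = Complex.exp ((((k:ℤ) - m - l : ℤ):ℂ) * Complex.I * x) := by
  rw [← Complex.exp_nat_mul, ← Complex.exp_nat_mul, ← Complex.exp_add, ← Complex.exp_add]
  congr 1
  push_cast
  ring

lemma normSq_key (v w : ℂ) : Complex.normSq (1 + w*v) - Complex.normSq (v + (starRingEnd ℂ) w)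
    = (1 - Complex.normSq v) * (1 - Complex.normSq w) := by
  simp [Complex.normSq_apply, Complex.add_re, Complex.add_im, Complex.mul_re, Complex.mul_im]
  ring

lemma one_add_ne_zero' {w v : ℂ} (hw : ‖w‖ < 1) (hv : ‖v‖ ≤ 1) : (1:ℂ) + w * v ≠ 0 := by
  intro h
  have h2 : ‖w * v‖ < 1 := by
    calc ‖w*v‖ = ‖w‖*‖v‖ := norm_mul _ _
    _ ≤ ‖w‖ := by nlinarith [norm_nonneg w]
    _ < 1 := hw
  have hwv : w*v = -1 := by linear_combination h
  rw [hwv] at h2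
  simp at h2

lemma layerCollapse_norm_le (L : List ℂ) (h : ∀ w ∈ L, ‖w‖ < 1) : ‖layerCollapse L‖ ≤ 1 := by
  induction L with
  | nil => simp [layerCollapse]
  | cons w rest ih =>
    have hw : ‖w‖ < 1 := h w (by simp)
    have hv : ‖layerCollapse rest‖ ≤ 1 := ih (fun x hx => h x (by simp [hx]))
    set v := layerCollapse rest
    have hd : (1:ℂ) + w * v ≠ 0 := one_add_ne_zero' hw hv
    have h1 : Complex.normSq v ≤ 1 := by
      rw [← Complex.sq_norm]
      nlinarith [norm_nonneg v]
    have h2 : Complex.normSq w < 1 := by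
      rw [← Complex.sq_norm]
      nlinarith [norm_nonneg w]
    have key := normSq_key v w
    have hle : Complex.normSq (v + (starRingEnd ℂ) w) ≤ Complex.normSq (1 + w*v) := by nlinarith
    rw [layerCollapse]
    rw [norm_div, div_le_one (by simpa [norm_pos_iff] using hd)]
    have := Real.sqrt_le_sqrt hle
    simpa [Complex.norm_def] using this

lemma continuous_layerCollapse_list {α : Type*} [TopologicalSpace α] :
    ∀ (L : List (α → ℂ)), (∀ f ∈ L, Continuous f ∧ ∀ x, ‖f x‖ < 1) →
    Continuous (fun x => layerCollapse (L.map (fun f => f x))) := by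
  intro L
  induction L with
  | nil => intro _; simpa [layerCollapse] using continuous_const
  | cons f rest ih =>
    intro h
    have hf := h f (by simp)
    have hrest := ih (fun g hg => h g (by simp [hg]))
    have hb : ∀ x, ‖layerCollapse (rest.map (fun g => g x))‖ ≤ 1 := by
      intro x
      apply layerCollapse_norm_le
      intro w hw
      simp only [List.mem_map] at hw
      obtain ⟨g, hg, rfl⟩ := hw
      exact (h g (by simp [hg])).2 x
    simp only [List.map_cons, layerCollapse]
    apply Continuous.div
    · exact hrest.add (Complex.continuous_conj.comp hf.1)
    · exact continuous_const.add (hf.1.mul hrest)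
    · intro x
      exact one_add_ne_zero' (hf.2 x) (hb x)

lemma box_zero (F : (Fin 0 → ℝ) → ℂ) :
    (∫ θ in Set.Icc (0 : Fin 0 → ℝ) (fun _ => 2*π), F θ) = F 0 := by
  rw [Subsingleton.elim (fun _ : Fin 0 => 2 * π) (0 : Fin 0 → ℝ), Set.Icc_self,
    Measure.restrict_singleton]
  simp only [integral_smul_measure, integral_dirac,
    Measure.pi_of_empty (fun _ : Fin 0 => (volume : Measure ℝ)), volume_pi]
  rw [Subsingleton.elim (fun a : Fin 0 => (isEmptyElim a : ℝ)) 0,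
    Measure.dirac_apply_of_mem (Set.mem_singleton _)]
  simp

lemma box_succ {m : ℕ} (F : (Fin (m+1) → ℝ) → ℂ)
    (hF : IntegrableOn F (Set.Icc (0 : Fin (m+1) → ℝ) (fun _ => 2*π)) volume) :
    (∫ θ in Set.Icc (0 : Fin (m+1) → ℝ) (fun _ => 2*π), F θ)
      = ∫ y in Set.Icc (0 : Fin m → ℝ) (fun _ => 2*π),
          ∫ x in Set.Icc (0:ℝ) (2*π), F (Fin.cons x y) := by
  set e : ℝ × (Fin m → ℝ) ≃ᵐ (Fin (m+1) → ℝ) :=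
    (MeasurableEquiv.piFinSuccAbove (fun _ => ℝ) 0).symm with he
  have hem : MeasurePreserving e :=
    (volume_preserving_piFinSuccAbove (fun _ : Fin (m+1) => ℝ) 0).symm _
  have heπ : (e ⁻¹' Set.Icc 0 fun _ => 2 * π) =
      Set.Icc (0:ℝ) (2*π) ×ˢ Set.Icc (0 : Fin m → ℝ) fun _ => 2 * π :=
    ((Fin.insertNthOrderIso (fun _ => ℝ) 0).preimage_Icc _ _).trans (Set.Icc_prod_eq _ _)
  have hFe : IntegrableOn (fun z : ℝ × (Fin m → ℝ) => F (e z))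
      (Set.Icc (0:ℝ) (2*π) ×ˢ Set.Icc (0 : Fin m → ℝ) fun _ => 2 * π)
      ((volume : Measure ℝ).prod (volume : Measure (Fin m → ℝ))) := by
    have := hF
    rw [← Measure.volume_eq_prod]
    rwa [← hem.integrableOn_comp_preimage e.measurableEmbedding, heπ] at this
  have hcons : ∀ (x : ℝ) (y : Fin m → ℝ), e (x, y) = Fin.cons x y := by
    intro x y
    simp only [he, MeasurableEquiv.piFinSuccAbove_symm_apply]
    exact Fin.insertNth_zero' x y
  rw [← hem.map_eq, setIntegral_map_equiv, heπ, Measure.volume_eq_prod, setIntegral_prod _ hFe,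
    integral_integral_swap]
  · apply setIntegral_congr_fun measurableSet_Icc
    intro y _
    apply setIntegral_congr_fun measurableSet_Icc
    intro x _
    exact congrArg F (hcons x y)
  · rw [Measure.prod_restrict]
    exact hFe

def padZ {m : ℕ} (l : Fin m → ℤ) (i : ℕ) : ℤ := if h : i < m then l ⟨i, h⟩ else 0

def PS {m : ℕ} (l : Fin m → ℤ) (t : ℕ) : ℤ := ∑ i ∈ Finset.range t, padZ l i

lemma PS_zero {m : ℕ} (l : Fin m → ℤ) : PS l 0 = 0 := by simp [PS]

lemma PS_succ {m : ℕ} (l : Fin m → ℤ) (t : ℕ) : PS l (t+1) = PS l t + padZ l t := by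
  rw [PS, Finset.sum_range_succ]; rfl

lemma PS_succ_shift {m : ℕ} (l : Fin (m+1) → ℤ) (t : ℕ) :
    PS l (t+1) = l 0 + PS (fun i => l i.succ) t := by
  rw [PS, Finset.sum_range_succ']
  have h0 : padZ l 0 = l 0 := by simp [padZ]
  have h1 : ∀ i, padZ l (i+1) = padZ (fun i => l i.succ) i := by
    intro i
    simp only [padZ]
    by_cases h : i < m
    · rw [dif_pos (by omega), dif_pos h]
      congr 1
    · rw [dif_neg (by omega), dif_neg h]
  rw [h0, add_comm]
  congr 1
  exact Finset.sum_congr rfl (fun i _ => h1 i)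

lemma sum_Iic_eq_PS {m : ℕ} (l : Fin m → ℤ) (j : Fin m) :
    ∑ i ∈ Finset.Iic j, l i = PS l (j.val+1) := by
  have hIic : Finset.Iic j = Finset.univ.filter (· ≤ j) := by
    ext i; simp
  have h2 : ∀ i : Fin m, (if i ≤ j then l i else 0) = (if (i:ℕ) ≤ (j:ℕ) then padZ l (i:ℕ) else 0) := by
    intro i
    unfold padZ
    rw [dif_pos i.isLt]
    simp only [Fin.eta, Fin.le_def]
  calc ∑ i ∈ Finset.Iic j, l i
      = ∑ i : Fin m, (if i ≤ j then l i else 0) := by rw [hIic, Finset.sum_filter]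
    _ = ∑ t ∈ Finset.range m, (if t ≤ (j:ℕ) then padZ l t else 0) := by
        rw [← Fin.sum_univ_eq_sum_range (fun t => if t ≤ (j:ℕ) then padZ l t else 0) m]
        exact Finset.sum_congr rfl (fun i _ => h2 i)
    _ = ∑ t ∈ Finset.range (j.val+1), (if t ≤ (j:ℕ) then padZ l t else 0) := by
        refine (Finset.sum_subset ?_ ?_).symm
        · intro t ht
          simp only [Finset.mem_range] at *
          have := j.isLt
          omega
        · intro t ht hnt
          simp only [Finset.mem_range] at *
          rw [if_neg]
          omega
    _ = PS l (j.val+1) := by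
        apply Finset.sum_congr rfl
        intro t ht
        simp only [Finset.mem_range] at ht
        rw [if_pos (by omega)]

lemma sum_univ_eq_PS {m : ℕ} (l : Fin m → ℤ) : ∑ i, l i = PS l m := by
  rw [PS, Finset.sum_range]
  apply Finset.sum_congr rfl
  intro i _
  simp [padZ, i.isLt]

lemma norm_exp_I_mul (x : ℝ) : ‖Complex.exp (Complex.I * x)‖ = 1 := by
  rw [mul_comm]
  exact Complex.norm_exp_ofReal_mul_I x

lemma core (p : ℕ) (l : ℤ) (r : ℝ) (hr : 0 ≤ r) (hr1 : r < 1) :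
    ∃ c : ℂ, (p = 0 → l ≠ 0 → c = 0) ∧ ∀ V : ℂ, ‖V‖ ≤ 1 →
      (∫ x in Set.Icc (0:ℝ) (2*π),
          ((V + (r:ℂ) * Complex.exp (-(Complex.I * x))) /
            (1 + (r:ℂ) * Complex.exp (Complex.I * x) * V)) ^ p
            * Complex.exp (-(Complex.I * ((l:ℂ) * x)))) =
        c * (if 0 ≤ l + (p:ℤ) then V ^ (l + (p:ℤ)).toNat else 0) := by
  rcases Nat.eq_zero_or_pos p with hp | hp
  · subst hp
    refine ⟨if l = 0 then ((2*π:ℝ):ℂ) else 0, by intro _ hl; simp [hl], ?_⟩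
    intro V hV
    simp only [pow_zero, one_mul]
    have h1 : ∀ x : ℝ, x ∈ Set.Icc (0:ℝ) (2*π) →
        Complex.exp (-(Complex.I * ((l:ℂ) * x))) = Complex.exp (((-l : ℤ):ℂ) * Complex.I * x) := by
      intro x _; congr 1; push_cast; ring
    rw [MeasureTheory.setIntegral_congr_fun measurableSet_Icc h1, integral_exp_int]
    by_cases hl : l = 0 <;> simp [hl, neg_eq_zero]
  · obtain ⟨q, rfl⟩ : ∃ q, p = q + 1 := ⟨p - 1, by omega⟩
    set c2 : ℂ := ((2*π:ℝ):ℂ) with hc2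
    refine ⟨∑ a ∈ Finset.range (q+2),
      (if 0 ≤ l + ((q+1-a : ℕ):ℤ) then
        (((l + ((q+1-a:ℕ):ℤ)).toNat + q).choose q : ℂ)
          * (-(r:ℂ))^((l + ((q+1-a:ℕ):ℤ)).toNat) * ((q+1).choose a : ℂ)
          * (r:ℂ)^(q+1-a) * c2
      else 0), by omega, ?_⟩
    intro V hV
    set g : ℕ → ℝ → ℂ := fun k x =>
      (((k+q).choose q : ℂ)) * (-((r:ℂ) * Complex.exp (Complex.I*x) * V))^k
        * (V + (r:ℂ) * Complex.exp (-(Complex.I*x)))^(q+1)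
        * Complex.exp (-(Complex.I*((l:ℂ)*x))) with hg
    have hu : ∀ x : ℝ, ‖-((r:ℂ) * Complex.exp (Complex.I*x) * V)‖ < 1 := by
      intro x
      rw [norm_neg, norm_mul, norm_mul, norm_exp_I_mul, Complex.norm_real]
      rw [Real.norm_of_nonneg hr]
      nlinarith [norm_nonneg V]
    have hden : ∀ x : ℝ, (1:ℂ) + (r:ℂ) * Complex.exp (Complex.I*x) * V ≠ 0 := by
      intro x
      intro h0
      have := hu x
      rw [norm_neg] at this
      have h1 : (r:ℂ) * Complex.exp (Complex.I*x) * V = -1 := by linear_combination h0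
      rw [h1] at this
      simp at this
    have hA : ∀ x : ℝ, HasSum (fun k => g k x)
        (((V + (r:ℂ) * Complex.exp (-(Complex.I * x))) /
            (1 + (r:ℂ) * Complex.exp (Complex.I * x) * V)) ^ (q+1)
            * Complex.exp (-(Complex.I * ((l:ℂ) * x)))) := by
      intro x
      have h1 := (hasSum_choose_mul_geometric_of_norm_lt_one q (hu x)).mul_left
        ((V + (r:ℂ) * Complex.exp (-(Complex.I*x)))^(q+1)
          * Complex.exp (-(Complex.I*((l:ℂ)*x))))
      convert h1 using 1
      · rfl
      · funext k; simp only [hg]; ring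
      · rw [sub_neg_eq_add, div_pow, div_eq_mul_inv, one_div]; ring
    have hgcont : ∀ k, Continuous (g k) := by
      intro k
      apply Continuous.mul
      apply Continuous.mul
      apply Continuous.mul
      · exact continuous_const
      · apply Continuous.pow
        apply Continuous.neg
        apply Continuous.mul
        apply Continuous.mul continuous_const
        · exact Complex.continuous_exp.comp (by fun_prop)
        · exact continuous_const
      · apply Continuous.pow
        apply Continuous.add continuous_const
        exact continuous_const.mul (Complex.continuous_exp.comp (by fun_prop))
      · exact Complex.continuous_exp.comp (by fun_prop)
    have hgint : ∀ k, IntegrableOn (g k) (Set.Icc (0:ℝ) (2*π)) volume := fun k =>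
      (hgcont k).integrableOn_Icc
    have eexp : ∀ z : ℂ, z.re = 0 → ‖Complex.exp z‖ = 1 := by
      intro z hz
      rw [Complex.norm_exp, hz, Real.exp_zero]
    have hbound : ∀ k, (∫ x in Set.Icc (0:ℝ) (2*π), ‖g k x‖) ≤
        (((k+q).choose q : ℝ) * r^k * 2^(q+1)) * (2*π) := by
      intro k
      have hb : ∀ x ∈ Set.Icc (0:ℝ) (2*π),
          ‖‖g k x‖‖ ≤ ((k+q).choose q : ℝ) * r^k * 2^(q+1) := by
        intro x _
        rw [norm_norm]
        simp only [hg]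
        have h1 : ‖-((r:ℂ) * Complex.exp (Complex.I*x) * V)‖ ≤ r := by
          rw [norm_neg, norm_mul, norm_mul, eexp _ (by simp), Complex.norm_real,
            Real.norm_of_nonneg hr]
          nlinarith [norm_nonneg V]
        have h2 : ‖V + (r:ℂ) * Complex.exp (-(Complex.I*(x:ℂ)))‖ ≤ 2 := by
          calc ‖V + (r:ℂ) * Complex.exp (-(Complex.I*(x:ℂ)))‖
              ≤ ‖V‖ + ‖(r:ℂ) * Complex.exp (-(Complex.I*(x:ℂ)))‖ := norm_add_le _ _
            _ ≤ 1 + 1 := by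
                apply add_le_add hV
                rw [norm_mul, eexp _ (by simp), mul_one, Complex.norm_real,
                  Real.norm_of_nonneg hr]
                linarith
            _ = 2 := by norm_num
        rw [norm_mul, norm_mul, norm_mul, norm_pow, norm_pow, eexp _ (by simp), mul_one,
          Complex.norm_natCast]
        have g1 : ‖-((r:ℂ) * Complex.exp (Complex.I*(x:ℂ)) * V)‖^k ≤ r^k :=
          pow_le_pow_left₀ (norm_nonneg _) h1 k
        have g2 : ‖V + (r:ℂ) * Complex.exp (-(Complex.I*(x:ℂ)))‖^(q+1) ≤ 2^(q+1) :=
          pow_le_pow_left₀ (norm_nonneg _) h2 (q+1)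
        have hnn : (0:ℝ) ≤ ((k+q).choose q : ℝ) := Nat.cast_nonneg _
        exact mul_le_mul (mul_le_mul le_rfl g1 (pow_nonneg (norm_nonneg _) k) hnn) g2
          (pow_nonneg (norm_nonneg _) _) (by positivity)
      calc (∫ x in Set.Icc (0:ℝ) (2*π), ‖g k x‖)
          ≤ ‖(∫ x in Set.Icc (0:ℝ) (2*π), ‖g k x‖)‖ := le_abs_self _
        _ ≤ (((k+q).choose q : ℝ) * r^k * 2^(q+1)) * (volume (Set.Icc (0:ℝ) (2*π))).toReal :=
            norm_setIntegral_le_of_norm_le_const measure_Icc_lt_top hb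
        _ = (((k+q).choose q : ℝ) * r^k * 2^(q+1)) * (2*π) := by
            rw [Real.volume_Icc, ENNReal.toReal_ofReal (by linarith [Real.pi_pos])]
            ring_nf
    have hsummable : Summable (fun k : ℕ => (∫ x in Set.Icc (0:ℝ) (2*π), ‖g k x‖)) := by
      apply Summable.of_nonneg_of_le (fun k => integral_nonneg (fun x => norm_nonneg _)) hbound
      have := (summable_choose_mul_geometric_of_norm_lt_one q
        (by rwa [Real.norm_of_nonneg hr] : ‖r‖ < 1)).mul_right (2^(q+1) * (2*π))
      apply this.congr
      intro k
      ring
    have key1 : (∫ x in Set.Icc (0:ℝ) (2*π),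
        ((V + (r:ℂ) * Complex.exp (-(Complex.I * x))) /
            (1 + (r:ℂ) * Complex.exp (Complex.I * x) * V)) ^ (q+1)
            * Complex.exp (-(Complex.I * ((l:ℂ) * x))))
        = ∑' k, ∫ x in Set.Icc (0:ℝ) (2*π), g k x := by
      have h2 : (∫ x in Set.Icc (0:ℝ) (2*π), (∑' k, g k x))
          = ∑' k, ∫ x in Set.Icc (0:ℝ) (2*π), g k x :=
        (integral_tsum_of_summable_integral_norm hgint hsummable).symm
      rw [← h2]
      apply setIntegral_congr_fun measurableSet_Icc
      intro x _
      exact ((hA x).tsum_eq).symm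
    have hCk : ∀ k : ℕ, (∫ x in Set.Icc (0:ℝ) (2*π), g k x)
        = ∑ a ∈ Finset.range (q+2),
            (if (k:ℤ) = l + ((q+1-a:ℕ):ℤ) then
              (((k+q).choose q : ℂ) * (-((r:ℂ)*V))^k * ((q+1).choose a : ℂ)
                * V^a * (r:ℂ)^(q+1-a)) * c2 else 0) := by
      intro k
      have hpt : ∀ x ∈ Set.Icc (0:ℝ) (2*π), g k x = ∑ a ∈ Finset.range (q+2),
          (((k+q).choose q : ℂ) * (-((r:ℂ)*V))^k * ((q+1).choose a : ℂ)
            * V^a * (r:ℂ)^(q+1-a))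
          * Complex.exp ((((k:ℤ) - ((q+1-a:ℕ):ℤ) - l : ℤ):ℂ) * Complex.I * x) := by
        intro x _
        simp only [hg]
        rw [add_pow, Finset.mul_sum, Finset.sum_mul]
        apply Finset.sum_congr rfl
        intro a ha
        rw [← expProd k (q+1-a) l x]
        push_cast
        ring
      rw [setIntegral_congr_fun measurableSet_Icc hpt,
        MeasureTheory.integral_finset_sum]
      · apply Finset.sum_congr rfl
        intro a ha
        rw [MeasureTheory.integral_const_mul, integral_exp_int]
        by_cases h : (k:ℤ) = l + ((q+1-a:ℕ):ℤ)
        · rw [if_pos (by omega : ((k:ℤ) - ((q+1-a:ℕ):ℤ) - l : ℤ) = 0), if_pos h]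
        · rw [if_neg (by omega : ¬ ((k:ℤ) - ((q+1-a:ℕ):ℤ) - l : ℤ) = 0), if_neg h, mul_zero]
      · intro a _
        apply Continuous.integrableOn_Icc
        exact continuous_const.mul (Complex.continuous_exp.comp (by fun_prop))
    rw [key1]
    calc (∑' k, ∫ x in Set.Icc (0:ℝ) (2*π), g k x)
        = ∑' k : ℕ, ∑ a ∈ Finset.range (q+2),
            (if (k:ℤ) = l + ((q+1-a:ℕ):ℤ) then
              (((k+q).choose q : ℂ) * (-((r:ℂ)*V))^k * ((q+1).choose a : ℂ)
                * V^a * (r:ℂ)^(q+1-a)) * c2 else 0) := tsum_congr hCk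
      _ = ∑ a ∈ Finset.range (q+2), ∑' k : ℕ,
            (if (k:ℤ) = l + ((q+1-a:ℕ):ℤ) then
              (((k+q).choose q : ℂ) * (-((r:ℂ)*V))^k * ((q+1).choose a : ℂ)
                * V^a * (r:ℂ)^(q+1-a)) * c2 else 0) :=
          Summable.tsum_finsetSum (fun a _ => summable_ite_int _ _)
      _ = ∑ a ∈ Finset.range (q+2),
            (if 0 ≤ l + ((q+1-a:ℕ):ℤ) then
              ((((l + ((q+1-a:ℕ):ℤ)).toNat + q).choose q : ℂ)
                * (-((r:ℂ)*V))^((l + ((q+1-a:ℕ):ℤ)).toNat) * ((q+1).choose a : ℂ)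
                * V^a * (r:ℂ)^(q+1-a)) * c2 else 0) := by
          apply Finset.sum_congr rfl
          intro a _
          rw [tsum_ite_int]
      _ = (∑ a ∈ Finset.range (q+2),
            (if 0 ≤ l + ((q+1-a : ℕ):ℤ) then
              (((l + ((q+1-a:ℕ):ℤ)).toNat + q).choose q : ℂ)
                * (-(r:ℂ))^((l + ((q+1-a:ℕ):ℤ)).toNat) * ((q+1).choose a : ℂ)
                * (r:ℂ)^(q+1-a) * c2
            else 0))
            * (if 0 ≤ l + ((q+1:ℕ):ℤ) then V ^ (l + ((q+1:ℕ):ℤ)).toNat else 0) := by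
          rw [Finset.sum_mul]
          apply Finset.sum_congr rfl
          intro a ha
          rw [Finset.mem_range] at ha
          by_cases h : 0 ≤ l + ((q+1-a:ℕ):ℤ)
          · rw [if_pos h, if_pos h, if_pos (by omega : 0 ≤ l + ((q+1:ℕ):ℤ))]
            have hNa : (l + ((q+1-a:ℕ):ℤ)).toNat + a = (l + ((q+1:ℕ):ℤ)).toNat := by omega
            rw [← hNa, pow_add,
              show -((r:ℂ)*V) = (-(r:ℂ)) * V from by ring, mul_pow]
            ring
          · rw [if_neg h, if_neg h, zero_mul]
      _ = _ := rfl


lemma norm_r_exp (s x : ℝ) : ‖(s:ℂ) * Complex.exp (Complex.I * x)‖ = |s| := by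
  rw [norm_mul, Complex.norm_real, Complex.norm_exp]
  simp [Real.norm_eq_abs]

lemma conj_r_exp (s x : ℝ) : (starRingEnd ℂ) ((s:ℂ) * Complex.exp (Complex.I * x))
    = (s:ℂ) * Complex.exp (-(Complex.I * x)) := by
  rw [map_mul, Complex.conj_ofReal, ← Complex.exp_conj]
  congr 2
  simp [Complex.conj_I]

lemma lc_norm_le {m : ℕ} (r : Fin m → ℝ) (hr : ∀ j, r j ∈ Set.Ico (0:ℝ) 1) (θ : Fin m → ℝ) :
    ‖layerCollapse (List.ofFn fun j => (r j : ℂ) * Complex.exp (Complex.I * (θ j : ℂ)))‖ ≤ 1 := by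
  apply layerCollapse_norm_le
  intro w hw
  rw [List.mem_ofFn] at hw
  obtain ⟨j, rfl⟩ := hw
  rw [norm_r_exp]
  rw [_root_.abs_of_nonneg (hr j).1]
  exact (hr j).2

lemma cont_integrand {m : ℕ} (p : ℕ) (l : Fin m → ℤ) (r : Fin m → ℝ)
    (hr : ∀ j, r j ∈ Set.Ico (0:ℝ) 1) :
    Continuous (fun θ : Fin m → ℝ =>
      (layerCollapse (List.ofFn fun j => (r j : ℂ) * Complex.exp (Complex.I * (θ j : ℂ))))^p
        * Complex.exp (-Complex.I * ∑ j, (l j : ℂ) * (θ j : ℂ))) := by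
  apply Continuous.mul
  · apply Continuous.pow
    have hc := continuous_layerCollapse_list
      (List.ofFn fun (j : Fin m) => (fun θ : Fin m → ℝ =>
        (r j : ℂ) * Complex.exp (Complex.I * (θ j : ℂ)))) ?_
    · convert hc using 2 with θ
      rw [List.map_ofFn]
      rfl
    · intro f hf
      rw [List.mem_ofFn] at hf
      obtain ⟨j, rfl⟩ := hf
      constructor
      · apply continuous_const.mul
        apply Complex.continuous_exp.comp
        apply Continuous.mul continuous_const
        exact Complex.continuous_ofReal.comp (continuous_apply j)
      · intro θ
        rw [norm_r_exp, _root_.abs_of_nonneg (hr j).1]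
        exact (hr j).2
  · apply Complex.continuous_exp.comp
    apply Continuous.mul continuous_const
    apply continuous_finset_sum
    intro j _
    exact continuous_const.mul (Complex.continuous_ofReal.comp (continuous_apply j))

noncomputable def lcT {m : ℕ} (r : Fin (m+1) → ℝ) (y : Fin m → ℝ) : ℂ :=
  layerCollapse (List.ofFn fun j => ((r j.succ : ℝ):ℂ) * Complex.exp (Complex.I * (y j : ℂ)))

lemma key (m : ℕ) : ∀ (p : ℕ) (l : Fin m → ℤ) (r : Fin m → ℝ),
    (∀ j, r j ∈ Set.Ico (0:ℝ) 1) →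
    (∫ θ in Set.Icc (0 : Fin m → ℝ) (fun _ => 2*π),
        (layerCollapse (List.ofFn fun j => (r j : ℂ) * Complex.exp (Complex.I * (θ j : ℂ))))^p
          * Complex.exp (-Complex.I * ∑ j, (l j : ℂ) * (θ j : ℂ))) ≠ 0 →
    (∀ t, 0 ≤ (p:ℤ) + PS l t) ∧ ((p:ℤ) + PS l m = 0) ∧
      (∀ t, (p:ℤ) + PS l t = 0 → (p:ℤ) + PS l (t+1) = 0) := by
  induction m with
  | zero =>
    intro p l r hr hne
    rw [box_zero] at hne
    simp only [List.ofFn_zero, Finset.univ_eq_empty, Finset.sum_empty, mul_zero,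
      Complex.exp_zero, mul_one] at hne
    have hp : p = 0 := by
      by_contra hp
      rw [show layerCollapse [] = 0 from rfl, zero_pow hp] at hne
      exact hne rfl
    subst hp
    have hPS : ∀ t, PS l t = 0 := by
      intro t
      rw [PS]
      apply Finset.sum_eq_zero
      intro i _
      simp [padZ]
    exact ⟨fun t => by simp [hPS], by simp [hPS], fun t _ => by simp [hPS]⟩
  | succ m ih =>
    intro p l r hr hne
    obtain ⟨c, hc0, hcV⟩ := core p (l 0) (r 0) (hr 0).1 (hr 0).2
    have hF : IntegrableOn (fun θ : Fin (m+1) → ℝ =>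
        (layerCollapse (List.ofFn fun j => (r j : ℂ) * Complex.exp (Complex.I * (θ j : ℂ))))^p
          * Complex.exp (-Complex.I * ∑ j, (l j : ℂ) * (θ j : ℂ)))
        (Set.Icc (0 : Fin (m+1) → ℝ) (fun _ => 2*π)) volume :=
      (cont_integrand p l r hr).integrableOn_Icc
    rw [box_succ _ hF] at hne
    beta_reduce at hne
    have inner_eq : ∀ y ∈ Set.Icc (0 : Fin m → ℝ) (fun _ => 2*π),
        (∫ x in Set.Icc (0:ℝ) (2*π),
          (layerCollapse (List.ofFn fun j =>
              (r j : ℂ) * Complex.exp (Complex.I * ((Fin.cons x y : Fin (m+1) → ℝ) j : ℂ))))^p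
            * Complex.exp (-Complex.I * ∑ j, (l j : ℂ) * ((Fin.cons x y : Fin (m+1) → ℝ) j : ℂ)))
          = (c * (if 0 ≤ l 0 + (p:ℤ) then (lcT r y) ^ ((l 0) + (p:ℤ)).toNat else 0))
            * Complex.exp (-Complex.I * ∑ i, ((l i.succ : ℂ)) * (y i : ℂ)) := by
      intro y _
      have hVy : ‖lcT r y‖ ≤ 1 := lc_norm_le (fun i => r i.succ) (fun i => hr i.succ) y
      have hx : ∀ x ∈ Set.Icc (0:ℝ) (2*π),
          (layerCollapse (List.ofFn fun j =>
              (r j : ℂ) * Complex.exp (Complex.I * ((Fin.cons x y : Fin (m+1) → ℝ) j : ℂ))))^p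
            * Complex.exp (-Complex.I * ∑ j, (l j : ℂ) * ((Fin.cons x y : Fin (m+1) → ℝ) j : ℂ))
          = (((lcT r y + ((r 0 : ℝ):ℂ) * Complex.exp (-(Complex.I * (x:ℂ)))) /
              (1 + ((r 0 : ℝ):ℂ) * Complex.exp (Complex.I * (x:ℂ)) * lcT r y)) ^ p
              * Complex.exp (-(Complex.I * ((l 0 : ℂ) * (x:ℂ)))))
            * Complex.exp (-Complex.I * ∑ i, ((l i.succ : ℂ)) * (y i : ℂ)) := by
        intro x _
        have hsum : ∑ j, (l j : ℂ) * ((Fin.cons x y : Fin (m+1) → ℝ) j : ℂ)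
            = (l 0 : ℂ) * (x:ℂ) + ∑ i, ((l i.succ : ℂ)) * (y i : ℂ) := by
          rw [Fin.sum_univ_succ]
          simp
        have hsplit : Complex.exp (-Complex.I * ∑ j, (l j : ℂ) * ((Fin.cons x y : Fin (m+1) → ℝ) j : ℂ))
            = Complex.exp (-(Complex.I * ((l 0 : ℂ) * (x:ℂ))))
              * Complex.exp (-Complex.I * ∑ i, ((l i.succ : ℂ)) * (y i : ℂ)) := by
          rw [hsum, ← Complex.exp_add]
          congr 1
          ring
        rw [hsplit]
        have hlist : (List.ofFn fun j =>
            (r j : ℂ) * Complex.exp (Complex.I * ((Fin.cons x y : Fin (m+1) → ℝ) j : ℂ)))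
            = ((r 0 : ℝ):ℂ) * Complex.exp (Complex.I * (x:ℂ))
              :: List.ofFn (fun j => ((r j.succ : ℝ):ℂ) * Complex.exp (Complex.I * (y j : ℂ))) := by
          rw [List.ofFn_succ]
          simp
        rw [hlist]
        have hlc : layerCollapse (((r 0 : ℝ):ℂ) * Complex.exp (Complex.I * (x:ℂ))
              :: List.ofFn (fun j => ((r j.succ : ℝ):ℂ) * Complex.exp (Complex.I * (y j : ℂ))))
            = (lcT r y + ((r 0 : ℝ):ℂ) * Complex.exp (-(Complex.I * (x:ℂ)))) /
              (1 + ((r 0 : ℝ):ℂ) * Complex.exp (Complex.I * (x:ℂ)) * lcT r y) := by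
          rw [lcT, layerCollapse, conj_r_exp]
        rw [hlc]
        ring
      rw [setIntegral_congr_fun measurableSet_Icc hx, MeasureTheory.integral_mul_const,
        hcV (lcT r y) hVy]
    rw [setIntegral_congr_fun measurableSet_Icc inner_eq] at hne
    have hpull : (∫ y in Set.Icc (0 : Fin m → ℝ) (fun _ => 2*π),
        (c * (if 0 ≤ l 0 + (p:ℤ) then (lcT r y) ^ ((l 0) + (p:ℤ)).toNat else 0))
          * Complex.exp (-Complex.I * ∑ i, ((l i.succ : ℂ)) * (y i : ℂ)))
        = c * ∫ y in Set.Icc (0 : Fin m → ℝ) (fun _ => 2*π),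
            (if 0 ≤ l 0 + (p:ℤ) then (lcT r y) ^ ((l 0) + (p:ℤ)).toNat else 0)
              * Complex.exp (-Complex.I * ∑ i, ((l i.succ : ℂ)) * (y i : ℂ)) := by
      rw [← MeasureTheory.integral_const_mul]
      apply setIntegral_congr_fun measurableSet_Icc
      intro y _
      ring
    rw [hpull] at hne
    have hc : c ≠ 0 := fun h => hne (by rw [h, zero_mul])
    have hint : (∫ y in Set.Icc (0 : Fin m → ℝ) (fun _ => 2*π),
        (if 0 ≤ l 0 + (p:ℤ) then (lcT r y) ^ ((l 0) + (p:ℤ)).toNat else 0)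
          * Complex.exp (-Complex.I * ∑ i, ((l i.succ : ℂ)) * (y i : ℂ))) ≠ 0 :=
      fun h => hne (by rw [h, mul_zero])
    by_cases hl0 : 0 ≤ l 0 + (p:ℤ)
    · have hint2 : (∫ y in Set.Icc (0 : Fin m → ℝ) (fun _ => 2*π),
          (lcT r y) ^ ((l 0) + (p:ℤ)).toNat
            * Complex.exp (-Complex.I * ∑ i, ((l i.succ : ℂ)) * (y i : ℂ))) ≠ 0 := by
        intro h
        apply hint
        rw [← h]
        apply setIntegral_congr_fun measurableSet_Icc
        intro y _
        beta_reduce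
        rw [if_pos hl0]
      obtain ⟨ih1, ih2, ih3⟩ := ih ((l 0 + (p:ℤ)).toNat) (fun i => l i.succ)
        (fun i => r i.succ) (fun i => hr i.succ) hint2
      have hq : (((l 0 + (p:ℤ)).toNat : ℤ)) = l 0 + (p:ℤ) := Int.toNat_of_nonneg hl0
      have hstay0 : (p:ℕ) = 0 → l 0 = 0 := by
        intro hp
        by_contra hl
        exact hc (hc0 hp hl)
      refine ⟨?_, ?_, ?_⟩
      · intro t
        cases t with
        | zero => rw [PS_zero]; omega
        | succ t =>
          have := ih1 t
          rw [PS_succ_shift]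
          omega
      · have := ih2
        rw [PS_succ_shift]
        omega
      · intro t ht
        cases t with
        | zero =>
          rw [PS_zero] at ht
          have hp0 : p = 0 := by omega
          have hl00 := hstay0 hp0
          rw [PS_succ_shift, PS_zero]
          omega
        | succ t =>
          rw [PS_succ_shift] at ht ⊢
          have h3 := ih3 t (by omega)
          omega
    · exfalso
      apply hint
      rw [show (∫ y in Set.Icc (0 : Fin m → ℝ) (fun _ => 2*π),
          (if 0 ≤ l 0 + (p:ℤ) then (lcT r y) ^ ((l 0) + (p:ℤ)).toNat else 0)
            * Complex.exp (-Complex.I * ∑ i, ((l i.succ : ℂ)) * (y i : ℂ)))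
          = ∫ _y in Set.Icc (0 : Fin m → ℝ) (fun _ => 2*π), (0:ℂ) from
        setIntegral_congr_fun measurableSet_Icc (fun y _ => by beta_reduce; rw [if_neg hl0, zero_mul])]
      simp

end LCAux

/-- If some Fourier coefficient `g_l(r)` of the layer collapse function is nonzero,
then the partial sums of `l` are `≥ -1`, the total sum is `-1`, partial sums stay at
`-1` once they reach it, and `l` is the difference `l = k̃ - k` of a unique lattice
point `k` with `k₁ = 1`, `k_j ≥ 0`, and `k_j = 0 ⇒ k_{j+1} = 0` (for `2 ≤ j ≤ n-1`). -/
theorem layerCollapse_fourier_support (n : ℕ) (hn : 2 ≤ n) (l : Fin n → ℤ)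
    (hne : ∃ r : Fin n → ℝ, (∀ j, r j ∈ Set.Ico (0 : ℝ) 1) ∧
      ((2 * π : ℝ) ^ n : ℂ)⁻¹ *
        (∫ θ in Set.univ.pi fun _ : Fin n => Set.Icc (0 : ℝ) (2 * π),
          layerCollapse (List.ofFn fun j => (r j : ℂ) * Complex.exp (Complex.I * (θ j : ℂ)))
            * Complex.exp (-Complex.I * ∑ j, (l j : ℂ) * (θ j : ℂ))) ≠ 0) :
    (∀ j : Fin n, -1 ≤ ∑ i ∈ Finset.Iic j, l i) ∧
    (∑ i, l i = -1) ∧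
    (∀ j : Fin n, ∀ h : (j : ℕ) + 1 < n,
      (∑ i ∈ Finset.Iic j, l i = -1) → ∑ i ∈ Finset.Iic (⟨(j : ℕ) + 1, h⟩ : Fin n), l i = -1) ∧
    (∃! k : Fin n → ℤ,
      (k ⟨0, by omega⟩ = 1 ∧ (∀ j, 0 ≤ k j) ∧
        (∀ j : Fin n, ∀ h : (j : ℕ) + 1 < n, 1 ≤ (j : ℕ) → k j = 0 →
          k ⟨(j : ℕ) + 1, h⟩ = 0)) ∧
      (∀ j : Fin n, ∀ h : (j : ℕ) + 1 < n, l j = k ⟨(j : ℕ) + 1, h⟩ - k j) ∧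
      l ⟨n - 1, by omega⟩ = -k ⟨n - 1, by omega⟩) := by
  obtain ⟨r, hr, hI⟩ := hne
  have hS : (Set.univ.pi fun _ : Fin n => Set.Icc (0 : ℝ) (2 * π)) =
      Set.Icc (0 : Fin n → ℝ) (fun _ => 2*π) := by
    ext θ
    simp [Set.mem_pi, Set.mem_Icc, Pi.le_def, forall_and]
  rw [hS] at hI
  have hI2 : (∫ θ in Set.Icc (0 : Fin n → ℝ) (fun _ => 2*π),
      layerCollapse (List.ofFn fun j => (r j : ℂ) * Complex.exp (Complex.I * (θ j : ℂ)))
        * Complex.exp (-Complex.I * ∑ j, (l j : ℂ) * (θ j : ℂ))) ≠ 0 :=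
    fun h => hI (by rw [h, mul_zero])
  have hI3 : (∫ θ in Set.Icc (0 : Fin n → ℝ) (fun _ => 2*π),
      (layerCollapse (List.ofFn fun j => (r j : ℂ) * Complex.exp (Complex.I * (θ j : ℂ))))^1
        * Complex.exp (-Complex.I * ∑ j, (l j : ℂ) * (θ j : ℂ))) ≠ 0 := by
    simpa only [pow_one] using hI2
  obtain ⟨G1, G2, G3⟩ := LCAux.key n 1 l r hr hI3
  simp only [Nat.cast_one] at G1 G2 G3
  have T1 : ∀ j : Fin n, -1 ≤ ∑ i ∈ Finset.Iic j, l i := by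
    intro j
    rw [LCAux.sum_Iic_eq_PS]
    have := G1 (j.val+1)
    omega
  have T2 : ∑ i, l i = -1 := by
    rw [LCAux.sum_univ_eq_PS]
    omega
  have T3 : ∀ j : Fin n, ∀ h : (j : ℕ) + 1 < n,
      (∑ i ∈ Finset.Iic j, l i = -1) → ∑ i ∈ Finset.Iic (⟨(j:ℕ)+1, h⟩ : Fin n), l i = -1 := by
    intro j h hj
    rw [LCAux.sum_Iic_eq_PS] at hj ⊢
    show LCAux.PS l ((j:ℕ)+1+1) = -1
    have := G3 ((j:ℕ)+1)
    omega
  refine ⟨T1, T2, T3, ?_⟩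
  set k : Fin n → ℤ := fun j => 1 + LCAux.PS l j.val with hk
  have hlt : n - 1 < n := by omega
  have hpadd : ∀ t (h : t < n), LCAux.padZ l t = l ⟨t, h⟩ := by
    intro t h
    unfold LCAux.padZ
    rw [dif_pos h]
  have hk0 : k ⟨0, by omega⟩ = 1 := by
    show 1 + LCAux.PS l 0 = 1
    rw [LCAux.PS_zero]
    omega
  have hpos : ∀ j, 0 ≤ k j := by
    intro j
    show 0 ≤ 1 + LCAux.PS l j.val
    have := G1 j.val
    omega
  have hstay : ∀ j : Fin n, ∀ h : (j : ℕ) + 1 < n, 1 ≤ (j : ℕ) → k j = 0 →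
      k ⟨(j : ℕ) + 1, h⟩ = 0 := by
    intro j h _ hj0
    show 1 + LCAux.PS l ((j:ℕ)+1) = 0
    have h1 : 1 + LCAux.PS l (j:ℕ) = 0 := hj0
    have := G3 (j:ℕ)
    omega
  have hdiff : ∀ j : Fin n, ∀ h : (j:ℕ)+1 < n, l j = k ⟨(j:ℕ)+1, h⟩ - k j := by
    intro j h
    show l j = (1 + LCAux.PS l ((j:ℕ)+1)) - (1 + LCAux.PS l (j:ℕ))
    rw [LCAux.PS_succ, hpadd (j:ℕ) j.isLt, Fin.eta]
    ring
  have hlast : l ⟨n - 1, hlt⟩ = -k ⟨n - 1, hlt⟩ := by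
    show l ⟨n-1, hlt⟩ = -(1 + LCAux.PS l (n-1))
    have hps : LCAux.PS l ((n-1)+1) = LCAux.PS l (n-1) + LCAux.padZ l (n-1) :=
      LCAux.PS_succ l (n-1)
    rw [hpadd (n-1) hlt] at hps
    have hn1 : (n-1)+1 = n := by omega
    rw [hn1] at hps
    omega
  refine ⟨k, ⟨⟨hk0, hpos, hstay⟩, hdiff, hlast⟩, ?_⟩
  rintro k' ⟨⟨hk'0, -, -⟩, hdiff', -⟩
  have huniq : ∀ t (h : t < n), k' ⟨t, h⟩ = k ⟨t, h⟩ := by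
    intro t
    induction t with
    | zero =>
      intro h
      have h1 : k' ⟨0, h⟩ = 1 := hk'0
      have h2 : k ⟨0, h⟩ = 1 := hk0
      rw [h1, h2]
    | succ t iht =>
      intro h
      have ht' : t < n := by omega
      have h1 : l ⟨t, ht'⟩ = k' ⟨t+1, h⟩ - k' ⟨t, ht'⟩ := hdiff' ⟨t, ht'⟩ h
      have h2 : l ⟨t, ht'⟩ = k ⟨t+1, h⟩ - k ⟨t, ht'⟩ := hdiff ⟨t, ht'⟩ h
      have h3 := iht ht'
      omega
  funext j
  exact huniq j.val j.isLt
end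

section
/- Let n ≥ 1 be an integer and 1 ≤ j ≤ n. Write w_j = x_j + i y_j, and let ∂/∂x_j, ∂/∂y_j denote partial differentiation of K(w,ξ) in the real and imaginary parts of w_j, and ∂/∂ξ_j partial differentiation in ξ_j, with the convention that ∂K/∂ξ_{n+1} = 0. Then at every point (w,ξ) ∈ 𝔻ⁿ × ℝⁿ the nonlinear identity E_j K = 0 holds, where E_j K = −((1−|w_j|²)/4)·((∂K/∂x_j)² + (∂K/∂y_j)²) + (∂K/∂ξ_{j+1})·(∂K/∂ξ_j), and where the squares are complex squares (not squared moduli). -/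
/-- Backward recurrence: `backRec [(w₁,ξ₁),…,(wₙ,ξₙ)] = Ψ_{e^{iξ₁}}^{w₁} ∘ ⋯ ∘ Ψ_{e^{iξₙ}}^{wₙ}(0)`,
where `Ψ_z^w(v) = z(v + w̄)/(1 + wv)`. -/
noncomputable def backRec : List (ℂ × ℝ) → ℂ
  | [] => 0
  | (w, ξ) :: rest =>
      Complex.exp (Complex.I * (ξ : ℂ)) * (backRec rest + (starRingEnd ℂ) w) /
        (1 + w * backRec rest)

/-- `K(w,ξ) = Ψ_{e^{iξ₁}}^{w₁} ∘ ⋯ ∘ Ψ_{e^{iξₙ}}^{wₙ}(0)`. -/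
noncomputable def Kfun (n : ℕ) (w : Fin n → ℂ) (ξ : Fin n → ℝ) : ℂ :=
  backRec (List.ofFn fun i => (w i, ξ i))

noncomputable def Psi (w : ℂ) (ξ : ℝ) (v : ℂ) : ℂ :=
  Complex.exp (Complex.I * (ξ : ℂ)) * (v + (starRingEnd ℂ) w) / (1 + w * v)

lemma Kfun_succ (m : ℕ) (w : Fin (m+1) → ℂ) (ξ : Fin (m+1) → ℝ) :
    Kfun (m+1) w ξ = Psi (w 0) (ξ 0) (Kfun m (w ∘ Fin.succ) (ξ ∘ Fin.succ)) := by
  unfold Kfun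
  rw [List.ofFn_succ]
  rfl

lemma denom_ne {w v : ℂ} (hw : ‖w‖ < 1) (hv : ‖v‖ ≤ 1) :
    1 + w * v ≠ 0 := by
  intro h
  have h1 : w * v = -1 := by linear_combination h
  have : ‖w * v‖ = 1 := by rw [h1]; simp
  rw [norm_mul] at this
  nlinarith [norm_nonneg w, norm_nonneg v]

lemma abs_Psi_le {w v : ℂ} (hw : ‖w‖ < 1) (hv : ‖v‖ ≤ 1) (ξ : ℝ) :
    ‖Psi w ξ v‖ ≤ 1 := by
  have hD := denom_ne hw hv
  have hkey : ‖v + (starRingEnd ℂ) w‖ ≤ ‖1 + w * v‖ := by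
    have h1 : Complex.normSq (1 + w * v) - Complex.normSq (v + (starRingEnd ℂ) w)
        = (1 - Complex.normSq w) * (1 - Complex.normSq v) := by
      simp only [Complex.normSq_apply, Complex.add_re, Complex.add_im, Complex.mul_re,
        Complex.mul_im, Complex.one_re, Complex.one_im, Complex.conj_re, Complex.conj_im]
      ring
    have h2 : Complex.normSq w < 1 := by
      rw [← Complex.sq_norm]; nlinarith [norm_nonneg w]
    have h3 : Complex.normSq v ≤ 1 := by
      rw [← Complex.sq_norm]; nlinarith [norm_nonneg v]
    rw [Complex.norm_def, Complex.norm_def]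
    apply Real.sqrt_le_sqrt
    nlinarith
  unfold Psi
  rw [norm_div, norm_mul]
  have habsexp : ‖Complex.exp (Complex.I * (ξ:ℂ))‖ = 1 := by
    rw [mul_comm]; exact Complex.norm_exp_ofReal_mul_I ξ
  rw [habsexp, one_mul]
  rw [div_le_one (norm_pos_iff.mpr hD)]
  exact hkey

lemma abs_Kfun_le : ∀ (n : ℕ) (w : Fin n → ℂ), (∀ i, ‖w i‖ < 1) →
    ∀ ξ : Fin n → ℝ, ‖Kfun n w ξ‖ ≤ 1 := by
  intro n
  induction n with
  | zero => intro w hw ξ; simp [Kfun, backRec]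
  | succ m ih =>
    intro w hw ξ
    rw [Kfun_succ]
    exact abs_Psi_le (hw 0) (ih _ (fun i => hw i.succ) _) _

lemma hasDerivAt_ofReal' (t : ℝ) : HasDerivAt (fun s : ℝ => (s : ℂ)) 1 t :=
  HasDerivAt.comp_ofReal (hasDerivAt_id ((t : ℝ) : ℂ))

lemma comp_real {g : ℂ → ℂ} {d c : ℂ} {F : ℝ → ℂ} {t : ℝ}
    (hg : HasDerivAt g d (F t)) (hF : HasDerivAt F c t) :
    HasDerivAt (fun s => g (F s)) (d * c) t := by
  exact (hg.scomp t hF).congr_deriv (by rw [smul_eq_mul, mul_comm])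

lemma hasDerivAt_Psi_xi (w v : ℂ) (ξ : ℝ) :
    HasDerivAt (fun t : ℝ => Psi w t v) (Complex.I * Psi w ξ v) ξ := by
  have h0 : HasDerivAt (fun z : ℂ => Complex.exp (Complex.I * z))
      (Complex.I * Complex.exp (Complex.I * (ξ:ℂ))) (ξ:ℂ) := by
    have h00 := (Complex.hasDerivAt_exp (Complex.I * (ξ:ℂ))).comp ((ξ:ℝ):ℂ)
        ((hasDerivAt_id ((ξ:ℝ):ℂ)).const_mul Complex.I)
    simp only [Function.comp_def] at h00
    refine h00.congr_deriv ?_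
    ring
  have h1 := h0.comp_ofReal
  have h2 := h1.mul_const ((v + (starRingEnd ℂ) w) / (1 + w * v))
  have hfun : (fun t : ℝ => Psi w t v)
      = fun t : ℝ => Complex.exp (Complex.I * (t:ℂ)) * ((v + (starRingEnd ℂ) w) / (1 + w * v)) := by
    funext t; rw [Psi, mul_div_assoc]
  rw [hfun]
  refine h2.congr_deriv ?_
  rw [Psi]; ring

lemma hasDerivAt_Psi_v (w : ℂ) (ξ : ℝ) {v : ℂ} (h : 1 + w * v ≠ 0) :
    HasDerivAt (fun z : ℂ => Psi w ξ z)
      (Complex.exp (Complex.I * (ξ:ℂ)) * (1 - w * (starRingEnd ℂ) w) / (1 + w * v) ^ 2) v := by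
  have hnum : HasDerivAt (fun z : ℂ => Complex.exp (Complex.I * (ξ:ℂ)) * (z + (starRingEnd ℂ) w))
      (Complex.exp (Complex.I * (ξ:ℂ)) * 1) v :=
    ((hasDerivAt_id v).add_const _).const_mul _
  have hden : HasDerivAt (fun z : ℂ => 1 + w * z) w v := by
    simpa using ((hasDerivAt_id v).const_mul w).const_add (1:ℂ)
  have hdiv := hnum.div hden h
  have heq : (fun z : ℂ => Psi w ξ z)
      = fun z : ℂ => Complex.exp (Complex.I * (ξ:ℂ)) * (z + (starRingEnd ℂ) w) / (1 + w * z) := by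
    funext z; rw [Psi]
  rw [heq]
  refine hdiv.congr_deriv ?_
  ring

lemma base_alg (E w cw v : ℂ) (hD : 1 + w * v ≠ 0) :
    -((1 - w * cw) / 4) *
        (((E * 1 * (1 + w * v) - E * (v + cw) * (1 * v)) / (1 + w * v) ^ 2) ^ 2 +
         ((E * -(1 * Complex.I) * (1 + w * v) - E * (v + cw) * (1 * Complex.I * v)) / (1 + w * v) ^ 2) ^ 2) +
      (E * (1 - w * cw) / (1 + w * v) ^ 2 * (Complex.I * v)) * (Complex.I * (E * (v + cw) / (1 + w * v))) = 0 := by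
  field_simp
  ring_nf
  rw [Complex.I_sq]
  ring

lemma key : ∀ (n : ℕ) (j : Fin n) (w : Fin n → ℂ), (∀ i, ‖w i‖ < 1) →
    ∀ ξ : Fin n → ℝ,
    ∃ a b c e : ℂ,
      HasDerivAt (fun t : ℝ =>
        Kfun n (Function.update w j ((t : ℂ) + ((w j).im : ℂ) * Complex.I)) ξ) a ((w j).re) ∧
      HasDerivAt (fun t : ℝ =>
        Kfun n (Function.update w j (((w j).re : ℂ) + (t : ℂ) * Complex.I)) ξ) b ((w j).im) ∧
      HasDerivAt (fun t : ℝ => Kfun n w (Function.update ξ j t)) c (ξ j) ∧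
      (∀ h : (j : ℕ) + 1 < n,
        HasDerivAt (fun t : ℝ => Kfun n w (Function.update ξ ⟨(j : ℕ) + 1, h⟩ t)) e
          (ξ ⟨(j : ℕ) + 1, h⟩)) ∧
      ((j : ℕ) + 1 < n ∨ e = 0) ∧
      -((1 - w j * (starRingEnd ℂ) (w j)) / 4) * (a ^ 2 + b ^ 2) + e * c = 0 := by
  intro n
  induction n with
  | zero => exact fun j => j.elim0
  | succ m ih =>
    intro j w hw ξ
    rcases Fin.eq_zero_or_eq_succ j with rfl | ⟨i, rfl⟩
    · -- base case j = 0
      have hsne : ∀ k : Fin m, Fin.succ k ≠ (0 : Fin (m+1)) := fun k => Fin.succ_ne_zero k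
      set V := Kfun m (w ∘ Fin.succ) (ξ ∘ Fin.succ) with hVdef
      set x := (w 0).re with hxdef
      set y := (w 0).im with hydef
      have hVle : ‖V‖ ≤ 1 := abs_Kfun_le m _ (fun i => hw i.succ) _
      have hD : 1 + w 0 * V ≠ 0 := denom_ne (hw 0) hVle
      have hxy : (x:ℂ) + (y:ℂ) * Complex.I = w 0 := Complex.re_add_im (w 0)
      have hD' : 1 + ((x:ℂ) + (y:ℂ) * Complex.I) * V ≠ 0 := by rw [hxy]; exact hD
      have hconj : (starRingEnd ℂ) (w 0) = (x:ℂ) - (y:ℂ) * Complex.I := by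
        rw [← hxy, map_add, map_mul, Complex.conj_ofReal, Complex.conj_ofReal, Complex.conj_I]
        ring
      refine ⟨(Complex.exp (Complex.I * ((ξ 0 : ℝ):ℂ)) * 1 * (1 + ((x:ℂ) + (y:ℂ) * Complex.I) * V)
            - Complex.exp (Complex.I * ((ξ 0 : ℝ):ℂ)) * (V + ((x:ℂ) - (y:ℂ) * Complex.I)) * (1 * V))
            / (1 + ((x:ℂ) + (y:ℂ) * Complex.I) * V) ^ 2,
          (Complex.exp (Complex.I * ((ξ 0 : ℝ):ℂ)) * -(1 * Complex.I) * (1 + ((x:ℂ) + (y:ℂ) * Complex.I) * V)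
            - Complex.exp (Complex.I * ((ξ 0 : ℝ):ℂ)) * (V + ((x:ℂ) - (y:ℂ) * Complex.I)) * (1 * Complex.I * V))
            / (1 + ((x:ℂ) + (y:ℂ) * Complex.I) * V) ^ 2,
          Complex.I * Psi (w 0) (ξ 0) V,
          Complex.exp (Complex.I * ((ξ 0 : ℝ):ℂ)) * (1 - w 0 * (starRingEnd ℂ) (w 0))
            / (1 + w 0 * V) ^ 2 * (Complex.I * V),
          ?_, ?_, ?_, ?_, ?_, ?_⟩
      · -- a
        have hafun : (fun t : ℝ =>
              Kfun (m+1) (Function.update w 0 ((t:ℂ) + (y:ℂ) * Complex.I)) ξ)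
            = fun t : ℝ => Complex.exp (Complex.I * ((ξ 0 : ℝ):ℂ)) *
                (V + ((t:ℂ) - (y:ℂ) * Complex.I)) /
                (1 + ((t:ℂ) + (y:ℂ) * Complex.I) * V) := by
          funext t
          rw [Kfun_succ, Function.update_comp_eq_of_forall_ne w _ hsne, Function.update_self,
            hVdef]
          simp only [Psi]
          rw [map_add, map_mul, Complex.conj_ofReal, Complex.conj_ofReal, Complex.conj_I]
          ring
        rw [hafun]
        have hanum : HasDerivAt (fun t : ℝ => Complex.exp (Complex.I * ((ξ 0 : ℝ):ℂ)) *
              (V + ((t:ℂ) - (y:ℂ) * Complex.I)))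
            (Complex.exp (Complex.I * ((ξ 0 : ℝ):ℂ)) * 1) x :=
          (((hasDerivAt_ofReal' x).sub_const ((y:ℂ) * Complex.I)).const_add _).const_mul _
        have haden : HasDerivAt (fun t : ℝ => 1 + ((t:ℂ) + (y:ℂ) * Complex.I) * V)
            (1 * V) x :=
          (((hasDerivAt_ofReal' x).add_const ((y:ℂ) * Complex.I)).mul_const _).const_add 1
        exact hanum.div haden hD'
      · -- b
        have hbfun : (fun t : ℝ =>
              Kfun (m+1) (Function.update w 0 ((x:ℂ) + (t:ℂ) * Complex.I)) ξ)
            = fun t : ℝ => Complex.exp (Complex.I * ((ξ 0 : ℝ):ℂ)) *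
                (V + ((x:ℂ) - (t:ℂ) * Complex.I)) /
                (1 + ((x:ℂ) + (t:ℂ) * Complex.I) * V) := by
          funext t
          rw [Kfun_succ, Function.update_comp_eq_of_forall_ne w _ hsne, Function.update_self,
            hVdef]
          simp only [Psi]
          rw [map_add, map_mul, Complex.conj_ofReal, Complex.conj_ofReal, Complex.conj_I]
          ring
        rw [hbfun]
        have hbnum : HasDerivAt (fun t : ℝ => Complex.exp (Complex.I * ((ξ 0 : ℝ):ℂ)) *
              (V + ((x:ℂ) - (t:ℂ) * Complex.I)))
            (Complex.exp (Complex.I * ((ξ 0 : ℝ):ℂ)) * -(1 * Complex.I)) y :=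
          ((((hasDerivAt_ofReal' y).mul_const Complex.I).const_sub ((x:ℂ))).const_add _).const_mul _
        have hbden : HasDerivAt (fun t : ℝ => 1 + ((x:ℂ) + (t:ℂ) * Complex.I) * V)
            (1 * Complex.I * V) y :=
          ((((hasDerivAt_ofReal' y).mul_const Complex.I).const_add ((x:ℂ))).mul_const _).const_add 1
        exact hbnum.div hbden hD'
      · -- c
        have hcfun : (fun t : ℝ => Kfun (m+1) w (Function.update ξ 0 t))
            = fun t : ℝ => Psi (w 0) t V := by
          funext t
          rw [Kfun_succ, Function.update_comp_eq_of_forall_ne ξ _ hsne, Function.update_self,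
            hVdef]
        rw [hcfun]
        exact hasDerivAt_Psi_xi (w 0) V (ξ 0)
      · -- e (the ξ_{j+1} derivative)
        intro h
        have hm : 0 < m := by
          have := h; simp only [Fin.val_zero] at this; omega
        obtain ⟨m', rfl⟩ : ∃ m', m = m' + 1 := ⟨m - 1, by omega⟩
        have h10 : (⟨((0 : Fin (m'+2)) : ℕ) + 1, h⟩ : Fin (m'+2)) = Fin.succ 0 := by
          ext; simp
        rw [h10]
        have hefun : (fun t : ℝ => Kfun (m'+2) w (Function.update ξ (Fin.succ 0) t))
            = fun t : ℝ => Psi (w 0) (ξ 0)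
                (Psi ((w ∘ Fin.succ) 0) t
                  (Kfun m' ((w ∘ Fin.succ) ∘ Fin.succ) ((ξ ∘ Fin.succ) ∘ Fin.succ))) := by
          funext t
          rw [show Kfun (m'+2) w (Function.update ξ (Fin.succ 0) t)
              = Kfun (m'+1+1) w (Function.update ξ (Fin.succ 0) t) from rfl]
          rw [Kfun_succ, Function.update_of_ne (Fin.succ_ne_zero 0).symm,
            Function.update_comp_eq_of_injective ξ (Fin.succ_injective _) 0 t,
            Kfun_succ, Function.update_self,
            Function.update_comp_eq_of_forall_ne (ξ ∘ Fin.succ) _ (fun k => Fin.succ_ne_zero k)]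
        rw [hefun]
        have hVeq : Psi ((w ∘ Fin.succ) 0) (ξ (Fin.succ 0))
            (Kfun m' ((w ∘ Fin.succ) ∘ Fin.succ) ((ξ ∘ Fin.succ) ∘ Fin.succ)) = V := by
          rw [hVdef]
          exact (Kfun_succ m' (w ∘ Fin.succ) (ξ ∘ Fin.succ)).symm
        have hout : HasDerivAt (fun z : ℂ => Psi (w 0) (ξ 0) z)
            (Complex.exp (Complex.I * ((ξ 0 : ℝ):ℂ)) * (1 - w 0 * (starRingEnd ℂ) (w 0))
              / (1 + w 0 * V) ^ 2)
            (Psi ((w ∘ Fin.succ) 0) (ξ (Fin.succ 0))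
              (Kfun m' ((w ∘ Fin.succ) ∘ Fin.succ) ((ξ ∘ Fin.succ) ∘ Fin.succ))) := by
          rw [hVeq]
          exact hasDerivAt_Psi_v (w 0) (ξ 0) hD
        have hg := hasDerivAt_Psi_xi ((w ∘ Fin.succ) 0)
          (Kfun m' ((w ∘ Fin.succ) ∘ Fin.succ) ((ξ ∘ Fin.succ) ∘ Fin.succ)) (ξ (Fin.succ 0))
        rw [hVeq] at hg
        exact comp_real hout hg
      · -- disjunction
        rcases Nat.eq_zero_or_pos m with rfl | hm
        · right
          have hV0 : V = 0 := by rw [hVdef]; rfl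
          rw [hV0]
          ring
        · left
          simp only [Fin.val_zero]
          omega
      · -- the identity
        simp only [Psi]
        rw [hconj, ← hxy]
        exact base_alg (Complex.exp (Complex.I * ((ξ 0 : ℝ):ℂ))) ((x:ℂ) + (y:ℂ) * Complex.I)
          ((x:ℂ) - (y:ℂ) * Complex.I) V hD'
    · -- inductive step j = i.succ
      obtain ⟨a, b, c, e, ha, hb, hc, he, hor, hid⟩ :=
        ih i (w ∘ Fin.succ) (fun k => hw k.succ) (ξ ∘ Fin.succ)
      set V := Kfun m (w ∘ Fin.succ) (ξ ∘ Fin.succ) with hVdef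
      have hVle : ‖V‖ ≤ 1 := abs_Kfun_le m _ (fun k => hw k.succ) _
      have hD : 1 + w 0 * V ≠ 0 := denom_ne (hw 0) hVle
      have hQ := hasDerivAt_Psi_v (w 0) (ξ 0) hD
      refine ⟨Complex.exp (Complex.I * ((ξ 0 : ℝ):ℂ)) * (1 - w 0 * (starRingEnd ℂ) (w 0))
            / (1 + w 0 * V) ^ 2 * a,
          Complex.exp (Complex.I * ((ξ 0 : ℝ):ℂ)) * (1 - w 0 * (starRingEnd ℂ) (w 0))
            / (1 + w 0 * V) ^ 2 * b,
          Complex.exp (Complex.I * ((ξ 0 : ℝ):ℂ)) * (1 - w 0 * (starRingEnd ℂ) (w 0))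
            / (1 + w 0 * V) ^ 2 * c,
          Complex.exp (Complex.I * ((ξ 0 : ℝ):ℂ)) * (1 - w 0 * (starRingEnd ℂ) (w 0))
            / (1 + w 0 * V) ^ 2 * e,
          ?_, ?_, ?_, ?_, ?_, ?_⟩
      · have hafun : (fun t : ℝ =>
              Kfun (m+1) (Function.update w (Fin.succ i) ((t:ℂ) + ((w (Fin.succ i)).im : ℂ) * Complex.I)) ξ)
            = fun t : ℝ => Psi (w 0) (ξ 0)
                (Kfun m (Function.update (w ∘ Fin.succ) i ((t:ℂ) + ((w (Fin.succ i)).im : ℂ) * Complex.I))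
                  (ξ ∘ Fin.succ)) := by
          funext t
          rw [Kfun_succ, Function.update_of_ne (Fin.succ_ne_zero i).symm,
            Function.update_comp_eq_of_injective w (Fin.succ_injective _) i _]
        rw [hafun]
        have hout : HasDerivAt (fun z : ℂ => Psi (w 0) (ξ 0) z)
            (Complex.exp (Complex.I * ((ξ 0 : ℝ):ℂ)) * (1 - w 0 * (starRingEnd ℂ) (w 0))
              / (1 + w 0 * V) ^ 2)
            (Kfun m (Function.update (w ∘ Fin.succ) i
              ((((w (Fin.succ i)).re : ℝ):ℂ) + ((w (Fin.succ i)).im : ℂ) * Complex.I)) (ξ ∘ Fin.succ)) := by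
          have hupd : Function.update (w ∘ Fin.succ) i
              ((((w (Fin.succ i)).re : ℝ):ℂ) + ((w (Fin.succ i)).im : ℂ) * Complex.I) = w ∘ Fin.succ := by
            have h1 : ((((w (Fin.succ i)).re : ℝ):ℂ) + ((w (Fin.succ i)).im : ℂ) * Complex.I)
                = (w ∘ Fin.succ) i := Complex.re_add_im _
            rw [h1, Function.update_eq_self]
          rw [hupd]
          exact hQ
        exact comp_real hout ha
      · have hbfun : (fun t : ℝ =>
              Kfun (m+1) (Function.update w (Fin.succ i) (((w (Fin.succ i)).re : ℂ) + (t:ℂ) * Complex.I)) ξ)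
            = fun t : ℝ => Psi (w 0) (ξ 0)
                (Kfun m (Function.update (w ∘ Fin.succ) i (((w (Fin.succ i)).re : ℂ) + (t:ℂ) * Complex.I))
                  (ξ ∘ Fin.succ)) := by
          funext t
          rw [Kfun_succ, Function.update_of_ne (Fin.succ_ne_zero i).symm,
            Function.update_comp_eq_of_injective w (Fin.succ_injective _) i _]
        rw [hbfun]
        have hout : HasDerivAt (fun z : ℂ => Psi (w 0) (ξ 0) z)
            (Complex.exp (Complex.I * ((ξ 0 : ℝ):ℂ)) * (1 - w 0 * (starRingEnd ℂ) (w 0))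
              / (1 + w 0 * V) ^ 2)
            (Kfun m (Function.update (w ∘ Fin.succ) i
              (((w (Fin.succ i)).re : ℂ) + (((w (Fin.succ i)).im : ℝ):ℂ) * Complex.I)) (ξ ∘ Fin.succ)) := by
          have hupd : Function.update (w ∘ Fin.succ) i
              (((w (Fin.succ i)).re : ℂ) + (((w (Fin.succ i)).im : ℝ):ℂ) * Complex.I) = w ∘ Fin.succ := by
            have h1 : (((w (Fin.succ i)).re : ℂ) + (((w (Fin.succ i)).im : ℝ):ℂ) * Complex.I)
                = (w ∘ Fin.succ) i := Complex.re_add_im _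
            rw [h1, Function.update_eq_self]
          rw [hupd]
          exact hQ
        exact comp_real hout hb
      · have hcfun : (fun t : ℝ => Kfun (m+1) w (Function.update ξ (Fin.succ i) t))
            = fun t : ℝ => Psi (w 0) (ξ 0)
                (Kfun m (w ∘ Fin.succ) (Function.update (ξ ∘ Fin.succ) i t)) := by
          funext t
          rw [Kfun_succ, Function.update_of_ne (Fin.succ_ne_zero i).symm,
            Function.update_comp_eq_of_injective ξ (Fin.succ_injective _) i t]
        rw [hcfun]
        have hout : HasDerivAt (fun z : ℂ => Psi (w 0) (ξ 0) z)
            (Complex.exp (Complex.I * ((ξ 0 : ℝ):ℂ)) * (1 - w 0 * (starRingEnd ℂ) (w 0))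
              / (1 + w 0 * V) ^ 2)
            (Kfun m (w ∘ Fin.succ) (Function.update (ξ ∘ Fin.succ) i (ξ (Fin.succ i)))) := by
          have hupd : Function.update (ξ ∘ Fin.succ) i (ξ (Fin.succ i)) = ξ ∘ Fin.succ :=
            Function.update_eq_self i (ξ ∘ Fin.succ)
          rw [hupd]
          exact hQ
        exact comp_real hout hc
      · intro h
        have h' : (i : ℕ) + 1 < m := by
          simp only [Fin.val_succ] at h; omega
        have hidx : (⟨((Fin.succ i : Fin (m+1)) : ℕ) + 1, h⟩ : Fin (m+1))
            = Fin.succ ⟨(i : ℕ) + 1, h'⟩ := by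
          ext; simp [Fin.val_succ]
        rw [hidx]
        have hefun : (fun t : ℝ => Kfun (m+1) w (Function.update ξ (Fin.succ ⟨(i:ℕ)+1, h'⟩) t))
            = fun t : ℝ => Psi (w 0) (ξ 0)
                (Kfun m (w ∘ Fin.succ) (Function.update (ξ ∘ Fin.succ) ⟨(i:ℕ)+1, h'⟩ t)) := by
          funext t
          rw [Kfun_succ, Function.update_of_ne (Fin.succ_ne_zero _).symm,
            Function.update_comp_eq_of_injective ξ (Fin.succ_injective _) _ t]
        rw [hefun]
        have hout : HasDerivAt (fun z : ℂ => Psi (w 0) (ξ 0) z)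
            (Complex.exp (Complex.I * ((ξ 0 : ℝ):ℂ)) * (1 - w 0 * (starRingEnd ℂ) (w 0))
              / (1 + w 0 * V) ^ 2)
            (Kfun m (w ∘ Fin.succ)
              (Function.update (ξ ∘ Fin.succ) ⟨(i:ℕ)+1, h'⟩ (ξ (Fin.succ ⟨(i:ℕ)+1, h'⟩)))) := by
          have hupd : Function.update (ξ ∘ Fin.succ) ⟨(i:ℕ)+1, h'⟩ (ξ (Fin.succ ⟨(i:ℕ)+1, h'⟩))
              = ξ ∘ Fin.succ := Function.update_eq_self _ _
          rw [hupd]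
          exact hQ
        exact comp_real hout (he h')
      · rcases hor with hlt | he0
        · left
          simp only [Fin.val_succ]
          omega
        · right
          rw [he0, mul_zero]
      · simp only [Function.comp_apply] at hid
        linear_combination (Complex.exp (Complex.I * ((ξ 0 : ℝ):ℂ)) * (1 - w 0 * (starRingEnd ℂ) (w 0))
            / (1 + w 0 * V) ^ 2) ^ 2 * hid

/-- The nonlinear identity `E_j K = 0`:
`-((1-|w_j|²)/4)((∂K/∂x_j)² + (∂K/∂y_j)²) + (∂K/∂ξ_{j+1})(∂K/∂ξ_j) = 0`
(complex squares), with the convention `∂K/∂ξ_{n+1} = 0`. -/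
theorem Kfun_quadratic_identity (n : ℕ) (hn : 1 ≤ n) (j : Fin n)
    (w : Fin n → ℂ) (hw : ∀ i, ‖w i‖ < 1) (ξ : Fin n → ℝ) :
    -(((1 : ℂ) - (‖w j‖ : ℂ) ^ 2) / 4) *
        ((deriv (fun t : ℝ =>
            Kfun n (Function.update w j ((t : ℂ) + ((w j).im : ℂ) * Complex.I)) ξ)
            ((w j).re)) ^ 2 +
         (deriv (fun t : ℝ =>
            Kfun n (Function.update w j (((w j).re : ℂ) + (t : ℂ) * Complex.I)) ξ)
            ((w j).im)) ^ 2) +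
      (if h : (j : ℕ) + 1 < n then
          deriv (fun t : ℝ => Kfun n w (Function.update ξ ⟨(j : ℕ) + 1, h⟩ t))
            (ξ ⟨(j : ℕ) + 1, h⟩)
        else 0) *
        deriv (fun t : ℝ => Kfun n w (Function.update ξ j t)) (ξ j) = 0 := by
  obtain ⟨a, b, c, e, ha, hb, hc, he, hor, hid⟩ := key n j w hw ξ
  have habs : ((‖w j‖ : ℂ)) ^ 2 = w j * (starRingEnd ℂ) (w j) := by
    rw [Complex.mul_conj]
    norm_cast
    exact Complex.sq_norm _
  rw [habs, ha.deriv, hb.deriv, hc.deriv]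
  split_ifs with h
  · rw [(he h).deriv]
    exact hid
  · have he0 : e = 0 := hor.resolve_left h
    rw [he0, zero_mul, add_zero] at hid
    rw [zero_mul, add_zero]
    exact hid
end
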